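/- arXiv:1611.08290 — 12 statements merged into one kernel-verified Lean document; each statement's English description precedes it below -/
import Mathlib

section
/- Let (X,f) be a dynamical system, where X is a compact metric space and f : X → X is continuous. Then the Ellis semigroup E(X,f) is a finite set if and only if there exists a natural number M > 0 such that for every x ∈ X the orbit O_f(x) = {fⁿ(x) : n ∈ ℕ} is finite and has cardinality strictly less than M. -/
/-- Theorem 2.2: For a dynamical system `(X, f)` on a compact metric space,
the Ellis semigroup `E(X,f)` (the closure of the iterates of `f` in `X → X`
with the pointwise-convergence topology) is finite if and only if there is
an `M > 0` bounding the cardinalities of all orbits. -/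
theorem ellis_semigroup_finite_iff {X : Type*} [MetricSpace X] [CompactSpace X]
    (f : X → X) (hf : Continuous f) :
    (closure {g : X → X | ∃ n : ℕ, g = f^[n]}).Finite ↔
      ∃ M : ℕ, 0 < M ∧ ∀ x : X,
        (Set.range fun n : ℕ => f^[n] x).Finite ∧
        (Set.range fun n : ℕ => f^[n] x).ncard < M := by
  constructor
  · intro h
    refine ⟨(closure {g : X → X | ∃ n : ℕ, g = f^[n]}).ncard + 1, Nat.succ_pos _, fun x => ?_⟩
    have hsub : (Set.range fun n : ℕ => f^[n] x) ⊆
        (fun g : X → X => g x) '' closure {g : X → X | ∃ n : ℕ, g = f^[n]} := by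
      rintro _ ⟨n, rfl⟩
      exact ⟨f^[n], subset_closure ⟨n, rfl⟩, rfl⟩
    have hfin := h.image (fun g : X → X => g x)
    refine ⟨hfin.subset hsub, ?_⟩
    calc (Set.range fun n : ℕ => f^[n] x).ncard
        ≤ ((fun g : X → X => g x) '' closure {g : X → X | ∃ n : ℕ, g = f^[n]}).ncard :=
          Set.ncard_le_ncard hsub hfin
      _ ≤ (closure {g : X → X | ∃ n : ℕ, g = f^[n]}).ncard := Set.ncard_image_le h
      _ < _ + 1 := Nat.lt_succ_self _
  · rintro ⟨M, hM, hx⟩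
    have hfacpos := Nat.factorial_pos M
    have key : ∀ n ≥ M, ∀ x, f^[n + Nat.factorial M] x = f^[n] x := by
      intro n hn x
      obtain ⟨hfin, hcard⟩ := hx x
      obtain ⟨i, hi, j, hj, hij, heq⟩ :=
        Finset.exists_ne_map_eq_of_card_lt_of_maps_to
          (s := Finset.range M) (t := hfin.toFinset)
          (by rw [Set.ncard_eq_toFinset_card _ hfin] at hcard; simpa using hcard)
          (fun n _ => by
            simp only [Set.Finite.coe_toFinset, Set.Finite.mem_toFinset]
            exact ⟨n, rfl⟩)
      have main : ∀ a b : ℕ, a < b → b < M → f^[a] x = f^[b] x →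
          f^[n + Nat.factorial M] x = f^[n] x := by
        intro a b hab hbM habeq
        set p := b - a with hp
        have hppos : 0 < p := by omega
        have hper : ∀ m, m ≥ a → f^[m + p] x = f^[m] x := by
          intro m hm
          have h1 : m + p = (m - a) + b := by omega
          have h2 : m = (m - a) + a := by omega
          rw [h1, Function.iterate_add_apply, ← habeq, ← Function.iterate_add_apply, ← h2]
        have hmul : ∀ k : ℕ, ∀ m, m ≥ a → f^[m + k * p] x = f^[m] x := by
          intro k
          induction k with
          | zero => simp
          | succ k ih =>
            intro m hm
            have h1 : m + (k + 1) * p = (m + k * p) + p := by ring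
            rw [h1, hper _ (by omega), ih m hm]
        have hdvd : p ∣ Nat.factorial M := Nat.dvd_factorial hppos (by omega)
        obtain ⟨c, hc⟩ := hdvd
        have : Nat.factorial M = c * p := by rw [hc]; ring
        rw [this]
        exact hmul c n (by omega)
      rcases hij.lt_or_gt with hlt | hlt
      · exact main i j hlt (Finset.mem_range.mp hj) heq
      · exact main j i hlt (Finset.mem_range.mp hi) heq.symm
    have hset : {g : X → X | ∃ n : ℕ, g = f^[n]} ⊆
        (fun n : ℕ => f^[n]) '' Set.Iio (M + Nat.factorial M) := by
      rintro g ⟨n, rfl⟩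
      induction n using Nat.strong_induction_on with
      | _ n ih =>
        by_cases hlt : n < M + Nat.factorial M
        · exact ⟨n, hlt, rfl⟩
        · have h1 : (n - Nat.factorial M) + Nat.factorial M = n := by omega
          have h2 : f^[n] = f^[n - Nat.factorial M] := by
            funext x
            have := key (n - Nat.factorial M) (by omega) x
            rwa [h1] at this
          rw [h2]
          exact ih _ (by omega)
    have hfinS : {g : X → X | ∃ n : ℕ, g = f^[n]}.Finite :=
      ((Set.finite_Iio _).image _).subset hset
    rw [hfinS.isClosed.closure_eq]
    exact hfinS
end

section
/- Let (X,f) be a dynamical system, where X is a compact metric space and f : X → X is continuous. Then E(X,f)* = E(X,f) \ {fⁿ : n ∈ ℕ} is a finite set if and only if there exists a natural number M such that for every x ∈ X the ω-limit set ω_f(x) is finite and has cardinality at most M. -/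
/-!
A map `g ∈ E(X,f)*` is a cluster point of `n ↦ fⁿ` in `X^X`, and evaluation at `x` maps the
cluster points of `n ↦ fⁿ` onto `ω_f(x)`.

If `E(X,f)*` is finite, there are only finitely many cluster points: if an iterate `fᵐ` were one,
so would be every `fⁿ` with `n ≥ m`, and when the iterates are pairwise distinct the cluster
points would form a nonempty countable perfect set in the compact space `X^X`, contradicting
Baire's theorem; when they are not, there are only finitely many iterates. So the number of
cluster points bounds every `|ω_f(x)|`.

Conversely, if `|ω_f(x)| ≤ M` for all `x`, then `f` permutes each `ω_f(x)`, so `P = M!` fixes it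
pointwise. The `f^P`-orbit of `x` then has finitely many cluster points, all fixed by `f^P`, and
therefore converges, to `Φ x` say. Splitting `n` by its residue mod `P` shows that every cluster
point of `n ↦ fⁿ` is one of the `P` maps `Φ ∘ f^r`, `r < P`.
-/

open Filter Set Topology Function
open scoped Nat

section ClusterPoints

variable {Y : Type*} [TopologicalSpace Y]

theorem mapClusterPt_of_mem_closure_range_of_notMem [T1Space Y] {u : ℕ → Y} {y : Y}
    (hy : y ∈ closure (range u)) (hy' : y ∉ range u) : MapClusterPt y atTop u := by
  refine mapClusterPt_iff_frequently.2 fun s hs => frequently_atTop.2 fun N => ?_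
  have hfin : (u '' Iio N).Finite := (finite_Iio N).image u
  have hs' : s \ u '' Iio N ∈ 𝓝 y :=
    sdiff_mem hs (hfin.isClosed.compl_mem_nhds fun h => hy' (image_subset_range _ _ h))
  obtain ⟨_, ⟨hns, hnN⟩, n, rfl⟩ := mem_closure_iff_nhds.1 hy _ hs'
  exact ⟨n, not_lt.1 fun h => hnN (mem_image_of_mem u h), hns⟩

theorem MapClusterPt.exists_mapClusterPt_of_comp {α Z : Type*} [TopologicalSpace Z]
    [CompactSpace Y] [T2Space Z] {F : Filter α} {u : α → Y} {e : Y → Z} {z : Z}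
    (he : Continuous e) (h : MapClusterPt z F (e ∘ u)) :
    ∃ y, MapClusterPt y F u ∧ e y = z := by
  obtain ⟨U, hUF, hU⟩ := mapClusterPt_iff_ultrafilter.1 h
  have hlim : Tendsto u U (𝓝 (U.map u).lim) := (U.map u).le_nhds_lim
  exact ⟨_, mapClusterPt_iff_ultrafilter.2 ⟨U, hUF, hlim⟩,
    tendsto_nhds_unique ((he.tendsto _).comp hlim) hU⟩

theorem Perfect.not_countable [CompactSpace Y] [T2Space Y] {C : Set Y} (hC : Perfect C)
    (hne : C.Nonempty) : ¬ C.Countable := by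
  intro hcount
  have : CompactSpace C := isCompact_iff_compactSpace.1 hC.closed.isCompact
  have : Countable C := hcount.to_subtype
  have : Nonempty C := hne.to_subtype
  obtain ⟨c, hc⟩ := nonempty_interior_of_iUnion_of_closed
    (fun _ => isClosed_singleton) (iUnion_of_singleton C)
  have hopen : IsOpen ({c} : Set C) := by
    rw [← hc.subset_singleton_iff.1 interior_subset]
    exact isOpen_interior
  obtain ⟨U, hU, hUc⟩ := isOpen_induced_iff.1 hopen
  have hcU : c ∈ Subtype.val ⁻¹' U := hUc ▸ rfl
  obtain ⟨z, ⟨hzU, hzC⟩, hzc⟩ := preperfect_iff_nhds.1 hC.acc c c.2 U (hU.mem_nhds hcU)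
  have : (⟨z, hzC⟩ : C) ∈ Subtype.val ⁻¹' U := hzU
  rw [hUc, mem_singleton_iff] at this
  exact hzc (congrArg Subtype.val this)

theorem perfect_setOf_mapClusterPt {u : ℕ → Y} (hu : Injective u)
    (h : ∀ᶠ n in atTop, MapClusterPt (u n) atTop u) : Perfect {y | MapClusterPt y atTop u} := by
  refine ⟨isClosed_setOfPred_clusterPt, preperfect_iff_nhds.2 fun y hy U hU => ?_⟩
  have hne : ∀ᶠ n in atTop, u n ≠ y := by
    rw [← Nat.cofinite_eq_atTop]
    exact hu.tendsto_cofinite.eventually (eventually_cofinite_ne y)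
  obtain ⟨n, hnU, hnC, hny⟩ := ((hy.frequently hU).and_eventually (h.and hne)).exists
  exact ⟨u n, ⟨hnU, hnC⟩, hny⟩

end ClusterPoints

section Iterates

variable {X : Type*} {f : X → X}

theorem finite_range_iterate_of_iterate_eq {a b : ℕ} (hab : a < b) (h : f^[a] = f^[b]) :
    (range fun n => f^[n]).Finite := by
  refine ((finite_Iio b).image fun n => f^[n]).subset ?_
  rintro _ ⟨n, rfl⟩
  induction n using Nat.strong_induction_on with
  | _ n ih =>
    rcases lt_or_ge n b with hn | hn
    · exact mem_image_of_mem _ hn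
    · have hshift : f^[n] = f^[n - (b - a)] :=
        calc f^[n] = f^[n - b] ∘ f^[b] := by rw [← iterate_add, Nat.sub_add_cancel hn]
          _ = f^[n - b] ∘ f^[a] := by rw [h]
          _ = f^[n - (b - a)] := by rw [← iterate_add]; congr 1; omega
      simp only [hshift]
      exact ih _ (by omega)

theorem Set.BijOn.iterate_factorial_eq {s : Set X} {M : ℕ} (h : BijOn f s s) (hs : s.Finite)
    (hM : s.ncard ≤ M) {w : X} (hw : w ∈ s) : f^[M !] w = w := by
  have : Finite s := hs.to_subtype
  have hσ : (h.equiv f) ^ M ! = 1 := by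
    obtain ⟨k, hk⟩ : Nat.card (Equiv.Perm s) ∣ M ! := by
      rw [Nat.card_perm, Nat.card_coe_set_eq]
      exact Nat.factorial_dvd_factorial hM
    rw [hk, pow_mul, pow_card_eq_one', one_pow]
  have key := congrArg Subtype.val (Equiv.Perm.ext_iff.1 hσ ⟨w, hw⟩)
  rw [Equiv.Perm.coe_pow] at key
  change ((h.mapsTo.restrict f s s)^[M !] ⟨w, hw⟩ : X) = w at key
  rwa [h.mapsTo.iterate_restrict] at key

variable [TopologicalSpace X]

theorem mapClusterPt_iterate_of_le {m n : ℕ} (hm : MapClusterPt f^[m] atTop fun k => f^[k])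
    (hmn : m ≤ n) : MapClusterPt f^[n] atTop fun k => f^[k] := by
  obtain ⟨k, rfl⟩ := Nat.exists_eq_add_of_le hmn
  have hcomp : Continuous fun g : X → X => g ∘ f^[k] :=
    continuous_pi fun x => continuous_apply _
  refine MapClusterPt.of_comp (tendsto_add_atTop_nat k) ?_
  rw [iterate_add]
  convert hm.continuousAt_comp hcomp.continuousAt using 1
  ext j : 1
  exact iterate_add f j k

theorem finite_setOf_mapClusterPt_iterate [CompactSpace X] [T2Space X]
    (hE : (closure (range fun n => f^[n]) \ range fun n => f^[n]).Finite) :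
    {g | MapClusterPt g atTop fun n => f^[n]}.Finite := by
  set S := range fun n => f^[n]
  have hsub : {g | MapClusterPt g atTop fun n => f^[n]} ⊆ closure S := fun g hg =>
    isClosed_closure.mem_of_mapClusterPt hg
      (Eventually.of_forall fun n => subset_closure (mem_range_self n))
  by_cases hinj : Injective fun n => f^[n]
  · refine hE.subset fun g hg => ⟨hsub hg, ?_⟩
    rintro ⟨m, rfl⟩
    have hperf := perfect_setOf_mapClusterPt hinj
      ((eventually_ge_atTop m).mono fun n => mapClusterPt_iterate_of_le hg)
    exact hperf.not_countable ⟨_, hg⟩ ((hE.countable.union (countable_range _)).mono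
      (hsub.trans (subset_sdiff_union _ _)))
  · obtain ⟨a, b, hab, hne⟩ := not_injective_iff.1 hinj
    have hS : S.Finite := by
      rcases lt_or_gt_of_ne hne with h | h
      exacts [finite_range_iterate_of_iterate_eq h hab,
        finite_range_iterate_of_iterate_eq h hab.symm]
    exact hS.subset (hS.isClosed.closure_eq ▸ hsub)

theorem omegaLimit_iterate_subset_image [CompactSpace X] [T2Space X] (x : X) :
    omegaLimit atTop (fun n => f^[n]) {x} ⊆
      (fun g : X → X => g x) '' {g | MapClusterPt g atTop fun n => f^[n]} := by
  intro y hy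
  rw [mem_omegaLimit_singleton_iff_mapClusterPt] at hy
  obtain ⟨g, hg, rfl⟩ :=
    MapClusterPt.exists_mapClusterPt_of_comp (u := fun n => f^[n]) (continuous_apply x) hy
  exact ⟨g, hg, rfl⟩

theorem mapsTo_omegaLimit_iterate (hf : Continuous f) (x : X) :
    MapsTo f (omegaLimit atTop (fun n => f^[n]) {x}) (omegaLimit atTop (fun n => f^[n]) {x}) := by
  intro y hy
  rw [mem_omegaLimit_singleton_iff_mapClusterPt] at hy ⊢
  refine MapClusterPt.of_comp (tendsto_add_atTop_nat 1) ?_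
  convert hy.continuousAt_comp hf.continuousAt using 1
  ext n
  exact iterate_succ_apply' f n x

theorem surjOn_omegaLimit_iterate [CompactSpace X] [T2Space X] (hf : Continuous f) (x : X) :
    SurjOn f (omegaLimit atTop (fun n => f^[n]) {x}) (omegaLimit atTop (fun n => f^[n]) {x}) := by
  intro y hy
  rw [mem_omegaLimit_singleton_iff_mapClusterPt] at hy
  have hshift : f ∘ (fun n => f^[n] x) = (fun n => f^[n] x) ∘ (· + 1) :=
    funext fun n => (iterate_succ_apply' f n x).symm
  have hy' : MapClusterPt y atTop (f ∘ fun n => f^[n] x) := by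
    rwa [hshift, mapClusterPt_comp, map_add_atTop_eq_nat]
  obtain ⟨z, hz, rfl⟩ := hy'.exists_mapClusterPt_of_comp hf
  exact ⟨z, (mem_omegaLimit_singleton_iff_mapClusterPt _ _ _ _).2 hz, rfl⟩

theorem subsingleton_omegaLimit_iterate [CompactSpace X] [T2Space X] (hf : Continuous f) {y : X}
    (hfin : (omegaLimit atTop (fun n => f^[n]) {y}).Finite)
    (hfix : ∀ z ∈ omegaLimit atTop (fun n => f^[n]) {y}, f z = z) :
    (omegaLimit atTop (fun n => f^[n]) {y}).Subsingleton := by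
  set Ω := omegaLimit atTop (fun n => f^[n]) {y}
  obtain ⟨U, hU, hdisj⟩ := hfin.t2_separation
  -- As `f z = z`, `V z` is a neighbourhood of `z`; from `V z` the orbit moves into `U z`,
  -- which is disjoint from every other `V z'`, so once the orbit is in `V z` it stays there.
  set V := fun z => U z ∩ f ⁻¹' U z
  have hV : Ω ⊆ ⋃ z ∈ Ω, V z := fun z hz =>
    mem_biUnion hz ⟨(hU z).1, by rw [mem_preimage, hfix z hz]; exact (hU z).1⟩
  obtain ⟨N, hN⟩ := eventually_atTop.1 <| eventually_mapsTo_of_isOpen_of_omegaLimit_subset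
    atTop _ {y} (isOpen_biUnion fun z _ => (hU z).2.inter ((hU z).2.preimage hf)) hV
  obtain ⟨z₀, hz₀, hNz₀⟩ := mem_iUnion₂.1 (hN N le_rfl rfl)
  have htrap : ∀ n ≥ N, f^[n] y ∈ V z₀ := by
    intro n hn
    induction n, hn using Nat.le_induction with
    | base => exact hNz₀
    | succ n hn ih =>
      obtain ⟨z, hz, hzn⟩ := mem_iUnion₂.1 (hN (n + 1) (by omega) rfl)
      have hzz₀ : z = z₀ := hdisj.elim hz hz₀ <| not_disjoint_iff.2
        ⟨_, hzn.1, by rw [iterate_succ_apply']; exact ih.2⟩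
      exact hzz₀ ▸ hzn
  have hΩ : ∀ z ∈ Ω, z = z₀ := by
    intro z hz
    have hz' := (mem_omegaLimit_singleton_iff_mapClusterPt _ _ _ _).1 hz
    obtain ⟨n, hnz, hn⟩ :=
      ((hz'.frequently ((hU z).2.mem_nhds (hU z).1)).and_eventually (eventually_ge_atTop N)).exists
    exact hdisj.elim hz hz₀ (not_disjoint_iff.2 ⟨_, hnz, (htrap n hn).1⟩)
  exact fun a ha b hb => (hΩ a ha).trans (hΩ b hb).symm

theorem exists_tendsto_iterate_of_finite_omegaLimit [CompactSpace X] [T2Space X]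
    (hf : Continuous f) {y : X} (hfin : (omegaLimit atTop (fun n => f^[n]) {y}).Finite)
    (hfix : ∀ z ∈ omegaLimit atTop (fun n => f^[n]) {y}, f z = z) :
    ∃ z, Tendsto (fun n => f^[n] y) atTop (𝓝 z) := by
  obtain ⟨z, hz⟩ := nonempty_omegaLimit atTop (fun n => f^[n]) {y} (singleton_nonempty y)
  have hΩz := ((subsingleton_omegaLimit_iterate hf hfin hfix).eq_singleton_of_mem hz).subset
  refine ⟨z, tendsto_nhds.2 fun s hs hzs => ?_⟩
  exact (eventually_mapsTo_of_isOpen_of_omegaLimit_subset atTop _ _ hs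
    (hΩz.trans (singleton_subset_iff.2 hzs))).mono fun n hn => hn rfl

theorem MapClusterPt.eq_comp_iterate_of_tendsto [T2Space X] {P : ℕ} (hP : 0 < P) {Φ : X → X}
    (hΦ : ∀ x, Tendsto (fun n => (f^[P])^[n] x) atTop (𝓝 (Φ x))) {g : X → X}
    (hg : MapClusterPt g atTop fun n => f^[n]) : ∃ r < P, g = Φ ∘ f^[r] := by
  obtain ⟨U, hU, hgU⟩ := mapClusterPt_iff_ultrafilter.1 hg
  -- the ultrafilter `U` concentrates on a single residue class `r` mod `P`
  have hres : ⋃ r ∈ Iio P, {n : ℕ | n % P = r} ∈ U :=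
    univ_mem' fun n => mem_biUnion (Nat.mod_lt n hP) rfl
  obtain ⟨r, hr, hrU⟩ := (Ultrafilter.finite_biUnion_mem_iff (finite_Iio P)).1 hres
  refine ⟨r, hr, funext fun x =>
    tendsto_nhds_unique (((continuous_apply x).tendsto g).comp hgU) ?_⟩
  have hdiv : Tendsto (· / P) (U : Filter ℕ) atTop :=
    (Nat.tendsto_div_const_atTop hP.ne').mono_left hU
  refine ((hΦ (f^[r] x)).comp hdiv).congr' (eventually_of_mem hrU fun n hn => ?_)
  change (f^[P])^[n / P] (f^[r] x) = f^[n] x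
  rw [← iterate_mul, ← iterate_add_apply, ← hn, Nat.div_add_mod]

theorem finite_closure_range_iterate_diff_of_ncard_omegaLimit_le [CompactSpace X] [T2Space X]
    (hf : Continuous f) {M : ℕ} (hM : ∀ x, (omegaLimit atTop (fun n => f^[n]) {x}).Finite ∧
      (omegaLimit atTop (fun n => f^[n]) {x}).ncard ≤ M) :
    (closure (range fun n => f^[n]) \ range fun n => f^[n]).Finite := by
  have hP : 0 < M ! := M.factorial_pos
  have hconv : ∀ x, ∃ z, Tendsto (fun n => (f^[M !])^[n] x) atTop (𝓝 z) := by
    intro x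
    obtain ⟨hfin, hcard⟩ := hM x
    have hsub : omegaLimit atTop (fun n => (f^[M !])^[n]) {x} ⊆
        omegaLimit atTop (fun n => f^[n]) {x} := by
      simp_rw [← iterate_mul]
      exact omegaLimit_subset_of_tendsto (fun n => f^[n]) {x}
        (strictMono_mul_left_of_pos hP).tendsto_atTop
    have hbij := (hfin.surjOn_iff_bijOn_of_mapsTo (mapsTo_omegaLimit_iterate hf x)).1
      (surjOn_omegaLimit_iterate hf x)
    exact exists_tendsto_iterate_of_finite_omegaLimit (hf.iterate _) (hfin.subset hsub)
      fun z hz => hbij.iterate_factorial_eq hfin hcard (hsub hz)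
  choose Φ hΦ using hconv
  refine ((finite_Iio (M !)).image fun r => Φ ∘ f^[r]).subset fun g hg => ?_
  obtain ⟨r, hr, rfl⟩ :=
    (mapClusterPt_of_mem_closure_range_of_notMem hg.1 hg.2).eq_comp_iterate_of_tendsto hP hΦ
  exact mem_image_of_mem _ hr

end Iterates

/-- Theorem 2.3: For a dynamical system `(X, f)` on a compact metric space,
`E(X,f)* = E(X,f) \ {fⁿ : n ∈ ℕ}` is finite if and only if there is an `M`
bounding the cardinalities of all ω-limit sets. -/
theorem ellis_star_finite_iff {X : Type*} [MetricSpace X] [CompactSpace X]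
    (f : X → X) (hf : Continuous f) :
    (closure {g : X → X | ∃ n : ℕ, g = f^[n]} \ {g : X → X | ∃ n : ℕ, g = f^[n]}).Finite ↔
      ∃ M : ℕ, ∀ x : X,
        (omegaLimit Filter.atTop (fun n : ℕ => f^[n]) {x}).Finite ∧
        (omegaLimit Filter.atTop (fun n : ℕ => f^[n]) {x}).ncard ≤ M := by
  have hS : {g : X → X | ∃ n : ℕ, g = f^[n]} = range fun n => f^[n] := by
    ext g
    simp [eq_comm]
  rw [hS]
  refine ⟨fun hE => ?_, fun ⟨_, hM⟩ =>
    finite_closure_range_iterate_diff_of_ncard_omegaLimit_le hf hM⟩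
  have hC := finite_setOf_mapClusterPt_iterate hE
  refine ⟨{g | MapClusterPt g atTop fun n => f^[n]}.ncard, fun x => ?_⟩
  have hsub := omegaLimit_iterate_subset_image (f := f) x
  exact ⟨(hC.image _).subset hsub,
    (ncard_le_ncard hsub (hC.image _)).trans (ncard_image_le hC)⟩
end

section
/- Let (X,f) be a dynamical system, where X is a compact metric space and f : X → X is continuous. If E(X,f)* = E(X,f) \ {fⁿ : n ∈ ℕ} is finite, then the set P_f of all minimal periods of periodic points of f is finite. -/
/-!
If the iterates `fⁿ` are not pairwise distinct, say `fᵃ = fᵇ` with `a < b`, every period divides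
`b - a`. Otherwise take a point `x` of period `p`; for each `r < p`, a cluster point `g` of
`n ↦ f^(r + n p)` in `X^X` satisfies `g x = fʳ x`. No cluster point of the iterates is itself an
iterate `fᵐ`: the closure of the orbit of `fᵐ` under `g ↦ f ∘ g` is countable and compact, so by
Baire's theorem it has an isolated point, which must be an orbit point; but every orbit point is
again a cluster point of the orbit, so the injective orbit would return to it. Hence these `g` are
`p` distinct elements of `E(X,f)*`, and `p ≤ #E(X,f)*`.
-/

open Filter Function Set Topology

section Countable

variable {Y : Type*} [TopologicalSpace Y]

theorem exists_isOpen_singleton_of_countable [T1Space Y] [BaireSpace Y] [Countable Y]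
    [Nonempty Y] : ∃ y : Y, IsOpen ({y} : Set Y) := by
  obtain ⟨y, z, hz⟩ :=
    nonempty_interior_of_iUnion_of_closed (fun y : Y ↦ isClosed_singleton) (iUnion_of_singleton Y)
  have hzy : z = y := mem_singleton_iff.mp (interior_subset hz)
  subst hzy
  have : interior {z} = ({z} : Set Y) := interior_subset.antisymm (singleton_subset_iff.2 hz)
  exact ⟨z, this ▸ isOpen_interior⟩

theorem IsCompact.exists_isOpen_inter_eq_singleton_of_countable [T2Space Y] {K : Set Y}
    (hK : IsCompact K) (hc : K.Countable) (hne : K.Nonempty) :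
    ∃ e ∈ K, ∃ U : Set Y, IsOpen U ∧ K ∩ U = {e} := by
  have : CompactSpace K := isCompact_iff_compactSpace.mp hK
  have : Countable K := hc.to_subtype
  have : Nonempty K := hne.to_subtype
  obtain ⟨e, he⟩ := exists_isOpen_singleton_of_countable (Y := K)
  obtain ⟨U, hU, hUe⟩ := isOpen_induced_iff.mp he
  refine ⟨e, e.2, U, hU, ?_⟩
  rw [← Subtype.image_preimage_coe, hUe, image_singleton]

end Countable

section Orbit

variable {Y : Type*} [TopologicalSpace Y] {φ : Y → Y}

theorem MapClusterPt.iterate_of_orbit (hφ : Continuous φ) {x y : Y}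
    (h : MapClusterPt x atTop (φ^[·] y)) (j : ℕ) : MapClusterPt (φ^[j] x) atTop (φ^[·] y) := by
  refine MapClusterPt.of_comp (tendsto_add_atTop_nat j) ?_
  convert h.continuousAt_comp (hφ.iterate j).continuousAt using 1
  funext n
  simp [iterate_add_apply, add_comm n j]

theorem not_mapClusterPt_orbit_self [T2Space Y] [CompactSpace Y] (hφ : Continuous φ) {y : Y}
    (hinj : Injective (φ^[·] y)) (hc : (closure (range (φ^[·] y))).Countable) :
    ¬ MapClusterPt y atTop (φ^[·] y) := by
  intro hy
  obtain ⟨e, he, U, hU, hKU⟩ :=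
    isClosed_closure.isCompact.exists_isOpen_inter_eq_singleton_of_countable hc
      (range_nonempty _).closure
  have hU_orbit : ∀ n, φ^[n] y ∈ U → φ^[n] y = e := fun n hn ↦
    (hKU ▸ ⟨subset_closure (mem_range_self n), hn⟩ : φ^[n] y ∈ ({e} : Set Y))
  obtain ⟨_, hkU, k, rfl⟩ := mem_closure_iff.mp he U hU (hKU.ge rfl).2
  have hfreq : ∃ᶠ n in atTop, φ^[n] y ∈ U :=
    (hy.iterate_of_orbit hφ k).frequently (hU.mem_nhds hkU)
  obtain ⟨n, hnU, hkn⟩ := (hfreq.and_eventually (eventually_gt_atTop k)).exists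
  exact hkn.ne' (hinj ((hU_orbit n hnU).trans (hU_orbit k hkU).symm))

end Orbit

theorem minimalPeriod_le_of_iterate_eq {α : Type*} {f : α → α} {a b : ℕ} (hab : a < b)
    (h : f^[a] = f^[b]) (x : α) : minimalPeriod f x ≤ b - a := by
  by_cases hx : x ∈ periodicPts f
  · have hper : IsPeriodicPt f (b - a) (f^[a] x) := by
      rw [IsPeriodicPt, IsFixedPt, ← iterate_add_apply, Nat.sub_add_cancel hab.le, h]
    rw [← minimalPeriod_apply_iterate hx a]
    exact Nat.le_of_dvd (Nat.sub_pos_of_lt hab) hper.minimalPeriod_dvd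
  · simp [minimalPeriod_eq_zero_of_notMem_periodicPts hx]

theorem minimalPeriod_le_ncard {α : Type*} {f : α → α} {x : α} {S : Set (α → α)}
    (hS : S.Finite) (h : ∀ r, ∃ g ∈ S, g x = f^[r] x) : minimalPeriod f x ≤ S.ncard := by
  choose g hgS hgx using h
  rw [← ncard_Iio_nat (minimalPeriod f x)]
  refine ncard_le_ncard_of_injOn g (fun r _ ↦ hgS r) (fun r hr s hs hrs ↦ ?_) hS
  exact iterate_injOn_Iio_minimalPeriod hr hs (by simp only [← hgx, hrs])

theorem iterate_comp_left_iterate {α : Type*} (f : α → α) (m n : ℕ) :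
    (f ∘ ·)^[n] f^[m] = f^[n + m] := by
  induction n with
  | zero => simp
  | succ n ih => rw [iterate_succ_apply', ih, ← iterate_succ', Nat.succ_add]

section Ellis

variable {X : Type*} [TopologicalSpace X] {f : X → X}

/-- `E(X,f)*` in the notation of the paper. -/
def ellisRemainder (f : X → X) : Set (X → X) :=
  closure {g | ∃ n : ℕ, g = f^[n]} \ {g | ∃ n : ℕ, g = f^[n]}

theorem countable_closure_iterates (hE : (ellisRemainder f).Countable) :
    (closure {g | ∃ n : ℕ, g = f^[n]}).Countable := by
  have hS : {g | ∃ n : ℕ, g = f^[n]}.Countable :=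
    (countable_range (f^[·])).mono <| by rintro _ ⟨n, rfl⟩; exact mem_range_self n
  refine (hS.union hE).mono ?_
  rw [ellisRemainder, union_sdiff_self]
  exact subset_union_right

variable [T2Space X] [CompactSpace X]

theorem not_mapClusterPt_iterate (hf : Continuous f) (hinj : Injective (f^[·]))
    (hE : (ellisRemainder f).Countable) (m : ℕ) : ¬ MapClusterPt f^[m] atTop (f^[·]) := by
  intro h
  have hφ : Continuous fun g : X → X ↦ f ∘ g := continuous_pi fun x ↦ hf.comp (continuous_apply x)
  have horbit : ((f ∘ ·)^[·] f^[m]) = fun n ↦ f^[n + m] :=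
    funext (iterate_comp_left_iterate f m)
  refine not_mapClusterPt_orbit_self hφ (y := f^[m]) ?_ ?_ ?_ <;> rw [horbit]
  · exact hinj.comp (add_left_injective m)
  · exact (countable_closure_iterates hE).mono
      (closure_mono (range_subset_iff.2 fun n ↦ by exact ⟨n + m, rfl⟩))
  · exact mapClusterPt_comp.2 ((map_add_atTop_eq_nat m).symm ▸ h)

theorem mem_ellisRemainder_of_mapClusterPt (hf : Continuous f) (hinj : Injective (f^[·]))
    (hE : (ellisRemainder f).Countable) {g : X → X} (hg : MapClusterPt g atTop (f^[·])) :
    g ∈ ellisRemainder f := by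
  refine ⟨isClosed_closure.mem_of_mapClusterPt hg (.of_forall fun n ↦ subset_closure ⟨n, rfl⟩), ?_⟩
  rintro ⟨m, rfl⟩
  exact not_mapClusterPt_iterate hf hinj hE m hg

theorem exists_mapClusterPt_iterate_apply_eq {x : X} (hx : x ∈ periodicPts f) (r : ℕ) :
    ∃ g : X → X, MapClusterPt g atTop (f^[·]) ∧ g x = f^[r] x := by
  set p := minimalPeriod f x
  have hp : 0 < p := minimalPeriod_pos_of_mem_periodicPts hx
  obtain ⟨g, -, hg⟩ := isCompact_univ.exists_mapClusterPt (f := atTop)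
    (u := fun n ↦ f^[r + n * p]) (by simp)
  have htendsto : Tendsto (fun n ↦ r + n * p) atTop atTop :=
    tendsto_atTop_mono (fun n ↦ (Nat.le_mul_of_pos_right n hp).trans (Nat.le_add_left _ r))
      tendsto_id
  refine ⟨g, hg.of_comp htendsto, ?_⟩
  refine (isClosed_eq (continuous_apply x) continuous_const).mem_of_mapClusterPt hg
    (.of_forall fun n ↦ ?_)
  change f^[r + n * p] x = f^[r] x
  rw [iterate_add_apply, ((isPeriodicPt_minimalPeriod f x).const_mul n).eq]

theorem minimalPeriod_le_ncard_ellisRemainder (hf : Continuous f) (hinj : Injective (f^[·]))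
    (hE : (ellisRemainder f).Finite) (x : X) : minimalPeriod f x ≤ (ellisRemainder f).ncard := by
  by_cases hx : x ∈ periodicPts f
  · refine minimalPeriod_le_ncard hE fun r ↦ ?_
    obtain ⟨g, hg, hgx⟩ := exists_mapClusterPt_iterate_apply_eq hx r
    exact ⟨g, mem_ellisRemainder_of_mapClusterPt hf hinj hE.countable hg, hgx⟩
  · simp [minimalPeriod_eq_zero_of_notMem_periodicPts hx]

end Ellis

/-- Corollary 2.4: If `E(X,f)* = E(X,f) \ {fⁿ : n ∈ ℕ}` is finite, then the set
`P_f` of minimal periods of the periodic points of `f` is finite. -/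
theorem periods_finite_of_ellis_star_finite {X : Type*} [MetricSpace X] [CompactSpace X]
    (f : X → X) (hf : Continuous f)
    (hfin : (closure {g : X → X | ∃ n : ℕ, g = f^[n]} \
      {g : X → X | ∃ n : ℕ, g = f^[n]}).Finite) :
    {n : ℕ | 0 < n ∧ ∃ x : X, Function.minimalPeriod f x = n}.Finite := by
  obtain ⟨B, hB⟩ : ∃ B, ∀ x, minimalPeriod f x ≤ B := by
    by_cases hinj : Injective (f^[·])
    · exact ⟨_, minimalPeriod_le_ncard_ellisRemainder hf hinj hfin⟩
    · obtain ⟨a, b, hab, hne⟩ := not_injective_iff.mp hinj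
      rcases hne.lt_or_gt with h | h
      · exact ⟨_, minimalPeriod_le_of_iterate_eq h hab⟩
      · exact ⟨_, minimalPeriod_le_of_iterate_eq h hab.symm⟩
  exact (finite_Iic B).subset fun n ⟨_, x, hx⟩ ↦ hx ▸ hB x
end

section
/- For every countable ordinal α ≥ 1 there exists a continuous function f : (ω^α + 1) → (ω^α + 1) such that the Ellis semigroup E(ω^α + 1, f) is homeomorphic to the Cantor space 2^ℕ. Here ω^α + 1 denotes the ordinal interval Iic(ω^α) = {β : β ≤ ω^α} with the subspace topology inherited from the order topology on the ordinals. -/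
/-!
Choose a cofinal sequence `δ₀ < δ₁ < ⋯` in `ω ^ α` leaving a gap of `2 ^ k` successor ordinals
`δₖ + 1, …, δₖ + 2 ^ k` after `δₖ`, the `k`-th block. Let `f` rotate every block cyclically by
one step and fix all other points. For `r ∈ ∏ₖ ZMod (2 ^ k)`, rotating the `k`-th block by `r k`
is again continuous, because the block points are isolated and the blocks accumulate only at the
top point, where the sets `(δₖ, ω ^ α]` are unions of whole blocks. So `r ↦ (rotation by r)` is a
closed embedding of the compact space `∏ₖ ZMod (2 ^ k)` into the Hausdorff space of self-maps,
`fⁿ` is the rotation by `n`, and the Ellis semigroup is the image of the closure of `ℕ` in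
`∏ₖ ZMod (2 ^ k)`: the 2-adic integers, which binary expansion identifies with `2 ^ ℕ`.
-/

open Set Function Filter Topology Order

abbrev DyadicBlockIndex := Σ k : ℕ, ZMod (2 ^ k)

section BlockRotation

variable {X : Type*} {p : DyadicBlockIndex → X}

variable (p) in
noncomputable def blockRotation (r : ∀ k, ZMod (2 ^ k)) : X → X :=
  extend p (fun a => p ⟨a.1, a.2 + r a.1⟩) id

theorem blockRotation_apply (hp : Injective p) (r : ∀ k, ZMod (2 ^ k)) (a : DyadicBlockIndex) :
    blockRotation p r (p a) = p ⟨a.1, a.2 + r a.1⟩ :=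
  hp.extend_apply _ _ a

theorem blockRotation_apply_of_notMem {x : X} (hx : x ∉ range p) (r : ∀ k, ZMod (2 ^ k)) :
    blockRotation p r x = x :=
  extend_apply' _ _ _ hx

theorem blockRotation_zero (hp : Injective p) : blockRotation p 0 = id := by
  funext x
  by_cases hx : x ∈ range p
  · obtain ⟨a, rfl⟩ := hx
    simp [blockRotation_apply hp]
  · exact blockRotation_apply_of_notMem hx 0

theorem blockRotation_comp (hp : Injective p) (r s : ∀ k, ZMod (2 ^ k)) :
    blockRotation p r ∘ blockRotation p s = blockRotation p (s + r) := by
  funext x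
  by_cases hx : x ∈ range p
  · obtain ⟨a, rfl⟩ := hx
    simp [blockRotation_apply hp, add_assoc]
  · simp [blockRotation_apply_of_notMem hx]

theorem iterate_blockRotation_one (hp : Injective p) (n : ℕ) :
    (blockRotation p 1)^[n] = blockRotation p n := by
  induction n with
  | zero => simp [blockRotation_zero hp]
  | succ n ih => rw [iterate_succ', ih, blockRotation_comp hp, Nat.cast_succ]

theorem injective_blockRotation (hp : Injective p) : Injective (blockRotation p) := by
  intro r s h
  funext k
  have := hp (by simpa [blockRotation_apply hp] using congrFun h (p ⟨k, 0⟩))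
  simpa using this

variable (p) in
def BlockSaturated (V : Set X) : Prop :=
  ∀ (k : ℕ) (i j : ZMod (2 ^ k)), p ⟨k, i⟩ ∈ V → p ⟨k, j⟩ ∈ V

theorem mapsTo_blockRotation (hp : Injective p) {V : Set X} (hV : BlockSaturated p V)
    (r : ∀ k, ZMod (2 ^ k)) : MapsTo (blockRotation p r) V V := by
  intro x hx
  by_cases hxp : x ∈ range p
  · obtain ⟨⟨k, i⟩, rfl⟩ := hxp
    rw [blockRotation_apply hp]
    exact hV k i _ hx
  · rwa [blockRotation_apply_of_notMem hxp]

variable [TopologicalSpace X]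

theorem isClosedEmbedding_blockRotation [T2Space X] (hp : Injective p) :
    IsClosedEmbedding (blockRotation p) := by
  refine Continuous.isClosedEmbedding (continuous_pi fun x => ?_) (injective_blockRotation hp)
  by_cases hx : x ∈ range p
  · obtain ⟨a, rfl⟩ := hx
    simp_rw [blockRotation_apply hp]
    exact (continuous_of_discreteTopology
      (f := fun z : ZMod (2 ^ a.1) => p ⟨a.1, a.2 + z⟩)).comp (continuous_apply a.1)
  · simp_rw [blockRotation_apply_of_notMem hx]
    exact continuous_const

structure IsDyadicBlocks (p : DyadicBlockIndex → X) : Prop where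
  injective : Injective p
  isOpen_singleton : ∀ a, IsOpen {p a}
  exists_saturated_nhds : ∀ x ∉ range p, ∀ U ∈ 𝓝 x, ∃ V ∈ 𝓝 x, V ⊆ U ∧ BlockSaturated p V

theorem IsDyadicBlocks.continuous_blockRotation (hp : IsDyadicBlocks p)
    (r : ∀ k, ZMod (2 ^ k)) : Continuous (blockRotation p r) := by
  refine continuous_iff_continuousAt.2 fun x => ?_
  by_cases hx : x ∈ range p
  · obtain ⟨a, rfl⟩ := hx
    rw [ContinuousAt, (isOpen_singleton_iff_nhds_eq_pure _).1 (hp.isOpen_singleton a)]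
    exact tendsto_pure_nhds _ _
  · intro U hU
    rw [blockRotation_apply_of_notMem hx] at hU
    obtain ⟨V, hV, hVU, hVsat⟩ := hp.exists_saturated_nhds x hx U hU
    exact mem_map.2 <| mem_of_superset hV fun y hy =>
      hVU (mapsTo_blockRotation hp.injective hVsat r hy)

end BlockRotation

def twoAdicResidues (b : ℕ → Bool) (k : ℕ) : ZMod (2 ^ k) :=
  Nat.ofBits fun i : Fin k => b i

theorem twoAdicResidues_testBit (n : ℕ) : twoAdicResidues n.testBit = n := by
  funext k
  simp [twoAdicResidues, Nat.ofBits_testBit]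

theorem isClosedEmbedding_twoAdicResidues : IsClosedEmbedding twoAdicResidues := by
  refine Continuous.isClosedEmbedding (continuous_pi fun k => ?_) fun b b' h => funext fun i => ?_
  · exact (continuous_of_discreteTopology
      (f := fun c : Fin k → Bool => (Nat.ofBits c : ZMod (2 ^ k)))).comp
      (f := fun (b : ℕ → Bool) (i : Fin k) => b i) (continuous_pi fun i => continuous_apply _)
  · have h := congrArg ZMod.val (congrFun h (i + 1))
    simp only [twoAdicResidues, ZMod.val_natCast_of_lt (Nat.ofBits_lt_two_pow _)] at h
    simpa using congrArg (Nat.testBit · i) h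

theorem denseRange_testBit : DenseRange Nat.testBit := by
  intro b
  refine mem_closure_of_tendsto (f := fun j => (Nat.ofBits fun i : Fin j => b i).testBit)
    (b := atTop) ?_ (Eventually.of_forall fun j => mem_range_self _)
  rw [tendsto_pi_nhds]
  intro i
  refine tendsto_const_nhds.congr' ?_
  filter_upwards [eventually_gt_atTop i] with j hj
  simp [Nat.testBit_ofBits_lt _ _ hj]

noncomputable def Ordinal.gappedSeq (e : ℕ → Ordinal) (g : ℕ → ℕ) : ℕ → Ordinal
  | 0 => e 0
  | k + 1 => max (e (k + 1)) (gappedSeq e g k + g k)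

theorem Ordinal.exists_gapped_cofinal_seq {o : Ordinal} (ho : IsSuccLimit o)
    (hcount : o.card ≤ Cardinal.aleph0) (g : ℕ → ℕ) :
    ∃ δ : ℕ → Ordinal, (∀ k, δ k < o) ∧ (∀ k, δ k + g k ≤ δ (k + 1)) ∧
      ∀ β < o, ∃ k, β ≤ δ k := by
  have hIio : (Iio o).Countable := by
    rwa [← countable_coe_iff, ← Cardinal.mk_le_aleph0_iff, Cardinal.mk_Iio_ordinal,
      Cardinal.lift_le_aleph0]
  obtain ⟨e, he⟩ := hIio.exists_eq_range ⟨0, ho.pos⟩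
  have he_lt (k : ℕ) : e k < o := (he ▸ mem_range_self k : e k ∈ Iio o)
  refine ⟨gappedSeq e g, fun k => ?_, fun k => le_max_right _ _, fun β hβ => ?_⟩
  · induction k with
    | zero => exact he_lt 0
    | succ k ih => exact max_lt (he_lt _) (ho.add_natCast_lt ih _)
  · obtain ⟨k, rfl⟩ : β ∈ range e := he ▸ hβ
    exact ⟨k, by cases k <;> simp [gappedSeq]⟩

section BlockPoint

variable {δ : ℕ → Ordinal}

noncomputable def blockPoint (δ : ℕ → Ordinal) (a : DyadicBlockIndex) : Ordinal :=
  δ a.1 + a.2.val + 1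

theorem lt_blockPoint (a : DyadicBlockIndex) : δ a.1 < blockPoint δ a :=
  le_self_add.trans_lt (lt_add_one _)

variable (hδ : ∀ k, δ k + (2 ^ k : ℕ) ≤ δ (k + 1))
include hδ

theorem blockPoint_le (a : DyadicBlockIndex) : blockPoint δ a ≤ δ (a.1 + 1) :=
  calc blockPoint δ a = δ a.1 + (a.2.val + 1 : ℕ) := by simp [blockPoint, add_assoc]
    _ ≤ δ a.1 + (2 ^ a.1 : ℕ) := by gcongr; exact ZMod.val_lt a.2
    _ ≤ δ (a.1 + 1) := hδ a.1

theorem lt_blockPoint_iff {K : ℕ} {a : DyadicBlockIndex} : δ K < blockPoint δ a ↔ K ≤ a.1 := by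
  have hmono : Monotone δ := monotone_nat_of_le_succ fun k => le_self_add.trans (hδ k)
  refine ⟨fun h => ?_, fun h => (hmono h).trans_lt (lt_blockPoint a)⟩
  by_contra! hK
  exact ((blockPoint_le hδ a).trans (hmono hK)).not_gt h

theorem injective_blockPoint : Injective (blockPoint δ) := by
  rintro ⟨k, i⟩ ⟨l, j⟩ h
  obtain rfl : k = l := le_antisymm
    ((lt_blockPoint_iff hδ).1 (h ▸ lt_blockPoint ⟨k, i⟩ : δ k < blockPoint δ ⟨l, j⟩))
    ((lt_blockPoint_iff hδ).1 (h ▸ lt_blockPoint ⟨l, j⟩ : δ l < blockPoint δ ⟨k, i⟩))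
  simpa [blockPoint, (ZMod.val_injective _).eq_iff] using h

theorem blockSaturated_Ioi (K : ℕ) : BlockSaturated (blockPoint δ) (Ioi (δ K)) :=
  fun k i _ h => (lt_blockPoint_iff hδ).2 ((lt_blockPoint_iff hδ (a := ⟨k, i⟩)).1 h)

theorem isOpen_Iic_diff_range_blockPoint (K : ℕ) :
    IsOpen (Iic (δ K) \ range (blockPoint δ)) := by
  rw [← sdiff_inter_self_eq_sdiff]
  refine (Order.Iio_succ (δ K) ▸ isOpen_Iio).sdiff (Finite.isClosed ?_)
  refine ((finite_Iio K).biUnion fun k _ => finite_range fun i => blockPoint δ ⟨k, i⟩).subset ?_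
  rintro _ ⟨⟨⟨k, i⟩, rfl⟩, hle⟩
  exact mem_biUnion (x := k) (not_le.1 fun h => ((lt_blockPoint_iff hδ).2 h).not_ge hle) ⟨i, rfl⟩

end BlockPoint

theorem Ordinal.exists_isDyadicBlocks {o : Ordinal} (ho : IsSuccLimit o)
    (hcount : o.card ≤ Cardinal.aleph0) : ∃ p : DyadicBlockIndex → Iic o, IsDyadicBlocks p := by
  obtain ⟨δ, hlt, hδ, hcof⟩ := exists_gapped_cofinal_seq ho hcount (2 ^ ·)
  refine ⟨codRestrict (blockPoint δ) (Iic o) fun a => ((blockPoint_le hδ a).trans_lt (hlt _)).le,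
    ⟨(injective_codRestrict _).2 (injective_blockPoint hδ), fun a => ?_, fun x hx U hU => ?_⟩⟩
  · have : IsOpen ({blockPoint δ a} : Set Ordinal) :=
      SuccOrder.isOpen_singleton_iff.2 (not_isSuccLimit_add_one _)
    convert this.preimage continuous_subtype_val
    ext y
    exact Subtype.ext_iff
  -- Below the top only finitely many block points lie under `δ K`, so a point `x < o` off the
  -- blocks has a neighbourhood without block points; at the top, `Ioi (δ K)` is a union of blocks.
  rcases (mem_Iic.1 x.2).lt_or_eq with hxo | hxo
  · obtain ⟨K, hK⟩ := hcof x hxo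
    have hW : (↑) ⁻¹' (Iic (δ K) \ range (blockPoint δ)) ∈ 𝓝 x :=
      ((isOpen_Iic_diff_range_blockPoint hδ K).preimage continuous_subtype_val).mem_nhds
        ⟨hK, fun ⟨a, ha⟩ => hx ⟨a, Subtype.ext ha⟩⟩
    exact ⟨U ∩ _, inter_mem hU hW, inter_subset_left, fun k i j hi => (hi.2.2 ⟨_, rfl⟩).elim⟩
  · obtain ⟨u, hu, huU⟩ := (mem_nhds_subtype _ _ _).1 hU
    rw [hxo] at hu
    obtain ⟨c, hc, hcu⟩ :=
      (mem_nhdsLE_iff_exists_Ioc_subset' ho.pos).1 (mem_nhdsWithin_of_mem_nhds hu)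
    obtain ⟨K, hK⟩ := hcof c hc
    exact ⟨Subtype.val ⁻¹' Ioi (δ K), (isOpen_Ioi.preimage continuous_subtype_val).mem_nhds
      (by simpa [hxo] using hlt K), fun y hy => huU (hcu ⟨hK.trans_lt hy, y.2⟩),
      blockSaturated_Ioi hδ K⟩

open Ordinal in
/-- Corollary 2.8: For every countable ordinal `α ≥ 1` there is a continuous function
`f : ω^α + 1 → ω^α + 1` (where `ω^α + 1` is realized as `Iic (ω^α)` with the subspace
topology from the order topology on ordinals) whose Ellis semigroup is homeomorphic
to the Cantor space `2^ℕ`. -/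
theorem exists_fun_ellis_homeomorphic_cantor (α : Ordinal) (hα : 1 ≤ α)
    (hcount : α.card ≤ Cardinal.aleph0) :
    ∃ f : Set.Iic (omega0 ^ α) → Set.Iic (omega0 ^ α), Continuous f ∧
      Nonempty ((closure {g : Set.Iic (omega0 ^ α) → Set.Iic (omega0 ^ α) |
        ∃ n : ℕ, g = f^[n]} : Set _) ≃ₜ (ℕ → Bool)) := by
  have hlim : IsSuccLimit (ω ^ α) :=
    isSuccLimit_opow_left isSuccLimit_omega0 (one_le_iff_ne_zero.1 hα)
  have hcard : (ω ^ α).card ≤ Cardinal.aleph0 :=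
    (card_opow_le ω α).trans (by simp [hcount])
  obtain ⟨p, hp⟩ := exists_isDyadicBlocks hlim hcard
  refine ⟨blockRotation p 1, hp.continuous_blockRotation 1, ?_⟩
  have hE : IsClosedEmbedding (blockRotation p ∘ twoAdicResidues) :=
    (isClosedEmbedding_blockRotation hp.injective).comp isClosedEmbedding_twoAdicResidues
  have hiter : {g | ∃ n : ℕ, g = (blockRotation p 1)^[n]} =
      (blockRotation p ∘ twoAdicResidues) '' range Nat.testBit := by
    ext g
    simp [iterate_blockRotation_one hp.injective, twoAdicResidues_testBit, eq_comm]
  rw [hiter, hE.closure_image_eq, denseRange_testBit.closure_range, image_univ]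
  exact ⟨hE.isEmbedding.toHomeomorph.symm⟩
end

section
/- Let (X,f) be a dynamical system, where X is a compact metric space and f : X → X is continuous, and suppose there exists w ∈ X whose orbit {fⁿ(w) : n ∈ ℕ} is dense in X. If every element of the Ellis semigroup E(X,f) is continuous, then the cardinality of E(X,f)* = E(X,f) \ {fⁿ : n ∈ ℕ} is at most the cardinality of X. -/
/-! Every element of the Ellis semigroup commutes with `f`, so it sends `fⁿ w` to `fⁿ (g w)`.
A continuous such `g` is therefore determined on the dense orbit of `w`, hence everywhere,
by the single value `g w`; thus `g ↦ g w` injects `E(X,f)` into `X`. -/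

open Set

section

variable {X : Type*} [TopologicalSpace X] [T2Space X] {f : X → X}

theorem isClosed_setOf_commute (hf : Continuous f) :
    IsClosed {g : X → X | Function.Commute g f} := by
  simp only [Function.Commute, Function.Semiconj, ofPred_forall]
  exact isClosed_iInter fun x ↦ isClosed_eq (continuous_apply (f x)) (hf.comp (continuous_apply x))

theorem commute_of_mem_closure_iterates (hf : Continuous f) {g : X → X}
    (hg : g ∈ closure {g : X → X | ∃ n : ℕ, g = f^[n]}) : Function.Commute g f := by
  refine (isClosed_setOf_commute hf).closure_subset_iff.mpr ?_ hg
  rintro _ ⟨n, rfl⟩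
  exact Function.Commute.iterate_self f n

theorem eq_of_commute_of_dense_orbit {w : X} (hw : Dense (range fun n : ℕ ↦ f^[n] w))
    {g h : X → X} (hg : Continuous g) (hh : Continuous h) (hgf : Function.Commute g f)
    (hhf : Function.Commute h f) (hgh : g w = h w) : g = h := by
  refine hg.ext_on hw hh ?_
  rintro _ ⟨n, rfl⟩
  simp only [(hgf.iterate_right n).eq, (hhf.iterate_right n).eq, hgh]

end

theorem ellis_star_card_le_general {X : Type*} [MetricSpace X]
    (f : X → X) (hf : Continuous f)
    (w : X) (hw : Dense (Set.range fun n : ℕ => f^[n] w))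
    (hcont : ∀ g ∈ closure {g : X → X | ∃ n : ℕ, g = f^[n]}, Continuous g) :
    Cardinal.mk ↥(closure {g : X → X | ∃ n : ℕ, g = f^[n]} \
      {g : X → X | ∃ n : ℕ, g = f^[n]}) ≤ Cardinal.mk X := by
  have hinj : InjOn (fun g : X → X ↦ g w) (closure {g : X → X | ∃ n : ℕ, g = f^[n]}) :=
    fun g hg h hh hgh ↦ eq_of_commute_of_dense_orbit hw (hcont g hg) (hcont h hh)
      (commute_of_mem_closure_iterates hf hg) (commute_of_mem_closure_iterates hf hh) hgh
  exact Cardinal.mk_le_of_injective (hinj.mono sdiff_subset).injective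

/-- Theorem 2.9 (cardinality part): If `(X,f)` has a point `w` with dense orbit and
all elements of the Ellis semigroup are continuous, then
`|E(X,f)*| = |E(X,f) \ {fⁿ : n ∈ ℕ}| ≤ |X|`. -/
theorem ellis_star_card_le {X : Type*} [MetricSpace X] [CompactSpace X]
    (f : X → X) (hf : Continuous f)
    (w : X) (hw : Dense (Set.range fun n : ℕ => f^[n] w))
    (hcont : ∀ g ∈ closure {g : X → X | ∃ n : ℕ, g = f^[n]}, Continuous g) :
    Cardinal.mk ↥(closure {g : X → X | ∃ n : ℕ, g = f^[n]} \
      {g : X → X | ∃ n : ℕ, g = f^[n]}) ≤ Cardinal.mk X :=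
  ellis_star_card_le_general f hf w hw hcont
end

section
/- Let α ≥ 1 be a countable ordinal, let X = ω^α + 1 (realized as Iic(ω^α) with the subspace topology from the order topology on ordinals), and let f : X → X be continuous such that some w ∈ X has dense orbit. Then for every limit point y of X (i.e., every non-isolated point y), the image f(y) is also a limit point of X. -/
open Ordinal Topology Set Filter

lemma orbit_finite_of_eq {X : Type*} (f : X → X) (x : X) {a b : ℕ} (hab : a < b)
    (h : f^[a] x = f^[b] x) : (Set.range fun n => f^[n] x).Finite := by
  apply Set.Finite.subset ((Set.finite_Iio b).image fun n => f^[n] x)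
  rintro _ ⟨n, rfl⟩
  induction n using Nat.strong_induction_on with
  | _ n ih =>
    rcases lt_or_ge n b with h' | h'
    · exact ⟨n, h', rfl⟩

    · have key : f^[n] x = f^[(n - b) + a] x := by
        have : n = (n - b) + b := (Nat.sub_add_cancel h').symm
        rw [show f^[n] x = f^[(n-b)+b] x by rw [← this],
          Function.iterate_add_apply, ← h, ← Function.iterate_add_apply]
      show f^[n] x ∈ _
      rw [key]
      exact ih ((n - b) + a) (by omega)

open Ordinal Topology in
/-- Lemma 3.1(i): For a dynamical system on `ω^α + 1` (realized as `Iic (ω^α)` with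
the order topology), `α ≥ 1` countable, with a dense orbit, the image under `f` of
every limit (non-isolated) point is again a limit point. -/
theorem image_limit_point_is_limit_point (α : Ordinal) (hα : 1 ≤ α)
    (hcount : α.card ≤ Cardinal.aleph0)
    (f : Set.Iic (omega0 ^ α) → Set.Iic (omega0 ^ α)) (hf : Continuous f)
    (w : Set.Iic (omega0 ^ α)) (hw : Dense (Set.range fun n : ℕ => f^[n] w)) :
    ∀ y : Set.Iic (omega0 ^ α), (𝓝[≠] y).NeBot → (𝓝[≠] (f y)).NeBot := by
  have homega : omega0 ≤ omega0 ^ α := by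
    calc omega0 = omega0 ^ (1 : Ordinal) := (opow_one _).symm
    _ ≤ omega0 ^ α := opow_le_opow_right omega0_pos hα
  have hinf : Infinite (Set.Iic (omega0 ^ α)) := by
    apply Infinite.of_injective (fun n : ℕ => (⟨(n : Ordinal), ((nat_lt_omega0 n).le.trans homega)⟩ : Set.Iic (omega0 ^ α)))
    intro m n hmn
    simpa using congrArg Subtype.val hmn
  intro y hy
  by_contra hiso
  rw [not_neBot, ← isOpen_singleton_iff_punctured_nhds] at hiso
  set U : Set (Set.Iic (omega0 ^ α)) := f ⁻¹' {f y} with hU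
  have hUopen : IsOpen U := hiso.preimage hf
  have hyU : y ∈ U := rfl
  have hVopen : IsOpen (U \ {y}) := hUopen.sdiff isClosed_singleton
  have hVmem : U \ {y} ∈ 𝓝[≠] y := diff_mem_nhdsWithin_compl (hUopen.mem_nhds hyU) {y}
  obtain ⟨p₁, hp₁⟩ := hy.nonempty_of_mem hVmem
  obtain ⟨q, ⟨m₁, hm₁⟩, hqV⟩ := hw.exists_mem_open hVopen ⟨p₁, hp₁⟩
  have hqy : q ≠ y := hqV.2
  have hWopen : IsOpen ((U \ {q}) \ {y}) :=
    (hUopen.sdiff isClosed_singleton).sdiff isClosed_singleton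
  have hWmem : (U \ {q}) \ {y} ∈ 𝓝[≠] y :=
    diff_mem_nhdsWithin_compl
      (((hUopen.sdiff isClosed_singleton)).mem_nhds ⟨hyU, fun h => hqy (Set.mem_singleton_iff.mp h).symm⟩) {y}
  obtain ⟨p₂, hp₂⟩ := hy.nonempty_of_mem hWmem
  obtain ⟨r, ⟨m₂, hm₂⟩, hrW⟩ := hw.exists_mem_open hWopen ⟨p₂, hp₂⟩
  have hqr : q ≠ r := fun h => hrW.1.2 (h ▸ rfl)
  have hmm : m₁ ≠ m₂ := fun h => hqr (by rw [← hm₁, ← hm₂, h])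
  have hfq : f q = f y := hqV.1
  have hfr : f r = f y := hrW.1.1
  have heq : f^[m₁ + 1] w = f^[m₂ + 1] w := by
    have hm₁' : f^[m₁] w = q := hm₁
    have hm₂' : f^[m₂] w = r := hm₂
    rw [Function.iterate_succ_apply', Function.iterate_succ_apply', hm₁', hm₂', hfq, hfr]
  have hfin : (Set.range fun n : ℕ => f^[n] w).Finite := by
    rcases Nat.lt_or_ge m₁ m₂ with h' | h'
    · exact orbit_finite_of_eq f w (by omega : m₁ + 1 < m₂ + 1) heq
    · exact orbit_finite_of_eq f w (by omega : m₂ + 1 < m₁ + 1) heq.symm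
  have : (Set.univ : Set (Set.Iic (omega0 ^ α))).Finite := by
    rw [← hw.closure_eq, hfin.isClosed.closure_eq]
    exact hfin
  exact Set.infinite_univ this
end

section
/- Let α ≥ 1 be a countable ordinal, let X = ω^α + 1 (realized as Iic(ω^α) with the subspace topology from the order topology on ordinals), and let f : X → X be continuous such that some w ∈ X has dense orbit. Then w is an isolated point of X, and the orbit {fⁿ(w) : n ∈ ℕ} is exactly the set of all isolated points of X. -/
open Filter Topology Set in
private lemma iso_mem_of_mem_closure' {X : Type*} [TopologicalSpace X] {x : X} {S : Set X}
    (hx : 𝓝[≠] x = ⊥) (hcl : x ∈ closure S) : x ∈ S := by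
  by_contra hxS
  have hsub : S ⊆ {x}ᶜ := by
    intro y hy
    simp only [Set.mem_compl_iff, Set.mem_singleton_iff]
    rintro rfl; exact hxS hy
  have h2 : 𝓝[S] x ≤ 𝓝[≠] x := nhdsWithin_mono x hsub
  have h3 : (𝓝[S] x).NeBot := mem_closure_iff_nhdsWithin_neBot.mp hcl
  rw [hx, le_bot_iff] at h2
  exact h3.ne h2

open Filter Topology Set in
private lemma nhdsNE_bot_of_isOpen_singleton' {X : Type*} [TopologicalSpace X] {x : X}
    (h : IsOpen {x}) : 𝓝[≠] x = ⊥ := by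
  by_contra h'
  have h1 : x ∈ closure ({x}ᶜ) := mem_closure_iff_nhdsWithin_neBot.mpr (Filter.neBot_iff.mpr h')
  rw [h.isClosed_compl.closure_eq] at h1
  exact h1 rfl

open Filter Topology Set in
private theorem aux_main' {X : Type*} [TopologicalSpace X] [T1Space X]
    (hI : {x : X | 𝓝[≠] x = ⊥}.Infinite)
    (f : X → X) (hf : Continuous f) (w : X)
    (hw : Dense (Set.range fun n : ℕ => f^[n] w)) :
    (𝓝[≠] w) = ⊥ ∧ (Set.range fun n : ℕ => f^[n] w) = {x : X | 𝓝[≠] x = ⊥} := by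
  have hIO : {x : X | 𝓝[≠] x = ⊥} ⊆ Set.range fun n : ℕ => f^[n] w := fun x hx =>
    iso_mem_of_mem_closure' hx (hw x)
  have hOinf : (Set.range fun n : ℕ => f^[n] w).Infinite := hI.mono hIO
  have hinj : Function.Injective fun n : ℕ => f^[n] w := by
    by_contra h
    rw [Function.Injective] at h
    push_neg at h
    have key : ∀ a b : ℕ, a < b → f^[a] w = f^[b] w → False := by
      intro a b hab heq
      have key2 : ∀ n, ∃ j, j < b ∧ f^[n] w = f^[j] w := by
        intro n
        induction n using Nat.strong_induction_on with
        | _ n ih =>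
          by_cases hn : n < b
          · exact ⟨n, hn, rfl⟩
          · push_neg at hn
            have e1 : f^[n] w = f^[n - b + a] w := by
              calc f^[n] w = f^[n - b + b] w := by rw [Nat.sub_add_cancel hn]
                _ = f^[n - b] (f^[b] w) := Function.iterate_add_apply f _ _ w
                _ = f^[n - b] (f^[a] w) := by rw [heq]
                _ = f^[n - b + a] w := (Function.iterate_add_apply f _ _ w).symm
            obtain ⟨j, hj, hj2⟩ := ih (n - b + a) (by omega)
            exact ⟨j, hj, e1.trans hj2⟩
      have hsub : (Set.range fun n : ℕ => f^[n] w) ⊆ (fun j : ℕ => f^[j] w) '' Set.Iio b := by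
        rintro x ⟨n, rfl⟩
        obtain ⟨j, hj, hj2⟩ := key2 n
        exact ⟨j, hj, hj2.symm⟩
      exact hOinf (((Set.finite_Iio b).image _).subset hsub)
    obtain ⟨a, b, hab, hne⟩ := h
    rcases (Ne.lt_or_gt hne) with h1 | h1
    · exact key a b h1 hab
    · exact key b a h1 hab.symm
  set T : ℕ → Set X := fun n => Set.range fun m : ℕ => f^[m + n] w with hT
  have main : ∀ k : ℕ, 𝓝[≠] (f^[k] w) = ⊥ := by
    intro k
    by_contra hk
    have hlim : ∀ y : X, ¬ (𝓝[≠] y = ⊥) → ∀ n, y ∈ closure (T n) := by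
      intro y hy n
      rw [mem_closure_iff]
      intro U hU hyU
      have hF : ((fun j : ℕ => f^[j] w) '' Set.Iio n).Finite := (Set.finite_Iio n).image _
      set V := U \ ((((fun j : ℕ => f^[j] w) '' Set.Iio n)) \ {y}) with hV
      have hVopen : IsOpen V := hU.sdiff hF.diff.isClosed
      have hyV : y ∈ V := ⟨hyU, fun hmem => hmem.2 rfl⟩
      have hVyopen : IsOpen (V \ {y}) := hVopen.sdiff isClosed_singleton
      have hyc : y ∈ closure ({y}ᶜ) :=
        mem_closure_iff_nhdsWithin_neBot.mpr (Filter.neBot_iff.mpr hy)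
      obtain ⟨z, hz1, hz2⟩ := mem_closure_iff.mp hyc V hVopen hyV
      have hVyne : (V \ {y}).Nonempty := ⟨z, hz1, hz2⟩
      obtain ⟨p, hpO, hpV⟩ := hw.exists_mem_open hVyopen hVyne
      obtain ⟨j, rfl⟩ := hpO
      by_cases hj : n ≤ j
      · refine ⟨f^[j] w, hpV.1.1, ⟨j - n, ?_⟩⟩
        show f^[j - n + n] w = f^[j] w
        rw [Nat.sub_add_cancel hj]
      · exfalso
        push_neg at hj
        exact hpV.1.2 ⟨⟨j, hj, rfl⟩, hpV.2⟩
    have hfC : ∀ n (y : X), y ∈ closure (T n) → f y ∈ closure (T (n + 1)) := by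
      intro n y hy
      have h1 : f y ∈ f '' closure (T n) := ⟨y, hy, rfl⟩
      have h2 : f '' closure (T n) ⊆ closure (f '' T n) := image_closure_subset_closure_image hf
      refine closure_mono ?_ (h2 h1)
      rintro x ⟨_, ⟨m, rfl⟩, rfl⟩
      exact ⟨m, Function.iterate_succ_apply' f (m + n) w⟩
    have hi : ∀ m n : ℕ, f^[k + m] w ∈ closure (T n) := by
      intro m
      induction m with
      | zero => intro n; exact hlim _ hk n
      | succ m ih =>
        intro n
        cases n with
        | zero => exact subset_closure ⟨k + m + 1, rfl⟩
        | succ n =>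
          have hstep := hfC n _ (ih n)
          have h2 : f^[k + (m + 1)] w = f (f^[k + m] w) :=
            Function.iterate_succ_apply' f (k + m) w
          rw [h2]
          exact hstep
    have hIfin : {x : X | 𝓝[≠] x = ⊥} ⊆ (fun j : ℕ => f^[j] w) '' Set.Iio k := by
      intro x hx
      obtain ⟨j, rfl⟩ := hIO hx
      refine ⟨j, ?_, rfl⟩
      by_contra hj
      rw [Set.mem_Iio, not_lt] at hj
      have h1 : f^[j] w ∈ closure (T (j + 1)) := by
        have h0 := hi (j - k) (j + 1)
        rwa [Nat.add_sub_cancel' hj] at h0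
      have h2 := iso_mem_of_mem_closure' hx h1
      obtain ⟨m, hm⟩ := h2
      have h3 : m + (j + 1) = j := hinj hm
      omega
    exact hI (((Set.finite_Iio k).image _).subset hIfin)
  refine ⟨?_, Set.Subset.antisymm ?_ hIO⟩
  · have h0 := main 0
    rwa [Function.iterate_zero_apply] at h0
  · rintro x ⟨n, rfl⟩
    exact main n

open Ordinal Topology in
/-- Lemma 3.1(ii): For a dynamical system on `ω^α + 1` (realized as `Iic (ω^α)` with
the order topology), `α ≥ 1` countable, with a point `w` of dense orbit, `w` is
isolated and the orbit of `w` is exactly the set of isolated points. -/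
theorem dense_orbit_point_isolated_and_orbit_eq_isolated_points (α : Ordinal) (hα : 1 ≤ α)
    (hcount : α.card ≤ Cardinal.aleph0)
    (f : Set.Iic (omega0 ^ α) → Set.Iic (omega0 ^ α)) (hf : Continuous f)
    (w : Set.Iic (omega0 ^ α)) (hw : Dense (Set.range fun n : ℕ => f^[n] w)) :
    (𝓝[≠] w) = ⊥ ∧
      (Set.range fun n : ℕ => f^[n] w) =
        {x : Set.Iic (omega0 ^ α) | 𝓝[≠] x = ⊥} := by
  have homega : omega0 ≤ omega0 ^ α := by
    calc omega0 = omega0 ^ (1 : Ordinal) := (opow_one _).symm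
      _ ≤ omega0 ^ α := opow_le_opow_right omega0_pos hα
  have hle : ∀ n : ℕ, ((n : Ordinal) + 1) ≤ omega0 ^ α := by
    intro n
    have h1 := nat_lt_omega0 (n + 1)
    push_cast at h1
    exact h1.le.trans homega
  have hinf : {x : Set.Iic (omega0 ^ α) | 𝓝[≠] x = ⊥}.Infinite := by
    refine Set.infinite_of_injective_forall_mem
      (f := fun n : ℕ => (⟨(n : Ordinal) + 1, hle n⟩ : Set.Iic (omega0 ^ α))) ?_ ?_
    · intro a b hab
      have hab : (a : Ordinal) + 1 = b + 1 := congrArg Subtype.val hab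
      rw [Ordinal.add_one_eq_succ, Ordinal.add_one_eq_succ] at hab
      have h2 : (a : Ordinal) = b := Order.succ_injective hab
      exact_mod_cast h2
    · intro n
      have hopen : IsOpen {(⟨(n : Ordinal) + 1, hle n⟩ : Set.Iic (omega0 ^ α))} := by
        have hset : {(⟨(n : Ordinal) + 1, hle n⟩ : Set.Iic (omega0 ^ α))} =
            (Subtype.val) ⁻¹' (Set.Ioo (n : Ordinal) ((n : Ordinal) + 1 + 1)) := by
          ext ⟨x, hx⟩
          simp only [Set.mem_singleton_iff, Set.mem_preimage, Set.mem_Ioo, Subtype.mk.injEq]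
          rw [Subtype.ext_iff]
          show x = (n : Ordinal) + 1 ↔ _
          rw [Ordinal.add_one_eq_succ, Ordinal.add_one_eq_succ]
          constructor
          · rintro rfl
            exact ⟨Order.lt_succ _, Order.succ_lt_succ (Order.lt_succ _)⟩
          · rintro ⟨h1, h2⟩
            exact le_antisymm (Order.lt_succ_iff.mp h2) (Order.succ_le_iff.mpr h1)
        rw [hset]
        exact isOpen_Ioo.preimage continuous_subtype_val
      exact nhdsNE_bot_of_isOpen_singleton' hopen
  exact aux_main' hinf f hf w hw
end

section
/- Let α ≥ 1 be a countable ordinal, let X = ω^α + 1 (realized as Iic(ω^α) with the subspace topology from the order topology on ordinals), and let f : X → X be continuous such that some w ∈ X has dense orbit. Then the range of f is exactly X \ {w}. -/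
open Ordinal in
/-- Lemma 3.1(iii): For a dynamical system on `ω^α + 1` (realized as `Iic (ω^α)` with
the order topology), `α ≥ 1` countable, with a point `w` of dense orbit, the range of
`f` is exactly `X \ {w}`. -/
theorem range_eq_compl_dense_orbit_point (α : Ordinal) (hα : 1 ≤ α)
    (hcount : α.card ≤ Cardinal.aleph0)
    (f : Set.Iic (omega0 ^ α) → Set.Iic (omega0 ^ α)) (hf : Continuous f)
    (w : Set.Iic (omega0 ^ α)) (hw : Dense (Set.range fun n : ℕ => f^[n] w)) :
    Set.range f = {w}ᶜ := by
  -- the space is infinite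
  have hmem : ∀ n : ℕ, (n : Ordinal) ∈ Set.Iic (omega0 ^ α) := fun n =>
    le_trans (Ordinal.nat_lt_omega0 n).le (Ordinal.left_le_opow _ (zero_lt_one.trans_le hα))
  haveI : Infinite (Set.Iic (omega0 ^ α)) := Infinite.of_injective
    (fun n : ℕ => (⟨n, hmem n⟩ : Set.Iic (omega0 ^ α)))
    (fun a b hab => by simpa using Subtype.ext_iff.mp hab)
  -- the space is compact
  haveI : CompactSpace (Set.Iic (omega0 ^ α)) := by
    have h : Set.Iic (omega0 ^ α) = Set.Icc 0 (omega0 ^ α) := by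
      ext x; simp [zero_le]
    rw [h]
    exact isCompact_iff_compactSpace.mp isCompact_Icc
  set o : ℕ → Set.Iic (omega0 ^ α) := fun n => f^[n] w with ho
  -- the orbit is infinite
  have hfin : ¬ (Set.range o).Finite := by
    intro hfin
    have hclosed : IsClosed (Set.range o) := hfin.isClosed
    have huniv : Set.range o = Set.univ := by
      rw [← hclosed.closure_eq]; exact hw.closure_eq
    exact Set.infinite_univ (huniv ▸ hfin)
  -- the orbit map is injective
  have hinj : Function.Injective o := by
    intro i j hij
    by_contra hne
    wlog h : i < j generalizing i j
    · exact this hij.symm (Ne.symm hne) (by omega)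
    apply hfin
    have key : ∀ n, ∃ m < j, o n = o m := by
      intro n
      induction n using Nat.strong_induction_on with
      | _ n ih =>
        rcases lt_or_ge n j with hlt | hle
        · exact ⟨n, hlt, rfl⟩
        · have h1 : o n = o (n - j + i) := by
            have hn : n = (n - j) + j := (Nat.sub_add_cancel hle).symm
            calc o n = f^[n] w := rfl
              _ = f^[(n-j)+j] w := by rw [← hn]
              _ = f^[n-j] (f^[j] w) := Function.iterate_add_apply f _ _ _
              _ = f^[n-j] (f^[i] w) := by rw [show f^[j] w = f^[i] w from hij.symm]
              _ = o (n - j + i) := (Function.iterate_add_apply f _ _ _).symm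
          obtain ⟨m, hm, hm2⟩ := ih (n - j + i) (by omega)
          exact ⟨m, hm, h1.trans hm2⟩
    have hsub : Set.range o ⊆ o '' (Set.Iio j) := by
      rintro x ⟨n, rfl⟩
      obtain ⟨m, hm, hm2⟩ := key n
      exact ⟨m, hm, hm2.symm⟩
    exact ((Set.finite_Iio j).image o).subset hsub
  have hrange_closed : IsClosed (Set.range f) := (isCompact_range hf).isClosed
  -- every point other than w is in the range
  have hsub : {w}ᶜ ⊆ Set.range f := by
    intro x hx
    have hx' : x ∈ closure (Set.range o \ {w}) := by
      have h1 : (Set.univ : Set (Set.Iic (omega0 ^ α)))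
          ⊆ closure (Set.range o \ {w}) ∪ {w} := by
        calc (Set.univ : Set (Set.Iic (omega0 ^ α))) = closure (Set.range o) :=
              hw.closure_eq.symm
          _ ⊆ closure ((Set.range o \ {w}) ∪ {w}) := closure_mono (by
              intro y hy; by_cases h : y = w <;> simp [h, hy])
          _ = closure (Set.range o \ {w}) ∪ closure {w} := closure_union
          _ = closure (Set.range o \ {w}) ∪ {w} := by rw [closure_singleton]
      rcases h1 (Set.mem_univ x) with h | h
      · exact h
      · exact absurd h hx
    have h2 : Set.range o \ {w} ⊆ Set.range f := by
      rintro y ⟨⟨n, rfl⟩, hy⟩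
      cases n with
      | zero => exact absurd rfl hy
      | succ k => exact ⟨o k, (Function.iterate_succ_apply' f k w).symm⟩
    exact closure_minimal h2 hrange_closed hx'
  -- w is not in the range
  have hnotw : w ∉ Set.range f := by
    rintro ⟨x, hx⟩
    -- f is surjective
    have hsurj : Function.Surjective f := by
      have horb : Set.range o ⊆ Set.range f := by
        rintro y ⟨n, rfl⟩
        cases n with
        | zero => exact ⟨x, hx⟩
        | succ k => exact ⟨o k, (Function.iterate_succ_apply' f k w).symm⟩
      have huniv : Set.univ ⊆ Set.range f := by
        rw [← hw.closure_eq]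
        exact closure_minimal horb hrange_closed
      exact Set.range_eq_univ.mp (Set.eq_univ_of_univ_subset huniv)
    -- the point 0 is isolated
    have h0mem : (0 : Ordinal) ∈ Set.Iic (omega0 ^ α) := Set.mem_Iic.mpr zero_le
    have hz0 : IsOpen ({(⟨0, h0mem⟩ : Set.Iic (omega0 ^ α))} :
        Set (Set.Iic (omega0 ^ α))) := by
      have heq : ({(⟨0, h0mem⟩ : Set.Iic (omega0 ^ α))} :
          Set (Set.Iic (omega0 ^ α))) = Subtype.val ⁻¹' Set.Iio 1 := by
        ext x
        simp only [Set.mem_singleton_iff, Set.mem_preimage, Set.mem_Iio]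
        constructor
        · rintro rfl; exact zero_lt_one
        · intro h; exact Subtype.ext (Ordinal.lt_one_iff_zero.mp h)
      rw [heq]
      exact isOpen_Iio.preimage continuous_subtype_val
    -- 0 is in the orbit, hence some orbit point is isolated
    obtain ⟨y, hy1, hy2⟩ := hw.inter_open_nonempty _ hz0 ⟨_, rfl⟩
    obtain ⟨n0, rfl⟩ := hy2
    rw [Set.mem_singleton_iff] at hy1
    have hn0 : IsOpen ({o n0} : Set (Set.Iic (omega0 ^ α))) := by
      rw [hy1]; exact hz0
    -- descent: predecessors of isolated orbit points are isolated
    have descent : ∀ n, IsOpen ({o (n+1)} : Set (Set.Iic (omega0 ^ α))) →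
        IsOpen ({o n} : Set (Set.Iic (omega0 ^ α))) := by
      intro n hopen
      have hU : IsOpen (f ⁻¹' {o (n+1)}) := hopen.preimage hf
      have heq : f ⁻¹' {o (n+1)} = {o n} := by
        apply Set.eq_singleton_iff_unique_mem.mpr
        constructor
        · show f (o n) ∈ ({o (n+1)} : Set (Set.Iic (omega0 ^ α)))
          rw [Set.mem_singleton_iff]
          exact (Function.iterate_succ_apply' f n w).symm
        · intro y hyU
          by_contra hne
          have hV : IsOpen (f ⁻¹' {o (n+1)} \ {o n}) := hU.sdiff isClosed_singleton
          obtain ⟨z, hz1, hz2⟩ := hw.inter_open_nonempty _ hV ⟨y, hyU, hne⟩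
          obtain ⟨m, rfl⟩ := hz2
          have hmn : o (m+1) = o (n+1) := by
            have h3 : f (o m) = o (n+1) := hz1.1
            rw [← h3]
            exact Function.iterate_succ_apply' f m w
          have := hinj hmn
          exact hz1.2 (Set.mem_singleton_iff.mpr (by rw [show m = n by omega]))
      rw [← heq]; exact hU
    -- hence w itself is isolated
    have wopen : IsOpen ({w} : Set (Set.Iic (omega0 ^ α))) := by
      have haux : ∀ n, IsOpen ({o n} : Set (Set.Iic (omega0 ^ α))) →
          IsOpen ({o 0} : Set (Set.Iic (omega0 ^ α))) := by
        intro n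
        induction n with
        | zero => exact id
        | succ k ih => exact fun h => ih (descent k h)
      exact haux n0 hn0
    -- w has a preimage, which must be an orbit point, contradiction
    obtain ⟨x', hx'⟩ := hsurj w
    obtain ⟨z, hz1, hz2⟩ := hw.inter_open_nonempty _ (wopen.preimage hf) ⟨x', hx'⟩
    obtain ⟨m, rfl⟩ := hz2
    have hm : o (m+1) = o 0 := by
      have h3 : f (o m) = w := hz1
      rw [show o 0 = w from rfl, ← h3]
      exact Function.iterate_succ_apply' f m w
    exact absurd (hinj hm) (by omega)
  apply Set.Subset.antisymm
  · intro y hy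
    simp only [Set.mem_compl_iff, Set.mem_singleton_iff]
    rintro rfl; exact hnotw hy
  · exact hsub
end

section
/- Let α ≥ 1 be a countable ordinal, let X = ω^α + 1 (realized as Iic(ω^α) with the subspace topology from the order topology on ordinals), and let f : X → X be continuous such that some w ∈ X has dense orbit. Then for every limit point x of X, the preimage f⁻¹({x}) is nonempty and every element of f⁻¹({x}) is a limit point of X. -/
open Set Filter Topology Function

/-! An isolated point `z` lies on the dense orbit, say `z = f^[n] w`. The map `f` sends limit
points to limit points: otherwise the open set `f ⁻¹' {f p}` around a limit point `p` would contain
orbit points at two different times, so the orbit would be eventually periodic, hence finite.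
Thus if `f z` is a limit point, the orbit meets no isolated point after time `n`; but a dense
orbit passes through every isolated point, and `ω ^ α + 1` has infinitely many of them (the
natural numbers). That every limit point is in `range f` is compactness: `range f` is closed and
contains the orbit except possibly `w`. -/

theorem Function.injective_iterate_of_infinite_range {α : Type*} {f : α → α} {x : α}
    (h : (range fun n => f^[n] x).Infinite) : Injective fun n => f^[n] x := by
  intro a b heq
  by_contra hne
  wlog hab : a < b generalizing a b
  · exact this heq.symm (Ne.symm hne) ((not_lt.1 hab).lt_of_ne (Ne.symm hne))
  refine h ?_
  have hper : IsPeriodicPt f (b - a) (f^[a] x) := by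
    rw [IsPeriodicPt, IsFixedPt, ← iterate_add_apply, Nat.sub_add_cancel hab.le]
    exact heq.symm
  refine ((finite_lt_nat b).image fun n => f^[n] x).subset ?_
  rintro _ ⟨n, rfl⟩
  rcases lt_or_ge n a with hn | hn
  · exact ⟨n, hn.trans hab, rfl⟩
  · refine ⟨(n - a) % (b - a) + a, ?_, ?_⟩
    · have := Nat.mod_lt (n - a) (Nat.sub_pos_of_lt hab)
      exact Nat.lt_of_lt_of_le (Nat.add_lt_add_right this a) (by omega)
    · dsimp only
      rw [iterate_add_apply, hper.iterate_mod_apply, ← iterate_add_apply,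
        Nat.sub_add_cancel hn]

theorem Dense.infinite_inter_of_mem_nhds {X : Type*} [TopologicalSpace X] [T1Space X]
    {D U : Set X} {p : X} [(𝓝[≠] p).NeBot] (hD : Dense D) (hU : U ∈ 𝓝 p) :
    (D ∩ U).Infinite := by
  refine Set.Infinite.of_accPt (x := p) (accPt_iff_nhds.2 fun V hV => ?_)
  have hW : (interior (V ∩ U) \ {p}).Nonempty :=
    nonempty_of_mem (sdiff_mem_nhdsWithin_compl (interior_mem_nhds.2 (inter_mem hV hU)) _)
  obtain ⟨y, ⟨hyVU, hyp⟩, hyD⟩ :=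
    hD.inter_open_nonempty _ (isOpen_interior.sdiff isClosed_singleton) hW
  have hyVU := interior_subset hyVU
  exact ⟨y, ⟨hyVU.1, hyD, hyVU.2⟩, hyp⟩

section DenseOrbit

variable {X : Type*} [TopologicalSpace X] {f : X → X} {w : X}

theorem mem_range_of_denseRange_iterate [CompactSpace X] [T2Space X] (hf : Continuous f)
    (hw : DenseRange fun n => f^[n] w) {x : X} (hx : (𝓝[≠] x).NeBot) : x ∈ range f := by
  have hclosed : IsClosed (range f) := (isCompact_range hf).isClosed
  have hcompl : {w}ᶜ ⊆ range f := by
    have horbit : (range fun n => f^[n] w) ⊆ insert w (range f) := by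
      rintro _ ⟨_ | n, rfl⟩
      · exact mem_insert w _
      · exact Or.inr ⟨f^[n] w, (iterate_succ_apply' f n w).symm⟩
    intro y hy
    have hy' : y ∈ insert w (range f) :=
      (isClosed_singleton.union hclosed).closure_subset_iff.2 horbit (hw.closure_range ▸ mem_univ y)
    exact hy'.resolve_left hy
  rcases eq_or_ne x w with rfl | hxw
  · exact hclosed.closure_subset_iff.2 hcompl ((dense_compl_singleton x).closure_eq ▸ mem_univ x)
  · exact hcompl hxw

variable [T1Space X]

theorem neBot_nhdsNE_apply_of_denseRange_iterate (hf : Continuous f)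
    (hw : DenseRange fun n => f^[n] w) {p : X} (hp : (𝓝[≠] p).NeBot) :
    (𝓝[≠] f p).NeBot := by
  by_contra h
  rw [not_neBot, ← isOpen_singleton_iff_punctured_nhds] at h
  have hU : f ⁻¹' {f p} ∈ 𝓝 p := (h.preimage hf).mem_nhds rfl
  have hinf := hw.infinite_inter_of_mem_nhds hU
  obtain ⟨a, ha, b, hb, hab⟩ :=
    (image_preimage_eq_range_inter ▸ hinf).of_image _ |>.nontrivial
  have hcollide : f^[a + 1] w = f^[b + 1] w := by
    simp only [iterate_succ_apply']
    exact ha.trans hb.symm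
  have hinj := injective_iterate_of_infinite_range (hinf.mono inter_subset_left)
  exact hab (Nat.succ_injective (hinj hcollide))

theorem neBot_nhdsNE_of_apply_of_denseRange_iterate (hf : Continuous f)
    (hw : DenseRange fun n => f^[n] w) (hiso : {y : X | IsOpen {y}}.Infinite) {z : X}
    (hz : (𝓝[≠] f z).NeBot) : (𝓝[≠] z).NeBot := by
  by_contra h
  rw [not_neBot, ← isOpen_singleton_iff_punctured_nhds] at h
  obtain ⟨n, hn⟩ := hw.exists_mem_open h (singleton_nonempty z)
  have hlater : ∀ m, (𝓝[≠] f^[m + n + 1] w).NeBot := by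
    intro m
    induction m with
    | zero => simpa [iterate_succ_apply', ← mem_singleton_iff.1 hn] using hz
    | succ m ih =>
      rw [show m + 1 + n + 1 = (m + n + 1) + 1 by omega, iterate_succ_apply']
      exact neBot_nhdsNE_apply_of_denseRange_iterate hf hw ih
  refine hiso (((finite_le_nat n).image fun t => f^[t] w).subset fun y hy => ?_)
  obtain ⟨t, ht⟩ := hw.exists_mem_open hy (singleton_nonempty y)
  refine ⟨t, mem_ofPred.2 (not_lt.1 fun hnt => ?_), ht⟩
  have := hlater (t - n - 1)
  rw [show t - n - 1 + n + 1 = t by omega, mem_singleton_iff.1 ht] at this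
  exact this.ne ((isOpen_singleton_iff_punctured_nhds y).1 hy)

end DenseOrbit

instance compactSpace_Iic {α : Type*} [Preorder α] [OrderBot α] [TopologicalSpace α]
    [CompactIccSpace α] (a : α) : CompactSpace (Iic a) :=
  isCompact_iff_compactSpace.1 (Icc_bot (a := a) ▸ isCompact_Icc)

theorem Ordinal.infinite_setOf_isOpen_singleton_Iic {a : Ordinal} (ha : omega0 ≤ a) :
    {y : Iic a | IsOpen {y}}.Infinite := by
  have hnat (n : ℕ) : (n : Ordinal) ∈ Iic a := (natCast_lt_omega0 n).le.trans ha
  refine infinite_of_injective_forall_mem (f := fun n : ℕ => (⟨n, hnat n⟩ : Iic a))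
    (fun m n h => by simpa using h) fun n => ?_
  have : ({⟨n, hnat n⟩} : Set (Iic a)) = Subtype.val ⁻¹' {(n : Ordinal)} := by
    ext; simp [Subtype.ext_iff]
  rw [mem_ofPred_eq, this]
  exact (SuccOrder.isOpen_singleton_iff.2 (Order.not_isSuccLimit_natCast n)).preimage
    continuous_subtype_val

open Ordinal Topology in
theorem preimage_of_limit_point_general (α : Ordinal) (hα : 1 ≤ α)
    (f : Set.Iic (omega0 ^ α) → Set.Iic (omega0 ^ α)) (hf : Continuous f)
    (w : Set.Iic (omega0 ^ α)) (hw : Dense (Set.range fun n : ℕ => f^[n] w)) :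
    ∀ x : Set.Iic (omega0 ^ α), (𝓝[≠] x).NeBot →
      (f ⁻¹' {x}).Nonempty ∧ ∀ z ∈ f ⁻¹' {x}, (𝓝[≠] z).NeBot := by
  intro x hx
  have hiso := infinite_setOf_isOpen_singleton_Iic (left_le_opow ω (zero_lt_one.trans_le hα))
  refine ⟨mem_range_of_denseRange_iterate hf hw hx, fun z hz => ?_⟩
  exact neBot_nhdsNE_of_apply_of_denseRange_iterate hf hw hiso (mem_singleton_iff.1 hz ▸ hx)

open Ordinal Topology in
/-- Lemma 3.1(iv): For a dynamical system on `ω^α + 1` (realized as `Iic (ω^α)` with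
the order topology), `α ≥ 1` countable, with a dense orbit, every limit point `x` has
nonempty preimage, and every point of the preimage is a limit point. -/
theorem preimage_of_limit_point (α : Ordinal) (hα : 1 ≤ α)
    (hcount : α.card ≤ Cardinal.aleph0)
    (f : Set.Iic (omega0 ^ α) → Set.Iic (omega0 ^ α)) (hf : Continuous f)
    (w : Set.Iic (omega0 ^ α)) (hw : Dense (Set.range fun n : ℕ => f^[n] w)) :
    ∀ x : Set.Iic (omega0 ^ α), (𝓝[≠] x).NeBot →
      (f ⁻¹' {x}).Nonempty ∧ ∀ z ∈ f ⁻¹' {x}, (𝓝[≠] z).NeBot :=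
  preimage_of_limit_point_general α hα f hf w hw
end

section
/- Let X = ω² + 1 (realized as Iic(ω²) with the subspace topology from the order topology on ordinals) and let f : X → X be continuous such that some w ∈ X has dense orbit. Then every element of the Ellis semigroup E(X,f) is a continuous function; in particular, for every free ultrafilter p on ℕ, the p-iterate f^p (the function x ↦ p-lim fⁿ(x)) is continuous. -/
namespace EllisOmega2

open Ordinal Filter Set Function

noncomputable section

universe u

abbrev _root_.Ordinal.IsLimit (o : Ordinal.{u}) : Prop := Order.IsSuccLimit o

lemma _root_.Ordinal.not_succ_isLimit (a : Ordinal.{u}) : ¬ (Order.succ a).IsLimit :=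
  Order.not_isSuccLimit_succ a

lemma _root_.Ordinal.IsLimit.succ_lt {a b : Ordinal.{u}} (h : b.IsLimit) (ha : a < b) :
    Order.succ a < b := Order.IsSuccLimit.succ_lt h ha

lemma isLimit_mul {a b : Ordinal.{u}} (a0 : 0 < a) (l : b.IsLimit) : (a * b).IsLimit :=
  isSuccLimit_mul_right a0 l

lemma isLimit_omega0 : (omega0 : Ordinal.{u}).IsLimit := isSuccLimit_omega0

lemma isLimit_add (a : Ordinal.{u}) {b : Ordinal.{u}} (h : b.IsLimit) : (a + b).IsLimit :=
  isSuccLimit_add a h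

abbrev XX : Type (u+1) := ↥(Set.Iic ((omega0 : Ordinal.{u}) ^ (2 : Ordinal.{u})))

lemma O2_eq : ((omega0 : Ordinal.{u}) ^ (2 : Ordinal)) = omega0 * omega0 := by
  rw [show (2:Ordinal.{u}) = 1 + 1 by norm_num, opow_add, opow_one]

lemma O2_isLimit : ((omega0 : Ordinal.{u}) ^ (2 : Ordinal)).IsLimit := by
  rw [O2_eq]; exact isLimit_mul omega0_pos isLimit_omega0

def tp : XX.{u} := ⟨(omega0 : Ordinal.{u}) ^ (2:Ordinal), Set.mem_Iic.2 le_rfl⟩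

lemma omul_lt (b : ℕ) : (omega0 : Ordinal.{u}) * (b : Ordinal) < omega0 ^ (2:Ordinal) := by
  rw [O2_eq]; exact (mul_lt_mul_iff_right₀ omega0_pos).2 (nat_lt_omega0 b)

lemma omul_le (b : ℕ) : (omega0 : Ordinal.{u}) * (b:Ordinal) ≤ omega0 ^ (2:Ordinal) := (omul_lt b).le

lemma omul_succ_lt (b : ℕ) : (omega0 : Ordinal.{u}) * ((b : Ordinal)+1) < omega0 ^ (2:Ordinal) := by
  have := omul_lt.{u} (b+1); push_cast at this; exact this

lemma omul_succ_le (b : ℕ) : (omega0 : Ordinal.{u}) * ((b:Ordinal)+1) ≤ omega0 ^ (2:Ordinal) :=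
  (omul_succ_lt b).le

lemma lt_O2_bound {o : Ordinal.{u}} (h : o < omega0 ^ (2:Ordinal)) :
    ∃ G : ℕ, o < omega0 * (G:Ordinal) := by
  rw [O2_eq] at h
  have hq : o / omega0 < omega0 := (Ordinal.div_lt omega0_ne_zero).2 h
  obtain ⟨n, hn⟩ := Ordinal.lt_omega0.1 hq
  refine ⟨n+1, ?_⟩
  have h1 : o < omega0 * (o / omega0) + omega0 := by
    conv_lhs => rw [← Ordinal.div_add_mod o omega0]
    exact add_lt_add_right (Ordinal.mod_lt o omega0_ne_zero) _
  calc o < omega0 * (o / omega0) + omega0 := h1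
    _ ≤ omega0 * (n:Ordinal) + omega0 := by
        exact add_le_add_left (mul_le_mul_right (le_of_eq hn) _) _
    _ = omega0 * ((n:Ordinal)+1) := by rw [mul_add_one]
    _ = omega0 * (((n+1):ℕ):Ordinal) := by push_cast; rfl

lemma limit_form {o : Ordinal.{u}} (h1 : o.IsLimit) (h2 : o < omega0 ^ (2:Ordinal)) :
    ∃ c : ℕ, o = omega0 * ((c:Ordinal)+1) := by
  rw [O2_eq] at h2
  have hq : o / omega0 < omega0 := (Ordinal.div_lt omega0_ne_zero).2 h2
  obtain ⟨n, hn⟩ := Ordinal.lt_omega0.1 hq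
  obtain ⟨m, hm⟩ := Ordinal.lt_omega0.1 (Ordinal.mod_lt o omega0_ne_zero)
  have hdm : omega0 * (n:Ordinal) + (m:Ordinal) = o := by
    rw [← hn, ← hm]; exact Ordinal.div_add_mod o omega0
  have hm0 : m = 0 := by
    by_contra h0
    obtain ⟨k, hk⟩ : ∃ k : ℕ, m = k + 1 := ⟨m-1, by omega⟩
    have : o = Order.succ (omega0 * (n:Ordinal) + (k:Ordinal)) := by
      rw [← hdm, hk]
      push_cast
      rw [← add_assoc, Ordinal.add_one_eq_succ]
    exact (Ordinal.not_succ_isLimit _) (this ▸ h1)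
  have ho : o = omega0 * (n : Ordinal) := by rw [← hdm, hm0]; simp
  obtain ⟨c, hc⟩ : ∃ c : ℕ, n = c + 1 := by
    refine ⟨n-1, ?_⟩
    rcases Nat.eq_zero_or_pos n with h | h
    · exfalso; apply h1.1; rw [ho, h]; simp
    · omega
  refine ⟨c, by rw [ho, hc]; push_cast; ring_nf⟩

lemma limit_unique_in_col {c : ℕ} {o : Ordinal.{u}} (h : o.IsLimit)
    (hlt : omega0 * (c:Ordinal) < o) (hle : o ≤ omega0 * ((c:Ordinal)+1)) :
    o = omega0 * ((c:Ordinal)+1) := by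
  rcases eq_or_lt_of_le hle with h1 | h1
  · exact h1
  · obtain ⟨d, hd⟩ := limit_form h (lt_of_lt_of_le h1 (omul_succ_le c))
    exfalso
    rw [hd] at hlt h1
    have hcd : (c:ℕ) < d + 1 := by
      have := (mul_lt_mul_iff_right₀ omega0_pos).1 hlt
      exact_mod_cast this
    have hdc : (d:ℕ) + 1 < c + 1 := by
      have := (mul_lt_mul_iff_right₀ omega0_pos).1 h1
      exact_mod_cast this
    omega

lemma mul_add_one_omega (b : ℕ) :
    (omega0 : Ordinal.{u}) * ((b:Ordinal)+1) = omega0 * (b:Ordinal) + omega0 := by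
  rw [mul_add_one]

/-- initial segments of columns are finite -/
lemma initial_finite {b : ℕ} {δ : Ordinal.{u}} (hδ : δ < omega0 * ((b:Ordinal)+1)) :
    {y : XX.{u} | omega0 * (b:Ordinal) < y.1 ∧ y.1 ≤ δ}.Finite := by
  rcases le_or_gt δ (omega0 * (b:Ordinal)) with h | h
  · apply Set.Finite.subset (Set.finite_empty)
    rintro y ⟨h1, h2⟩
    exact absurd (lt_of_le_of_lt (le_trans h2 h) h1) (lt_irrefl _)
  · -- δ = ω*b + S with S : ℕ
    have hle : omega0 * (b:Ordinal) ≤ δ := h.le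
    have hS : δ - omega0 * (b:Ordinal) < omega0 := by
      rw [← add_lt_add_iff_left (omega0 * (b:Ordinal)), Ordinal.add_sub_cancel_of_le hle]
      rw [mul_add_one_omega b] at hδ; exact hδ
    obtain ⟨S, hSn⟩ := Ordinal.lt_omega0.1 hS
    have hδeq : δ = omega0 * (b:Ordinal) + (S:Ordinal) := by
      rw [← hSn, Ordinal.add_sub_cancel_of_le hle]
    apply Set.Finite.subset ((Set.finite_Iic S).image
      (fun s : ℕ => (⟨min (omega0 * (b:Ordinal) + (s:Ordinal)) (omega0 ^ (2:Ordinal)),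
        Set.mem_Iic.2 (min_le_right _ _)⟩ : XX.{u})))
    rintro y ⟨h1, h2⟩
    have hyle : omega0 * (b:Ordinal) ≤ y.1 := h1.le
    have hy : y.1 - omega0 * (b:Ordinal) < omega0 := by
      rw [← add_lt_add_iff_left (omega0 * (b:Ordinal)), Ordinal.add_sub_cancel_of_le hyle]
      exact lt_of_le_of_lt h2 (by rw [mul_add_one_omega b] at hδ; exact hδ)
    obtain ⟨s, hs⟩ := Ordinal.lt_omega0.1 hy
    have hyeq : y.1 = omega0 * (b:Ordinal) + (s:Ordinal) := by
      rw [← hs, Ordinal.add_sub_cancel_of_le hyle]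
    refine ⟨s, ?_, ?_⟩
    · have : omega0 * (b:Ordinal) + (s:Ordinal) ≤ omega0 * (b:Ordinal) + (S:Ordinal) := by
        rw [← hyeq, ← hδeq]; exact h2
      exact_mod_cast (add_le_add_iff_left _).1 this
    · have hmem : omega0 * (b:Ordinal) + (s:Ordinal) ≤ omega0 ^ (2:Ordinal) := by
        rw [← hyeq]; exact y.2
      exact Subtype.ext (by simp [min_eq_left hmem, hyeq])

lemma limits_le_finite (r : ℕ) :
    {x : XX.{u} | x.1.IsLimit ∧ x.1 ≤ omega0 * (r:Ordinal)}.Finite := by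
  apply Set.Finite.subset ((Set.finite_Iic r).image
    (fun k : ℕ => (⟨min (omega0 * (k:Ordinal)) (omega0 ^ (2:Ordinal)),
      Set.mem_Iic.2 (min_le_right _ _)⟩ : XX.{u})))
  rintro x ⟨h1, h2⟩
  obtain ⟨c, hc⟩ := limit_form h1 (lt_of_le_of_lt h2 (omul_lt r))
  have hcr : c + 1 ≤ r := by
    have : omega0 * ((c:Ordinal)+1) ≤ omega0 * (r:Ordinal) := by rw [← hc]; exact h2
    have := le_of_not_gt fun hlt => by
      have := (mul_lt_mul_iff_right₀ (omega0_pos)).2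
        (show (r:Ordinal) < (c:Ordinal)+1 from hlt)
      exact absurd this (not_lt.2 ‹omega0 * ((c:Ordinal)+1) ≤ omega0 * (r:Ordinal)›)
    exact_mod_cast this
  refine ⟨c+1, hcr, ?_⟩
  have hle2 : (omega0:Ordinal.{u}) * (((c+1):ℕ):Ordinal) ≤ (omega0:Ordinal.{u}) ^ (2:Ordinal) := by
    push_cast; exact omul_succ_le c
  exact Subtype.ext (by simp only [min_eq_left hle2, hc]; push_cast; rfl)

lemma cover {y : Ordinal.{u}} (h0 : y ≠ 0) :
    ∀ G : ℕ, y < omega0 * (G:Ordinal) →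
      ∃ j : ℕ, j < G ∧ omega0 * (j:Ordinal) < y ∧ y ≤ omega0 * ((j:Ordinal)+1) := by
  intro G
  induction G with
  | zero => intro h; rw [Nat.cast_zero, mul_zero] at h; exact absurd h (not_lt_zero (a := y))
  | succ G ih =>
    intro h
    rcases lt_trichotomy y (omega0 * (G:Ordinal)) with h1 | h1 | h1
    · obtain ⟨j, hj, hj2⟩ := ih h1
      exact ⟨j, Nat.lt_succ_of_lt hj, hj2⟩
    · -- y = ω*G, G ≥ 1
      obtain ⟨G', hG'⟩ : ∃ G' : ℕ, G = G' + 1 := by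
        refine ⟨G-1, ?_⟩
        rcases Nat.eq_zero_or_pos G with h2 | h2
        · exfalso; apply h0; rw [h1, h2]; simp
        · omega
      refine ⟨G', by omega, ?_, ?_⟩
      · rw [h1, hG']
        apply (mul_lt_mul_iff_right₀ omega0_pos).2
        exact_mod_cast Nat.lt_succ_self G'
      · rw [h1, hG']; push_cast; exact le_rfl
    · refine ⟨G, Nat.lt_succ_self G, h1, ?_⟩
      have : ((G:Ordinal)+1) = (((G+1):ℕ):Ordinal) := by push_cast; rfl
      rw [this]; exact h.le

lemma add_nat_lt_of_limit {l δ : Ordinal.{u}} (hlim : l.IsLimit) (hδ : δ < l) (k : ℕ) :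
    δ + (k:Ordinal) < l := by
  induction k with
  | zero => simpa
  | succ k ih =>
    have : δ + ((k+1:ℕ):Ordinal) = Order.succ (δ + (k:Ordinal)) := by
      push_cast; rw [← add_assoc, Ordinal.add_one_eq_succ]
    rw [this]; exact hlim.succ_lt ih

/-- tails at a limit contain infinitely many isolated points -/
lemma tail_infinite {l δ : Ordinal.{u}} (hlim : l.IsLimit) (hl : l ≤ omega0 ^ (2:Ordinal))
    (hδ : δ < l) :
    {y : XX.{u} | δ < y.1 ∧ y.1 ≤ l ∧ ¬ y.1.IsLimit}.Infinite := by
  have hmem : ∀ k : ℕ, δ + ((k+1:ℕ):Ordinal) ≤ omega0 ^ (2:Ordinal) :=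
    fun k => le_trans (add_nat_lt_of_limit hlim hδ (k+1)).le hl
  refine Set.infinite_of_injective_forall_mem
    (f := fun k : ℕ => (⟨δ + ((k+1:ℕ):Ordinal), Set.mem_Iic.2 (hmem k)⟩ : XX.{u})) ?_ ?_
  · intro a b hab
    have := congrArg Subtype.val hab
    simp only at this
    have h2 := (add_right_inj δ).1 this
    have h3 : a + 1 = b + 1 := by exact_mod_cast h2
    omega
  · intro k
    refine ⟨?_, (add_nat_lt_of_limit hlim hδ (k+1)).le, ?_⟩
    · have h5 : (0:Ordinal.{u}) < ((k+1:ℕ):Ordinal) := by exact_mod_cast Nat.succ_pos k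
      simpa using (add_lt_add_iff_left δ).2 h5
    · have : δ + ((k+1:ℕ):Ordinal) = Order.succ (δ + (k:Ordinal)) := by
        push_cast; rw [← add_assoc, Ordinal.add_one_eq_succ]
      simp only [this]
      exact Ordinal.not_succ_isLimit _

lemma omega_le_O2 : (omega0:Ordinal.{u}) ≤ omega0 ^ (2:Ordinal) := by
  conv_lhs => rw [← opow_one (omega0:Ordinal.{u})]
  exact opow_le_opow_right omega0_pos (by norm_num)

instance : Infinite XX.{u} := by
  apply Infinite.of_injective
    (fun k : ℕ => (⟨(k:Ordinal), Set.mem_Iic.2 ((nat_lt_omega0 k).le.trans omega_le_O2)⟩ : XX.{u}))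
  intro a b hab
  simp only [Subtype.mk.injEq] at hab
  exact_mod_cast hab
/-- singletons at non-limit points are open -/
lemma isolated_isOpen {x : XX.{u}} (h : ¬ x.1.IsLimit) : IsOpen ({x} : Set XX.{u}) := by
  rcases Ordinal.zero_or_succ_or_isSuccLimit x.1 with h0 | ⟨a, ha⟩ | hl
  · have : ({x} : Set XX.{u}) = Subtype.val ⁻¹' (Set.Iio 1) := by
      ext y
      simp only [Set.mem_singleton_iff, Set.mem_preimage, Set.mem_Iio]
      constructor
      · rintro rfl; rw [h0]; exact zero_lt_one
      · intro hy
        have : y.1 = 0 := by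
          rcases Ordinal.lt_one_iff_zero.1 hy with h; exact h
        exact Subtype.ext (by rw [this, h0])
    rw [this]
    exact (isOpen_Iio).preimage continuous_subtype_val
  · have : ({x} : Set XX.{u}) = Subtype.val ⁻¹' (Set.Ioo a (Order.succ (Order.succ a))) := by
      ext y
      simp only [Set.mem_singleton_iff, Set.mem_preimage, Set.mem_Ioo]
      constructor
      · rintro rfl
        exact ⟨ha ▸ Order.lt_succ a, ha ▸ (Order.lt_succ _)⟩
      · rintro ⟨h1, h2⟩
        have h3 : y.1 ≤ Order.succ a := Order.lt_succ_iff.1 h2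
        have h4 : Order.succ a ≤ y.1 := Order.succ_le_of_lt h1
        exact Subtype.ext (by rw [le_antisymm h3 h4, ha])
    rw [this]
    exact (isOpen_Ioo).preimage continuous_subtype_val
  · exact absurd hl h

/-- neighborhoods of limit points contain Ioc tails -/
lemma nhds_aux {U : Set XX.{u}} (hU : IsOpen U) {x : XX.{u}} (hx : x ∈ U)
    (hl : x.1.IsLimit) :
    ∃ a < x.1, ∀ y : XX.{u}, a < y.1 → y.1 ≤ x.1 → y ∈ U := by
  obtain ⟨V, hV, hVU⟩ := isOpen_induced_iff.1 hU
  have hxV : x.1 ∈ V := by rw [← hVU] at hx; exact hx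
  obtain ⟨a, ha, hIoo⟩ := (Ordinal.isOpen_iff.1 hV) x.1 hxV hl
  refine ⟨a, ha, fun y h1 h2 => ?_⟩
  rw [← hVU]
  rcases eq_or_lt_of_le h2 with h3 | h3
  · show y.1 ∈ V; rw [h3]; exact hxV
  · exact hIoo ⟨h1, h3⟩

/-- subtype Ioc sets are open -/
lemma Ioc_isOpen (a b : Ordinal.{u}) : IsOpen {y : XX.{u} | a < y.1 ∧ y.1 ≤ b} := by
  have : {y : XX.{u} | a < y.1 ∧ y.1 ≤ b} = Subtype.val ⁻¹' (Set.Ioo a (Order.succ b)) := by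
    ext y
    simp only [Set.mem_setOf_eq, Set.mem_preimage, Set.mem_Ioo, Order.lt_succ_iff]
  rw [this]
  exact (isOpen_Ioo).preimage continuous_subtype_val

lemma limitSet_isClosed : IsClosed {y : XX.{u} | y.1.IsLimit} := by
  rw [← isOpen_compl_iff]
  rw [isOpen_iff_forall_mem_open]
  intro x hx
  exact ⟨{x}, by simpa using hx, isolated_isOpen (by simpa using hx), rfl⟩
section Dyn

variable {f : XX.{u} → XX.{u}} {w : XX.{u}}

lemma periodic_contra (hw : Dense (Set.range fun n : ℕ => f^[n] w))
    {a b : ℕ} (hab : a < b) (h : f^[a] w = f^[b] w) : False := by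
  set d := b - a with hd
  have hd0 : 0 < d := by omega
  have hbad : b = a + d := by omega
  have key : ∀ n, n ≥ a + d → f^[n] w = f^[n - d] w := by
    intro n hn
    have hn' : n = (n - (a + d)) + (a + d) := by omega
    rw [hn', iterate_add_apply, ← hbad, ← h, ← iterate_add_apply]
    congr 1
    omega
  have hsub : ∀ n, f^[n] w ∈ (fun m => f^[m] w) '' (Set.Iio (a + d)) := by
    intro n
    induction n using Nat.strong_induction_on with
    | _ n ih =>
      rcases lt_or_ge n (a + d) with h1 | h1
      · exact ⟨n, h1, rfl⟩
      · have h2 := key n h1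
        rw [h2]
        exact ih (n - d) (by omega)
  have hfin : (Set.range fun n : ℕ => f^[n] w).Finite := by
    apply Set.Finite.subset ((Set.finite_Iio (a+d)).image (fun m => f^[m] w))
    rintro y ⟨n, rfl⟩
    exact hsub n
  have hclosed := hfin.isClosed.closure_eq
  rw [hw.closure_eq] at hclosed
  exact Set.infinite_univ (hclosed ▸ hfin)

lemma orbit_inj (hw : Dense (Set.range fun n : ℕ => f^[n] w)) :
    Injective fun n : ℕ => f^[n] w := by
  intro a b hab
  simp only at hab
  by_contra hne
  rcases Ne.lt_or_gt hne with hlt | hlt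
  · exact periodic_contra hw hlt hab
  · exact periodic_contra hw hlt hab.symm

lemma isolated_mem_orbit (hw : Dense (Set.range fun n : ℕ => f^[n] w))
    {x : XX.{u}} (h : ¬ x.1.IsLimit) : ∃ n, f^[n] w = x := by
  obtain ⟨z, hz, hzx⟩ := hw.exists_mem_open (isolated_isOpen h) ⟨x, rfl⟩
  obtain ⟨n, hn⟩ := hz
  simp only at hn
  exact ⟨n, by rw [hn]; exact hzx⟩

lemma visits_infinite (hw : Dense (Set.range fun n : ℕ => f^[n] w))
    {T : Set XX.{u}} (h : {z : XX.{u} | z ∈ T ∧ ¬ z.1.IsLimit}.Infinite) :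
    {n : ℕ | f^[n] w ∈ T}.Infinite := by
  by_contra hfin
  rw [Set.not_infinite] at hfin
  apply h
  apply Set.Finite.subset (hfin.image (fun n => f^[n] w))
  rintro z ⟨hzT, hziso⟩
  obtain ⟨n, hn⟩ := isolated_mem_orbit hw hziso
  exact ⟨n, by simp only [Set.mem_setOf_eq, hn]; exact hzT, hn⟩

lemma maps_limit (hf : Continuous f) (hw : Dense (Set.range fun n : ℕ => f^[n] w))
    {x : XX.{u}} (hx : x.1.IsLimit) : (f x).1.IsLimit := by
  by_contra hiso
  have hopen : IsOpen (f ⁻¹' {f x}) := (isolated_isOpen hiso).preimage hf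
  obtain ⟨a, ha, hIoc⟩ := nhds_aux hopen (by simp) hx
  have h1 : a + 1 < x.1 := by rw [Ordinal.add_one_eq_succ]; exact hx.succ_lt ha
  have h2 : a + 1 + 1 < x.1 := by rw [Ordinal.add_one_eq_succ]; exact hx.succ_lt h1
  set y1 : XX.{u} := ⟨a + 1, Set.mem_Iic.2 (le_trans h1.le (Set.mem_Iic.1 x.2))⟩ with hy1
  set y2 : XX.{u} := ⟨a + 1 + 1, Set.mem_Iic.2 (le_trans h2.le (Set.mem_Iic.1 x.2))⟩ with hy2
  have hy1iso : ¬ y1.1.IsLimit := by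
    show ¬ (a+1).IsLimit
    rw [Ordinal.add_one_eq_succ]; exact Ordinal.not_succ_isLimit a
  have hy2iso : ¬ y2.1.IsLimit := by
    show ¬ (a+1+1).IsLimit
    rw [Ordinal.add_one_eq_succ]; exact Ordinal.not_succ_isLimit _
  obtain ⟨n1, hn1⟩ := isolated_mem_orbit hw hy1iso
  obtain ⟨n2, hn2⟩ := isolated_mem_orbit hw hy2iso
  have hm1 : y1 ∈ f ⁻¹' {f x} := hIoc y1 (lt_add_one a) h1.le
  have hm2 : y2 ∈ f ⁻¹' {f x} := by
    refine hIoc y2 ?_ h2.le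
    calc a < a + 1 := lt_add_one a
      _ < a + 1 + 1 := lt_add_one _
  have hfy : f^[n1 + 1] w = f^[n2 + 1] w := by
    rw [iterate_succ_apply', iterate_succ_apply', hn1, hn2]
    rw [Set.mem_preimage, Set.mem_singleton_iff] at hm1 hm2
    rw [hm1, hm2]
  have := orbit_inj hw hfy
  have hy12 : y1 = y2 := by rw [← hn1, ← hn2]; congr 1; omega
  have : a + 1 = a + 1 + 1 := congrArg Subtype.val hy12
  simpa using this.symm

lemma iterate_limit (hf : Continuous f) (hw : Dense (Set.range fun n : ℕ => f^[n] w))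
    (n : ℕ) {x : XX.{u}} (hx : x.1.IsLimit) : (f^[n] x).1.IsLimit := by
  induction n with
  | zero => simpa
  | succ n ih => rw [iterate_succ_apply']; exact maps_limit hf hw ih

end Dyn
def colS (b : ℕ) : Set XX.{u} :=
  {y | omega0 * (b:Ordinal) < y.1 ∧ y.1 ≤ omega0 * ((b:Ordinal)+1)}

lemma colS_isOpen (b : ℕ) : IsOpen (colS.{u} b) := Ioc_isOpen _ _

lemma colS_limit (b : ℕ) : ((omega0:Ordinal.{u}) * ((b:Ordinal)+1)).IsLimit := by
  rw [mul_add_one_omega]; exact isLimit_add _ isLimit_omega0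

lemma colS_lt (b : ℕ) : (omega0:Ordinal.{u}) * (b:Ordinal) < omega0 * ((b:Ordinal)+1) := by
  rw [mul_add_one_omega]
  conv_lhs => rw [← add_zero ((omega0:Ordinal.{u}) * (b:Ordinal))]
  exact (add_lt_add_iff_left _).2 omega0_pos

lemma colS_top_mem (b : ℕ) :
    (⟨omega0 * ((b:Ordinal)+1), Set.mem_Iic.2 (omul_succ_le b)⟩ : XX.{u}) ∈ colS.{u} b :=
  ⟨colS_lt b, le_rfl⟩

lemma col_mem_unique {b b' : ℕ} {y : XX.{u}} (h : y ∈ colS.{u} b) (h' : y ∈ colS.{u} b') :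
    b = b' := by
  by_contra hne
  have key : ∀ c c' : ℕ, c < c' → y ∈ colS.{u} c → y ∈ colS.{u} c' → False := by
    intro c c' hcc hc hc'
    have h1 : (omega0:Ordinal.{u}) * ((c:Ordinal)+1) ≤ omega0 * (c':Ordinal) := by
      apply mul_le_mul_right
      have : ((c:Ordinal)+1) = (((c+1):ℕ):Ordinal) := by push_cast; rfl
      rw [this]; exact_mod_cast hcc
    exact absurd (lt_of_le_of_lt (le_trans hc.2 h1) hc'.1) (lt_irrefl _)
  rcases Ne.lt_or_gt hne with h1 | h1
  · exact key b b' h1 h h'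
  · exact key b' b h1 h' h

lemma shift_infinite {S : Set ℕ} (h : S.Infinite) : {n : ℕ | n + 1 ∈ S}.Infinite := by
  by_contra hfin
  rw [Set.not_infinite] at hfin
  apply h
  apply Set.Finite.subset (Set.Finite.insert 0 (hfin.image (fun n => n + 1)))
  intro m hm
  cases m with
  | zero => exact Set.mem_insert _ _
  | succ k => exact Set.mem_insert_of_mem _ ⟨k, hm, rfl⟩

lemma exists_infinite_piece {Q : Set XX.{u}} (hQ : Q.Infinite) {G : ℕ}
    (hcov : ∀ y ∈ Q, ∃ j, j < G ∧ y ∈ colS.{u} j) :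
    ∃ j, j < G ∧ (Q ∩ colS.{u} j).Infinite := by
  by_contra hno
  push_neg at hno
  apply hQ
  apply Set.Finite.subset (Set.Finite.biUnion (Set.finite_Iio G)
    (t := fun j => Q ∩ colS.{u} j) (fun j hj => (hno j hj)))
  intro y hy
  obtain ⟨j, hj, hjc⟩ := hcov y hy
  exact Set.mem_biUnion hj ⟨hy, hjc⟩

section Dyn2

variable {f : XX.{u} → XX.{u}} {w : XX.{u}}

lemma orbit_succ_col_infinite (hf : Continuous f)
    (hw : Dense (Set.range fun n : ℕ => f^[n] w)) (b : ℕ) :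
    {n : ℕ | f^[n+1] w ∈ colS.{u} b}.Infinite := by
  have hvis : {n : ℕ | f^[n] w ∈ colS.{u} b}.Infinite := by
    apply visits_infinite hw
    apply Set.Infinite.mono (s := {y : XX.{u} | (omega0 * (b:Ordinal)) < y.1 ∧
      y.1 ≤ omega0 * ((b:Ordinal)+1) ∧ ¬ y.1.IsLimit})
    · rintro y ⟨h1, h2, h3⟩; exact ⟨⟨h1, h2⟩, h3⟩
    · exact tail_infinite (colS_limit b) (omul_succ_le b) (colS_lt b)
  exact shift_infinite hvis

/-- the top point is fixed -/
lemma f_top (hf : Continuous f) (hw : Dense (Set.range fun n : ℕ => f^[n] w)) :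
    f tp.{u} = tp.{u} := by
  by_contra hne
  set ρ := f tp.{u} with hρ
  have hρlim : ρ.1.IsLimit := maps_limit hf hw O2_isLimit
  have hρlt : ρ.1 < omega0 ^ (2:Ordinal) := by
    rcases eq_or_lt_of_le (Set.mem_Iic.1 ρ.2) with h | h
    · exact absurd (Subtype.ext h) hne
    · exact h
  obtain ⟨m, hm⟩ := limit_form hρlim hρlt
  -- continuity at top into column m
  have hopen : IsOpen (f ⁻¹' colS.{u} m) := (colS_isOpen m).preimage hf
  have htpmem : tp.{u} ∈ f ⁻¹' colS.{u} m := by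
    show ρ ∈ colS.{u} m
    exact ⟨by rw [hm]; exact colS_lt m, by rw [hm]⟩
  obtain ⟨γ, hγlt, hγ⟩ := nhds_aux hopen htpmem O2_isLimit
  obtain ⟨G, hG⟩ := lt_O2_bound hγlt
  -- predecessor sets
  set P : ℕ → Set XX.{u} := fun b => (fun n => f^[n] w) '' {n : ℕ | f^[n+1] w ∈ colS.{u} b}
    with hP
  have hPcol : ∀ b, ∀ y ∈ P b, f y ∈ colS.{u} b := by
    rintro b y ⟨n, hn, rfl⟩
    show f (f^[n] w) ∈ colS.{u} b
    rw [← iterate_succ_apply' f n w]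
    exact hn
  have hPinf : ∀ b, (P b).Infinite := fun b =>
    Set.Infinite.image (Set.injOn_of_injective (orbit_inj hw))
      (orbit_succ_col_infinite hf hw b)
  have hPle : ∀ b, b ≠ m → ∀ y ∈ P b, y.1 ≤ γ := by
    intro b hbm y hy
    by_contra hgt
    push_neg at hgt
    have : f y ∈ colS.{u} m := hγ y hgt (Set.mem_Iic.1 y.2)
    exact hbm (col_mem_unique (hPcol b y hy) this)
  -- for b ≠ m, find a column j < G where P b clusters
  have hQ : ∀ b, b ≠ m → ∃ j, j < G ∧ ((P b \ {y : XX.{u} | y.1 = 0}) ∩ colS.{u} j).Infinite := by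
    intro b hbm
    have hzfin : {y : XX.{u} | y.1 = 0}.Finite := by
      apply Set.Finite.subset (Set.finite_singleton ⟨0, Set.mem_Iic.2 zero_le⟩)
      intro y hy
      exact Subtype.ext hy
    apply exists_infinite_piece ((hPinf b).diff hzfin)
    rintro y ⟨hyP, hy0⟩
    have hyγ : y.1 ≤ γ := hPle b hbm y hyP
    obtain ⟨j, hj, h1, h2⟩ := cover (by simpa using hy0) G (lt_of_le_of_lt hyγ hG)
    exact ⟨j, hj, h1, h2⟩
  -- choice of j for each b ≠ m, then pigeonhole
  classical
  set jf : ℕ → ℕ := fun b => if hb : b ≠ m then (hQ b hb).choose else 0 with hjf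
  have hBinf : ({b : ℕ | b ≠ m}).Infinite := by
    have : ({b : ℕ | b ≠ m}) = {m}ᶜ := by ext b; simp [Set.mem_compl_iff]
    rw [this]; exact Set.Finite.infinite_compl (Set.finite_singleton m)
  obtain ⟨b, hb, b', hb', hbb', hjeq⟩ :=
    hBinf.exists_ne_map_eq_of_mapsTo (f := jf)
      (t := Set.Iio G)
      (fun b hb => by
        simp only [hjf]
        rw [dif_pos (show b ≠ m from hb)]
        exact (hQ b hb).choose_spec.1)
      (Set.finite_Iio G)
  set j := jf b with hj
  have hbspec : ((P b \ {y : XX.{u} | y.1 = 0}) ∩ colS.{u} j).Infinite := by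
    have := (hQ b hb).choose_spec.2
    simpa only [hj, hjf, dif_pos (show b ≠ m from hb)] using this
  have hb'spec : ((P b' \ {y : XX.{u} | y.1 = 0}) ∩ colS.{u} j).Infinite := by
    have heq : jf b' = (hQ b' (show b' ≠ m from hb')).choose := by
      simp only [hjf]; rw [dif_pos (show b' ≠ m from hb')]
    have h9 := (hQ b' (show b' ≠ m from hb')).choose_spec.2
    rw [← heq, ← hjeq] at h9
    exact h9
  -- now work at the limit point ω*(j+1)
  set lj : XX.{u} := ⟨omega0 * ((j:Ordinal)+1), Set.mem_Iic.2 (omul_succ_le j)⟩ with hlj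
  have hljlim : lj.1.IsLimit := colS_limit j
  have hρj : (f lj).1.IsLimit := maps_limit hf hw hljlim
  -- helper to pick a far-out point of an infinite piece
  have pick : ∀ {Q : Set XX.{u}}, ((Q ∩ colS.{u} j).Infinite) → ∀ δ < omega0 * ((j:Ordinal)+1),
      ∃ y, y ∈ Q ∧ y ∈ colS.{u} j ∧ δ < y.1 := by
    intro Q hQinf δ hδ
    have hfin := initial_finite (b := j) (δ := δ) hδ
    obtain ⟨y, hy⟩ := (hQinf.diff hfin).nonempty
    rcases hy with ⟨⟨hyQ, hycol⟩, hyni⟩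
    refine ⟨y, hyQ, hycol, ?_⟩
    by_contra hle
    push_neg at hle
    exact hyni ⟨hycol.1, hle⟩
  rcases eq_or_lt_of_le (Set.mem_Iic.1 (f lj).2) with htop | hlt
  · -- f lj = top : use neighborhood above column b
    have hNopen : IsOpen (f ⁻¹' {y : XX.{u} | omega0 * ((b:Ordinal)+1) < y.1 ∧
        y.1 ≤ omega0 ^ (2:Ordinal)}) := (Ioc_isOpen _ _).preimage hf
    have hmem : lj ∈ f ⁻¹' {y : XX.{u} | omega0 * ((b:Ordinal)+1) < y.1 ∧
        y.1 ≤ omega0 ^ (2:Ordinal)} := by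
      refine Set.mem_preimage.2 ⟨?_, Set.mem_Iic.1 (f lj).2⟩
      rw [htop]; exact omul_succ_lt b
    obtain ⟨δ, hδlt, hδ⟩ := nhds_aux hNopen hmem hljlim
    obtain ⟨y, hyQ, hycol, hyδ⟩ := pick hbspec δ hδlt
    have h1 : f y ∈ {y : XX.{u} | omega0 * ((b:Ordinal)+1) < y.1 ∧
        y.1 ≤ omega0 ^ (2:Ordinal)} := hδ y hyδ hycol.2
    have h2 : f y ∈ colS.{u} b := hPcol b y hyQ.1
    exact absurd (lt_of_le_of_lt h2.2 h1.1) (lt_irrefl _)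
  · -- f lj is a limit below top, i.e. top of some column cc
    obtain ⟨cc, hcc⟩ := limit_form hρj hlt
    have hNopen : IsOpen (f ⁻¹' colS.{u} cc) := (colS_isOpen cc).preimage hf
    have hmem : lj ∈ f ⁻¹' colS.{u} cc := by
      refine Set.mem_preimage.2 ⟨?_, ?_⟩
      · rw [hcc]; exact colS_lt cc
      · rw [hcc]
    obtain ⟨δ, hδlt, hδ⟩ := nhds_aux hNopen hmem hljlim
    obtain ⟨y, hyQ, hycol, hyδ⟩ := pick hbspec δ hδlt
    obtain ⟨y', hyQ', hycol', hyδ'⟩ := pick hb'spec δ hδlt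
    have h1 : b = cc := col_mem_unique (hPcol b y hyQ.1) (hδ y hyδ hycol.2)
    have h2 : b' = cc := col_mem_unique (hPcol b' y' hyQ'.1) (hδ y' hyδ' hycol'.2)
    exact hbb' (h1.trans h2.symm)

end Dyn2
section Dyn3

variable {f : XX.{u} → XX.{u}} {w : XX.{u}}

lemma iterate_top (hf : Continuous f) (hw : Dense (Set.range fun n : ℕ => f^[n] w)) (n : ℕ) :
    f^[n] tp.{u} = tp.{u} := by
  induction n with
  | zero => rfl
  | succ n ih => rw [iterate_succ_apply', ih]; exact f_top hf hw

lemma no_cycle (hf : Continuous f) (hw : Dense (Set.range fun n : ℕ => f^[n] w))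
    {x : XX.{u}} (hxlim : x.1.IsLimit) (hxt : x ≠ tp.{u})
    {t : ℕ} (ht : 0 < t) (hcyc : f^[t] x = x) : False := by
  classical
  -- iterates of x along the cycle never hit the top
  have hmult : ∀ k, f^[t*k] x = x := by
    intro k
    induction k with
    | zero => rfl
    | succ k ih => rw [Nat.mul_succ, iterate_add_apply, hcyc, ih]
  have hne_top : ∀ i, f^[i] x ≠ tp.{u} := by
    intro i hi
    apply hxt
    have hik : t * (i+1) = (t*(i+1) - i) + i := by
      have : i < t * (i+1) := by calc i < i + 1 := Nat.lt_succ_self i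
                                      _ ≤ t * (i+1) := Nat.le_mul_of_pos_left _ ht
      omega
    calc x = f^[t*(i+1)] x := (hmult (i+1)).symm
      _ = f^[t*(i+1) - i] (f^[i] x) := by
            conv_lhs => rw [hik]
            rw [iterate_add_apply]
      _ = tp.{u} := by rw [hi]; exact iterate_top hf hw _
  have hlim_i : ∀ i, (f^[i] x).1.IsLimit := fun i => iterate_limit hf hw i hxlim
  have hlt_i : ∀ i, (f^[i] x).1 < omega0 ^ (2:Ordinal) := by
    intro i
    rcases eq_or_lt_of_le (Set.mem_Iic.1 (f^[i] x).2) with h | h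
    · exact absurd (Subtype.ext h) (hne_top i)
    · exact h
  choose c hc using fun i => limit_form (hlim_i i) (hlt_i i)
  have hcol_i : ∀ i, f^[i] x ∈ colS.{u} (c i) := by
    intro i
    refine ⟨?_, (hc i).le⟩
    rw [hc i]; exact colS_lt (c i)
  -- the trap
  set V : ℕ → Set XX.{u} := fun d => Nat.rec (colS.{u} (c 0))
    (fun d' Vd => f ⁻¹' Vd ∩ colS.{u} (c (t - (d'+1)))) d with hV
  have hV0 : V 0 = colS.{u} (c 0) := rfl
  have hVs : ∀ d, V (d+1) = f ⁻¹' (V d) ∩ colS.{u} (c (t - (d+1))) := fun d => rfl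
  have hVopen : ∀ d, IsOpen (V d) := by
    intro d
    induction d with
    | zero => exact colS_isOpen _
    | succ d ih => rw [hVs]; exact ((ih.preimage hf).inter (colS_isOpen _))
  have hVmem : ∀ d, d ≤ t → f^[t - d] x ∈ V d := by
    intro d
    induction d with
    | zero =>
      intro _
      rw [hV0, Nat.sub_zero, hcyc]
      have := hcol_i 0
      simpa using this
    | succ d ih =>
      intro hdt
      rw [hVs]
      refine ⟨?_, hcol_i _⟩
      show f (f^[t - (d+1)] x) ∈ V d
      rw [← iterate_succ_apply' f (t - (d+1)) x]
      have heq : Nat.succ (t - (d+1)) = t - d := by omega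
      rw [heq]
      exact ih (by omega)
  have hVsub : ∀ d, 1 ≤ d → d ≤ t → V d ⊆ colS.{u} (c (t - d)) := by
    intro d h1 h2
    obtain ⟨d', rfl⟩ : ∃ d', d = d' + 1 := ⟨d - 1, by omega⟩
    rw [hVs]
    exact Set.inter_subset_right
  set W : Set XX.{u} := ⋃ d ∈ Set.Icc 1 t, V d with hW
  set K : Set XX.{u} := colS.{u} (c 0) \ V t with hK
  -- K is finite
  obtain ⟨δ, hδlt, hδ⟩ := nhds_aux (hVopen t) (by simpa using hVmem t le_rfl) hxlim
  have hKfin : K.Finite := by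
    apply Set.Finite.subset (initial_finite (b := c 0) (δ := δ) (by rw [← hc 0]; exact hδlt))
    rintro y ⟨hycol, hyV⟩
    refine ⟨hycol.1, ?_⟩
    by_contra hgt
    push_neg at hgt
    refine hyV (hδ y hgt (le_trans hycol.2 ?_))
    rw [← hc 0]
    simp
  -- one step stays in W ∪ K
  have hstep : ∀ y ∈ W, f y ∈ W ∪ K := by
    intro y hy
    simp only [hW, Set.mem_iUnion] at hy
    obtain ⟨d, hd, hyd⟩ := hy
    have hd1 : 1 ≤ d := hd.1
    have hd2 : d ≤ t := hd.2
    obtain ⟨d', rfl⟩ : ∃ d', d = d' + 1 := ⟨d - 1, by omega⟩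
    have h1 : f y ∈ V d' := by
      rw [hVs] at hyd
      exact hyd.1
    rcases Nat.eq_zero_or_pos d' with h2 | h2
    · subst h2
      rw [hV0] at h1
      rcases Classical.em (f y ∈ V t) with h3 | h3
      · left
        simp only [hW, Set.mem_iUnion]
        exact ⟨t, ⟨(by omega : 1 ≤ t), le_rfl⟩, h3⟩
      · right
        exact ⟨h1, h3⟩
    · left
      simp only [hW, Set.mem_iUnion]
      exact ⟨d', ⟨h2, by omega⟩, h1⟩
  -- times the orbit is in K are finitely many and bounded
  have hbadfin : {n : ℕ | f^[n] w ∈ K}.Finite := by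
    have : {n : ℕ | f^[n] w ∈ K} = (fun n => f^[n] w) ⁻¹' K := rfl
    rw [this]
    exact Set.Finite.preimage (Set.injOn_of_injective (orbit_inj hw)) hKfin
  obtain ⟨N₀, hN₀⟩ := hbadfin.bddAbove
  -- the orbit enters V t beyond any bound
  have hentinf : {n : ℕ | f^[n] w ∈ V t}.Infinite := by
    apply visits_infinite hw
    apply Set.Infinite.mono (s := {y : XX.{u} | δ < y.1 ∧ y.1 ≤ x.1 ∧ ¬ y.1.IsLimit})
    · rintro y ⟨h1, h2, h3⟩
      exact ⟨hδ y h1 h2, h3⟩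
    · exact tail_infinite hxlim (Set.mem_Iic.1 x.2) hδlt
  obtain ⟨sstar, hsmem, hsgt⟩ : ∃ s, s ∈ {n : ℕ | f^[n] w ∈ V t} ∧ N₀ < s := by
    by_contra hcon
    push_neg at hcon
    apply hentinf
    apply Set.Finite.subset (Set.finite_Iic N₀)
    intro n hn
    exact hcon n hn
  -- trapped forever
  have htrap : ∀ d, f^[sstar + d] w ∈ W := by
    intro d
    induction d with
    | zero =>
      simp only [hW, Set.mem_iUnion, Nat.add_zero]
      exact ⟨t, ⟨ht, le_rfl⟩, hsmem⟩
    | succ d ih =>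
      have h1 : f^[sstar + (d+1)] w = f (f^[sstar + d] w) :=
        iterate_succ_apply' f (sstar + d) w
      rw [h1]
      rcases hstep _ ih with h2 | h2
      · exact h2
      · exfalso
        have : sstar + d + 1 ∈ {n : ℕ | f^[n] w ∈ K} := by
          show f^[sstar + d + 1] w ∈ K
          rw [show sstar + d + 1 = sstar + (d+1) by omega, h1]
          exact h2
        have := hN₀ this
        omega
  -- W is bounded by ω*M
  set M : ℕ := (Finset.range (t+1)).sup (fun i => c i + 1) with hM
  have hWbound : ∀ y ∈ W, y.1 ≤ omega0 * (M:Ordinal) := by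
    intro y hy
    simp only [hW, Set.mem_iUnion] at hy
    obtain ⟨d, hd, hyd⟩ := hy
    have h1 := hVsub d hd.1 hd.2 hyd
    have h2 : c (t - d) + 1 ≤ M := by
      apply Finset.le_sup (f := fun i => c i + 1)
      rw [Finset.mem_range]
      omega
    calc y.1 ≤ omega0 * ((c (t-d) : Ordinal) + 1) := h1.2
      _ = omega0 * (((c (t-d) + 1 : ℕ)) : Ordinal) := by push_cast; rfl
      _ ≤ omega0 * (M : Ordinal) := mul_le_mul_right (by exact_mod_cast h2) _
  -- produce a fresh isolated point above ω*M reached after time sstar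
  have hzle : ∀ k : ℕ, omega0 * (M:Ordinal) + ((k+1:ℕ):Ordinal) ≤ omega0 ^ (2:Ordinal) := by
    intro k
    have h1 : omega0 * (M:Ordinal) + ((k+1:ℕ):Ordinal) < omega0 * ((M:Ordinal)+1) := by
      rw [mul_add_one_omega]
      exact (add_lt_add_iff_left _).2 (nat_lt_omega0 (k+1))
    exact le_trans h1.le (omul_succ_le M)
  set zz : ℕ → XX.{u} := fun k => ⟨omega0 * (M:Ordinal) + ((k+1:ℕ):Ordinal),
    Set.mem_Iic.2 (hzle k)⟩ with hzz
  have hzzinj : Injective zz := by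
    intro a b hab
    simp only [hzz, Subtype.mk.injEq] at hab
    have := (add_right_inj _).1 hab
    have : a + 1 = b + 1 := by exact_mod_cast this
    omega
  have hbadkfin : (zz ⁻¹' ((fun n => f^[n] w) '' (Set.Iic sstar))).Finite :=
    Set.Finite.preimage (Set.injOn_of_injective hzzinj)
      ((Set.finite_Iic sstar).image _)
  obtain ⟨k, hk⟩ := (hbadkfin.infinite_compl).nonempty
  have hziso : ¬ (zz k).1.IsLimit := by
    show ¬ (omega0 * (M:Ordinal) + ((k+1:ℕ):Ordinal)).IsLimit
    have : omega0 * (M:Ordinal) + ((k+1:ℕ):Ordinal)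
        = Order.succ (omega0 * (M:Ordinal) + (k:Ordinal)) := by
      push_cast; rw [← add_assoc, Ordinal.add_one_eq_succ]
    rw [this]
    exact Ordinal.not_succ_isLimit _
  obtain ⟨nz, hnz⟩ := isolated_mem_orbit hw hziso
  have hnzgt : sstar < nz := by
    by_contra hle
    push_neg at hle
    apply hk
    exact ⟨nz, Set.mem_Iic.2 hle, hnz⟩
  have hzW : zz k ∈ W := by
    have : nz = sstar + (nz - sstar) := by omega
    rw [← hnz, this]
    exact htrap _
  have := hWbound _ hzW
  have hgt : omega0 * (M:Ordinal) < (zz k).1 := by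
    show omega0 * (M:Ordinal) < omega0 * (M:Ordinal) + ((k+1:ℕ):Ordinal)
    conv_lhs => rw [← add_zero (omega0 * (M:Ordinal))]
    exact (add_lt_add_iff_left _).2 (by exact_mod_cast Nat.succ_pos k)
  exact absurd (lt_of_le_of_lt this hgt) (lt_irrefl _)

end Dyn3
lemma pmem_infinite {p : Ultrafilter ℕ} (hp : (p : Filter ℕ) ≤ Filter.cofinite)
    {S : Set ℕ} (hS : S ∈ p) : S.Infinite := by
  by_contra hfin
  rw [Set.not_infinite] at hfin
  have h1 : Sᶜ ∈ (p : Filter ℕ) := Filter.le_def.1 hp _ (Set.Finite.compl_mem_cofinite hfin)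
  have h2 := Filter.inter_mem hS h1
  rw [Set.inter_compl_self] at h2
  exact Filter.empty_notMem (p : Filter ℕ) h2

lemma cycle_from_two {f : XX.{u} → XX.{u}} {x v : XX.{u}} {a b : ℕ} (hab : a < b)
    (ha : f^[a] x = v) (hb : f^[b] x = v) : f^[b - a] v = v := by
  have h1 : b = (b - a) + a := by omega
  rw [← ha, ← iterate_add_apply, ← h1, hb]
  exact ha.symm

section Main

variable {f : XX.{u} → XX.{u}} {w : XX.{u}}

lemma main_continuous (hf : Continuous f) (hw : Dense (Set.range fun n : ℕ => f^[n] w))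
    (p : Ultrafilter ℕ) (hp : (p : Filter ℕ) ≤ Filter.cofinite)
    (g : XX.{u} → XX.{u})
    (hg : ∀ x, Tendsto (fun n : ℕ => f^[n] x) (p : Filter ℕ) (nhds (g x))) :
    Continuous g := by
  classical
  -- every limit point is sent to the top
  have hglim : ∀ x : XX.{u}, x.1.IsLimit → g x = tp.{u} := by
    intro x hx
    have hval : (g x).1.IsLimit :=
      limitSet_isClosed.mem_of_tendsto (hg x)
        (Filter.Eventually.of_forall (fun n => iterate_limit hf hw n hx))
    by_contra hne
    have hlt : (g x).1 < omega0 ^ (2:Ordinal) := by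
      rcases eq_or_lt_of_le (Set.mem_Iic.1 (g x).2) with h | h
      · exact absurd (Subtype.ext h) hne
      · exact h
    obtain ⟨c, hc⟩ := limit_form hval hlt
    have hN : colS.{u} c ∈ nhds (g x) :=
      (colS_isOpen c).mem_nhds ⟨by rw [hc]; exact colS_lt c, hc.le⟩
    have hsub : {n : ℕ | f^[n] x ∈ colS.{u} c} ⊆ {n : ℕ | f^[n] x = g x} := by
      intro n hn
      have hl := iterate_limit hf hw n hx
      have := limit_unique_in_col hl hn.1 hn.2
      exact Subtype.ext (this.trans hc.symm)
    have hinf := pmem_infinite hp (Filter.mem_of_superset (hg x hN) hsub)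
    obtain ⟨a, ha, b, hb, hab⟩ := hinf.nontrivial
    have key : ∀ a' b' : ℕ, a' < b' → f^[a'] x = g x → f^[b'] x = g x → False := by
      intro a' b' h1 h2 h3
      exact no_cycle hf hw hval hne (t := b' - a') (by omega) (cycle_from_two h1 h2 h3)
    rcases Ne.lt_or_gt hab with h1 | h1
    · exact key a b h1 ha hb
    · exact key b a h1 hb ha
  -- the image of the base point is a limit point
  have hgw : (g w).1.IsLimit := by
    by_contra hiso
    have hN : ({g w} : Set XX.{u}) ∈ nhds (g w) := (isolated_isOpen hiso).mem_nhds rfl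
    have hinf := pmem_infinite hp (hg w hN)
    obtain ⟨a, ha, b, hb, hab⟩ := hinf.nontrivial
    apply hab
    apply orbit_inj hw
    show f^[a] w = f^[b] w
    rw [show f^[a] w = g w from ha, show f^[b] w = g w from hb]
  -- g commutes with f
  have hcomm : ∀ x, g (f x) = f (g x) := by
    intro x
    have h1 : Tendsto (fun n => f^[n] (f x)) (p : Filter ℕ) (nhds (g (f x))) := hg (f x)
    have h2 : Tendsto (fun n => f^[n] (f x)) (p : Filter ℕ) (nhds (f (g x))) := by
      have h3 : Tendsto (fun n => f (f^[n] x)) (p : Filter ℕ) (nhds (f (g x))) :=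
        (hf.tendsto (g x)).comp (hg x)
      have h4 : (fun n : ℕ => f^[n] (f x)) = fun n : ℕ => f (f^[n] x) := by
        funext n
        rw [← iterate_succ_apply, iterate_succ_apply']
      rw [h4]
      exact h3
    exact tendsto_nhds_unique h1 h2
  have horb : ∀ j : ℕ, g (f^[j] w) = f^[j] (g w) := by
    intro j
    induction j with
    | zero => rfl
    | succ j ih => rw [iterate_succ_apply', iterate_succ_apply', hcomm, ih]
  -- for each r only finitely many points are not sent above ω·r
  have hJ : ∀ r : ℕ, {j : ℕ | (f^[j] (g w)).1 ≤ omega0 * (r:Ordinal)}.Finite := by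
    intro r
    by_contra hinf
    have hinf' : Set.Infinite {j : ℕ | (f^[j] (g w)).1 ≤ omega0 * (r:Ordinal)} := hinf
    have hmap : Set.MapsTo (fun j => f^[j] (g w))
        {j : ℕ | (f^[j] (g w)).1 ≤ omega0 * (r:Ordinal)}
        {x : XX.{u} | x.1.IsLimit ∧ x.1 ≤ omega0 * (r:Ordinal)} :=
      fun j hj => ⟨iterate_limit hf hw j hgw, hj⟩
    obtain ⟨a, ha, b, hb, hab, heq⟩ :=
      hinf'.exists_ne_map_eq_of_mapsTo hmap (limits_le_finite r)
    have key : ∀ a' b' : ℕ, a' < b' → (f^[a'] (g w)).1 ≤ omega0 * (r:Ordinal) →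
        f^[a'] (g w) = f^[b'] (g w) → False := by
      intro a' b' h1 hle h2
      set v := f^[a'] (g w) with hv
      have hvlim : v.1.IsLimit := iterate_limit hf hw a' hgw
      have hvne : v ≠ tp.{u} := by
        intro hveq
        rw [hveq] at hle
        exact absurd hle (not_le.2 (omul_lt r))
      exact no_cycle hf hw hvlim hvne (t := b' - a') (by omega)
        (cycle_from_two h1 rfl h2.symm)
    rcases Ne.lt_or_gt hab with h1 | h1
    · exact key a b h1 ha heq
    · exact key b a h1 hb heq.symm
  have hDr : ∀ r : ℕ, {x : XX.{u} | (g x).1 ≤ omega0 * (r:Ordinal)}.Finite := by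
    intro r
    apply Set.Finite.subset ((hJ r).image (fun j => f^[j] w))
    intro x hx
    simp only [Set.mem_setOf_eq] at hx
    rcases Classical.em x.1.IsLimit with hl | hl
    · exfalso
      have h1 : (g x).1 = omega0 ^ (2:Ordinal) := by rw [hglim x hl]; rfl
      rw [h1] at hx
      exact absurd hx (not_le.2 (omul_lt r))
    · obtain ⟨n, hn⟩ := isolated_mem_orbit hw hl
      refine ⟨n, ?_, hn⟩
      show (f^[n] (g w)).1 ≤ omega0 * (r:Ordinal)
      rw [← horb n, hn]
      exact hx
  -- continuity
  rw [continuous_iff_continuousAt]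
  intro x
  rcases Classical.em x.1.IsLimit with hl | hl
  · unfold ContinuousAt
    rw [hglim x hl]
    intro s hs
    rw [Filter.mem_map]
    obtain ⟨O, hOs, hOopen, hOtp⟩ := mem_nhds_iff.1 hs
    obtain ⟨γ, hγlt, hγ⟩ := nhds_aux hOopen hOtp O2_isLimit
    obtain ⟨r, hr⟩ := lt_O2_bound hγlt
    have hxmem : x ∈ {y : XX.{u} | (g y).1 ≤ omega0 * (r:Ordinal)}ᶜ := by
      simp only [Set.mem_compl_iff, Set.mem_setOf_eq, not_le, hglim x hl]
      exact omul_lt r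
    have hU : {y : XX.{u} | (g y).1 ≤ omega0 * (r:Ordinal)}ᶜ ∈ nhds x :=
      ((hDr r).isClosed.isOpen_compl).mem_nhds hxmem
    apply Filter.mem_of_superset hU
    intro u hu
    simp only [Set.mem_compl_iff, Set.mem_setOf_eq, not_le] at hu
    apply hOs
    exact hγ (g u) (lt_trans hr hu) (Set.mem_Iic.1 (g u).2)
  · have hsing : nhds x ≤ pure x := Filter.le_pure_iff.2 ((isolated_isOpen hl).mem_nhds rfl)
    exact (tendsto_pure_left.mpr (fun s hs => mem_of_mem_nhds hs)).mono_left hsing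

end Main
end
end EllisOmega2

open Ordinal Filter in
/-- Theorem 3.3 (continuity part): For a dynamical system on `ω² + 1` (realized as
`Iic (ω²)` with the order topology) with a dense orbit, every element of the Ellis
semigroup is continuous; in particular, for every free ultrafilter `p` on `ℕ`, the
`p`-iterate `f^p` is continuous. -/
theorem ellis_all_continuous_omega_sq
    (f : Set.Iic (omega0 ^ (2 : Ordinal)) → Set.Iic (omega0 ^ (2 : Ordinal)))
    (hf : Continuous f)
    (w : Set.Iic (omega0 ^ (2 : Ordinal)))
    (hw : Dense (Set.range fun n : ℕ => f^[n] w)) :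
    (∀ g ∈ closure {g : Set.Iic (omega0 ^ (2 : Ordinal)) →
        Set.Iic (omega0 ^ (2 : Ordinal)) | ∃ n : ℕ, g = f^[n]}, Continuous g) ∧
      ∀ p : Ultrafilter ℕ, (p : Filter ℕ) ≤ Filter.cofinite →
        ∀ g : Set.Iic (omega0 ^ (2 : Ordinal)) → Set.Iic (omega0 ^ (2 : Ordinal)),
          (∀ x, Tendsto (fun n : ℕ => f^[n] x) (p : Filter ℕ) (nhds (g x))) →
          Continuous g := by
  constructor
  · intro g hg
    have hSr : {g : Set.Iic (omega0 ^ (2 : Ordinal)) →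
        Set.Iic (omega0 ^ (2 : Ordinal)) | ∃ n : ℕ, g = f^[n]}
        = Set.range (fun n : ℕ => f^[n]) := by
      ext h
      simp only [Set.mem_setOf_eq, Set.mem_range]
      constructor
      · rintro ⟨n, rfl⟩; exact ⟨n, rfl⟩
      · rintro ⟨n, rfl⟩; exact ⟨n, rfl⟩
    rw [hSr] at hg
    obtain ⟨uf, hmem, hle⟩ := mem_closure_iff_ultrafilter.1 hg
    have hFinj : Function.Injective (fun n : ℕ => f^[n]) := by
      intro a b hab
      exact EllisOmega2.orbit_inj hw (congrFun hab w)
    set p := uf.comap hFinj hmem with hpdef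
    have hTF : Tendsto (fun n : ℕ => f^[n]) (p : Filter ℕ) (nhds g) := by
      show Filter.map _ (p : Filter ℕ) ≤ nhds g
      rw [hpdef, Ultrafilter.coe_comap, Filter.map_comap_of_mem hmem]
      exact hle
    have hptw : ∀ x, Tendsto (fun n : ℕ => f^[n] x) (p : Filter ℕ) (nhds (g x)) :=
      fun x => ((continuous_apply x).tendsto g).comp hTF
    by_cases hp : (p : Filter ℕ) ≤ Filter.cofinite
    · exact EllisOmega2.main_continuous hf hw p hp g hptw
    · have hpure : ∃ n, p = pure n := by
        rw [Filter.le_def] at hp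
        push_neg at hp
        obtain ⟨s, hs, hsp⟩ := hp
        have h1 : sᶜ ∈ p := Ultrafilter.compl_mem_iff_notMem.2 hsp
        obtain ⟨a, _, ha⟩ := Ultrafilter.eq_pure_of_finite_mem (Filter.mem_cofinite.1 hs) h1
        exact ⟨a, ha⟩
      obtain ⟨n, hn⟩ := hpure
      rw [hn] at hTF
      have h3 : Tendsto (fun n : ℕ => f^[n]) ((pure n : Ultrafilter ℕ) : Filter ℕ)
          (nhds (f^[n])) := by
        have : ((pure n : Ultrafilter ℕ) : Filter ℕ) = (pure n : Filter ℕ) := rfl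
        rw [this]
        exact tendsto_pure_left.mpr (fun s hs => mem_of_mem_nhds hs)
      have hgeq : g = f^[n] := tendsto_nhds_unique hTF h3
      rw [hgeq]
      exact hf.iterate n
  · intro p hp g hg
    exact EllisOmega2.main_continuous hf hw p hp g hg
end

section
/- There exist a family (A_k)_{k ∈ ℕ} of pairwise disjoint infinite subsets of ℕ and a function h : ℕ → ℕ that maps ⋃_k A_k into ⋃_k A_k and is injective on ⋃_k A_k, such that: (1) for every finite subset F of A_{2k+2} there is a finite subset E of A_{2k} with h[A_{2k} \ E] ⊆ A_{2k+2} \ F; (2) for every finite subset F of A_{2k+1} there is a finite subset E of A_{2k+3} with h[A_{2k+3} \ E] ⊆ A_{2k+1} \ F; (3) for every finite subset E of A₀ there is a finite subset H of A₁ with h[A₁ \ H] ⊆ A₀ \ E; and (4) there exists x₀ ∈ A₀ whose orbit under h, namely {hⁿ(x₀) : n ∈ ℕ}, equals ⋃_k A_k. -/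
/-!
Take `h = succ`, `x₀ = 0` and `A k = zigzag ⁻¹' {k}` for a colouring `zigzag` of `ℕ`. Cut `ℕ` into
consecutive blocks of lengths `2, 4, 6, …`; block `m` is coloured `0, 2, …, 2m, 2m+1, 2m-1, …, 1`.
Then after colour `2k` comes `2k+2` except once (at the top of block `k`), after `2k+3` always comes
`2k+1`, after `1` always comes `0`, and every colour occurs in all but finitely many blocks.
-/

open Set Function

theorem exists_finite_diff_image_subset {α β : Type*} {f : α → β} (hf : Injective f)
    {s : Set α} {t F : Set β} (hst : {x ∈ s | f x ∉ t}.Finite) (hF : F.Finite) :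
    ∃ E ⊆ s, E.Finite ∧ f '' (s \ E) ⊆ t \ F := by
  refine ⟨{x ∈ s | f x ∉ t} ∪ (s ∩ f ⁻¹' F), union_subset (sep_subset _ _) inter_subset_left,
    hst.union ((hF.preimage hf.injOn).inter_of_right s), ?_⟩
  rintro _ ⟨x, ⟨hxs, hxE⟩, rfl⟩
  exact ⟨by_contra fun h => hxE (Or.inl ⟨hxs, h⟩), fun h => hxE (Or.inr ⟨hxs, h⟩)⟩

/-- Block `m` is `[m * (m + 1), (m + 1) * (m + 2))`. -/
def blockIndex (n : ℕ) : ℕ := Nat.findGreatest (fun m => m * (m + 1) ≤ n) n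

def blockColour (m i : ℕ) : ℕ := if i ≤ m then 2 * i else 4 * m + 3 - 2 * i

def zigzag (n : ℕ) : ℕ := blockColour (blockIndex n) (n - blockIndex n * (blockIndex n + 1))

theorem blockIndex_block_add {m i : ℕ} (hi : i ≤ 2 * m + 1) :
    blockIndex (m * (m + 1) + i) = m := by
  refine Nat.findGreatest_eq_iff.2 ⟨by nlinarith, fun _ => by omega, fun n hmn _ hn => ?_⟩
  have : (m + 1) * (m + 2) ≤ n * (n + 1) := Nat.mul_le_mul hmn (by omega)
  nlinarith

theorem exists_eq_block_add (n : ℕ) : ∃ m i, i ≤ 2 * m + 1 ∧ n = m * (m + 1) + i := by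
  set m := blockIndex n
  have hm : m * (m + 1) ≤ n :=
    Nat.findGreatest_spec (P := fun m => m * (m + 1) ≤ n) (Nat.zero_le n) (by simp)
  have hlt : n < (m + 1) * (m + 2) := by
    by_contra! h
    have : m + 1 ≤ m :=
      Nat.le_findGreatest (P := fun m => m * (m + 1) ≤ n) (by nlinarith) (by simpa using h)
    omega
  have : (m + 1) * (m + 2) = m * (m + 1) + 2 * m + 2 := by ring
  exact ⟨m, n - m * (m + 1), by omega, by omega⟩

theorem zigzag_block_add {m i : ℕ} (hi : i ≤ 2 * m + 1) :
    zigzag (m * (m + 1) + i) = blockColour m i := by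
  rw [zigzag, blockIndex_block_add hi, Nat.add_sub_cancel_left]

theorem zigzag_block_add_succ {m i : ℕ} (hi : i ≤ 2 * m + 1) :
    zigzag (m * (m + 1) + i + 1) = if i = 2 * m + 1 then 0 else blockColour m (i + 1) := by
  split_ifs with h
  · have : m * (m + 1) + i + 1 = (m + 1) * (m + 1 + 1) + 0 := by subst h; ring
    rw [this, zigzag_block_add (by omega), blockColour, if_pos (Nat.zero_le _), mul_zero]
  · rw [add_assoc]
    exact zigzag_block_add (by omega)

theorem zigzag_succ_of_eq_even {n k : ℕ} (h : zigzag n = 2 * k) (hn : n ≠ k * (k + 1) + k) :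
    zigzag (n + 1) = 2 * k + 2 := by
  obtain ⟨m, i, hi, rfl⟩ := exists_eq_block_add n
  rw [zigzag_block_add hi, blockColour] at h
  rw [zigzag_block_add_succ hi, blockColour]
  obtain ⟨him, rfl⟩ : i ≤ m ∧ i = k := by
    split_ifs at h with him
    · exact ⟨him, by omega⟩
    · omega
  have him' : i ≠ m := by rintro rfl; exact hn rfl
  clear h hn
  split_ifs <;> omega

theorem zigzag_succ_of_eq_odd {n k : ℕ} (h : zigzag n = 2 * k + 3) :
    zigzag (n + 1) = 2 * k + 1 := by
  obtain ⟨m, i, hi, rfl⟩ := exists_eq_block_add n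
  rw [zigzag_block_add hi, blockColour] at h
  rw [zigzag_block_add_succ hi, blockColour]
  split_ifs at h ⊢ <;> omega

theorem zigzag_succ_of_eq_one {n : ℕ} (h : zigzag n = 1) : zigzag (n + 1) = 0 := by
  obtain ⟨m, i, hi, rfl⟩ := exists_eq_block_add n
  rw [zigzag_block_add hi, blockColour] at h
  rw [zigzag_block_add_succ hi, blockColour]
  split_ifs at h ⊢ <;> omega

theorem exists_blockColour_eq {k m : ℕ} (hkm : k ≤ m) : ∃ i ≤ 2 * m + 1, blockColour m i = k := by
  obtain ⟨j, rfl | rfl⟩ := Nat.even_or_odd' k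
  · exact ⟨j, by omega, by rw [blockColour, if_pos (by omega)]⟩
  · exact ⟨2 * m + 1 - j, by omega, by rw [blockColour, if_neg (by omega)]; omega⟩

theorem zigzag_preimage_singleton_infinite (k : ℕ) : (zigzag ⁻¹' {k}).Infinite := by
  refine infinite_of_forall_exists_gt fun a => ?_
  obtain ⟨i, hi, hik⟩ := exists_blockColour_eq (show k ≤ a + k + 1 by omega)
  refine ⟨(a + k + 1) * (a + k + 1 + 1) + i, by rw [mem_preimage, zigzag_block_add hi, hik]; rfl, ?_⟩
  nlinarith

/-- Lemma 4.1: There are a family `(A k)` of pairwise disjoint infinite subsets of `ℕ`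
and a function `h : ℕ → ℕ` mapping `⋃ k, A k` into itself, injective on `⋃ k, A k`,
satisfying the almost-mapping conditions (1)–(3) and having a point `x₀ ∈ A 0` whose
orbit under `h` is exactly `⋃ k, A k`. -/
theorem exists_disjoint_family_and_map :
    ∃ (A : ℕ → Set ℕ) (h : ℕ → ℕ),
      Pairwise (Function.onFun Disjoint A) ∧
      (∀ k, (A k).Infinite) ∧
      Set.MapsTo h (⋃ k, A k) (⋃ k, A k) ∧
      Set.InjOn h (⋃ k, A k) ∧
      (∀ k : ℕ, ∀ F ⊆ A (2 * k + 2), F.Finite →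
        ∃ E ⊆ A (2 * k), E.Finite ∧ h '' (A (2 * k) \ E) ⊆ A (2 * k + 2) \ F) ∧
      (∀ k : ℕ, ∀ F ⊆ A (2 * k + 1), F.Finite →
        ∃ E ⊆ A (2 * k + 3), E.Finite ∧ h '' (A (2 * k + 3) \ E) ⊆ A (2 * k + 1) \ F) ∧
      (∀ E ⊆ A 0, E.Finite →
        ∃ H ⊆ A 1, H.Finite ∧ h '' (A 1 \ H) ⊆ A 0 \ E) ∧
      (∃ x₀ ∈ A 0, (Set.range fun n : ℕ => h^[n] x₀) = ⋃ k, A k) := by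
  have hunion : ⋃ k, zigzag ⁻¹' {k} = univ := eq_univ_of_forall fun n => mem_iUnion.2 ⟨_, rfl⟩
  refine ⟨fun k => zigzag ⁻¹' {k}, Nat.succ, pairwise_disjoint_fiber zigzag,
    zigzag_preimage_singleton_infinite, hunion ▸ mapsTo_univ _ _, Nat.succ_injective.injOn,
    fun k F _ hF => exists_finite_diff_image_subset Nat.succ_injective ?_ hF,
    fun k F _ hF => exists_finite_diff_image_subset Nat.succ_injective ?_ hF,
    fun E _ hE => exists_finite_diff_image_subset Nat.succ_injective ?_ hE, ⟨0, rfl, ?_⟩⟩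
  · refine (finite_singleton (k * (k + 1) + k)).subset fun n ⟨hn, hsucc⟩ => ?_
    by_contra hne
    exact hsucc (zigzag_succ_of_eq_even hn hne)
  · convert finite_empty
    exact eq_empty_of_forall_notMem fun n ⟨hn, hsucc⟩ => hsucc (zigzag_succ_of_eq_odd hn)
  · convert finite_empty
    exact eq_empty_of_forall_notMem fun n ⟨hn, hsucc⟩ => hsucc (zigzag_succ_of_eq_one hn)
  · rw [hunion, eq_univ_iff_forall]
    exact fun n => ⟨n, by simp only [Nat.succ_iterate, zero_add]⟩
end

section
/- There exists a continuous function f : (ω³ + 1) → (ω³ + 1), where ω³ + 1 is realized as Iic(ω³) with the subspace topology from the order topology on ordinals, such that some point w has dense orbit under f, and for every free ultrafilter p on ℕ the p-iterate f^p is discontinuous; that is, for every free ultrafilter p on ℕ and every function g : ω³+1 → ω³+1 satisfying that for each x the sequence (fⁿ(x)) converges to g(x) along p, the function g is not continuous. -/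
/-!
Model `ω³ + 1` as `WithTop (ℕ ×ₗ ℕ ×ₗ ℕ)`, with `mk a b c` for `ω² * a + ω * b + c` and `⊤` for
`ω³`. The map `step` fixes `ω²` and `ω³` and sends every other limit point to one of them in
finitely many steps. The orbit of `0` runs through all isolated points: from the entry point
`entry (B, k)` it moves down in `a` (raising `c` while `b < a`), then drops to `a = 0` and moves
down in `b`, doubling `c`, until it reaches `mk 0 0 (2 ^ B * (2 * k + 1))`. Since `step ω = ω³`,
continuity lets it jump from `mk 0 0 c` to the entry point whose excursion ends at `mk 0 0 (c + 1)`,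
far up; as `(B, k) ↦ 2 ^ B * (2 * k + 1)` is a bijection onto the positive integers, these
excursions tile the isolated points.

If a `p`-iterate `g` of `step` were continuous, it would commute with `step`, and `g 0` would be a
limit point (the orbit of `0` is injective), hence eventually fixed. Then `g ∘ step^[M]` is
constant on the dense orbit of `0`, hence constant, which is absurd since `g` fixes both `ω²` and
`ω³`.
-/

open Filter Set Topology Function

section Dynamics

variable {X : Type*}

def EventuallyFixed (f : X → X) (y : X) : Prop := ∃ M, IsFixedPt f (f^[M] y)

theorem Function.IsFixedPt.eventuallyFixed {f : X → X} {y : X} (h : IsFixedPt f y) :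
    EventuallyFixed f y :=
  ⟨0, h⟩

theorem EventuallyFixed.of_apply {f : X → X} {y : X} (h : EventuallyFixed f (f y)) :
    EventuallyFixed f y :=
  let ⟨M, hM⟩ := h
  ⟨M + 1, by rwa [iterate_succ_apply]⟩

theorem iterate_mem_range_iterate {f : X → X} {w y : X} (hy : y ∈ range fun n => f^[n] w)
    (k : ℕ) : f^[k] y ∈ range fun n => f^[n] w := by
  obtain ⟨n, rfl⟩ := hy
  exact ⟨k + n, iterate_add_apply f k n w⟩

variable [TopologicalSpace X] {f : X → X}

theorem injective_iterate_of_dense_range [T1Space X] [Infinite X] {w : X}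
    (hw : Dense (range fun n => f^[n] w)) : Injective fun n => f^[n] w := by
  intro m n hmn
  by_contra hne
  wlog hlt : m < n generalizing m n
  · exact this hmn.symm (Ne.symm hne) (by omega)
  have hper : ∀ k, ∃ j < n, f^[j] w = f^[k] w := by
    intro k
    induction k using Nat.strong_induction_on with
    | _ k ih =>
      rcases lt_or_ge k n with hk | hk
      · exact ⟨k, hk, rfl⟩
      obtain ⟨j, hj, hjk⟩ := ih (k - (n - m)) (by omega)
      refine ⟨j, hj, hjk.trans ?_⟩
      calc f^[k - (n - m)] w = f^[k - n] (f^[m] w) := by rw [← iterate_add_apply]; congr 1; omega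
        _ = f^[k - n] (f^[n] w) := congrArg _ hmn
        _ = f^[k] w := by rw [← iterate_add_apply, Nat.sub_add_cancel hk]
  have hfin : (range fun k => f^[k] w).Finite :=
    ((finite_Iio n).image _).subset <| by
      rintro _ ⟨k, rfl⟩
      exact hper k
  exact infinite_univ (hw.closure_eq ▸ hfin.isClosed.closure_eq ▸ hfin)

theorem not_isOpen_singleton_of_tendsto {u : ℕ → X} (hu : Injective u) {p : Ultrafilter ℕ}
    (hp : (p : Filter ℕ) ≤ cofinite) {x : X} (hx : Tendsto u p (𝓝 x)) : ¬IsOpen {x} :=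
  fun hopen => Ultrafilter.compl_notMem_iff.2 (hx (hopen.mem_nhds rfl))
    (hu.tendsto_cofinite.mono_left hp (finite_singleton x).compl_mem_cofinite)

variable [T2Space X] {l : Filter ℕ} [l.NeBot] {g : X → X}

theorem apply_iterate_of_tendsto (hf : Continuous f)
    (hg : ∀ x, Tendsto (fun n => f^[n] x) l (𝓝 (g x))) (m : ℕ) (x : X) :
    g (f^[m] x) = f^[m] (g x) :=
  tendsto_nhds_unique (hg (f^[m] x)) <| by
    simpa only [comp_def, ← iterate_add_apply, add_comm] using
      ((hf.iterate m).tendsto (g x)).comp (hg x)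

theorem Function.IsFixedPt.eq_of_tendsto {z : X} (hz : IsFixedPt f z)
    (hg : ∀ x, Tendsto (fun n => f^[n] x) l (𝓝 (g x))) : g z = z :=
  tendsto_nhds_unique (hg z) (tendsto_const_nhds.congr fun n => (hz.iterate n).eq.symm)

theorem not_continuous_of_eventuallyFixed [Infinite X] (hf : Continuous f) {w : X}
    (hw : Dense (range fun n => f^[n] w)) {z₁ z₂ : X} (hz₁ : IsFixedPt f z₁)
    (hz₂ : IsFixedPt f z₂) (hne : z₁ ≠ z₂) (hfix : ∀ y, ¬IsOpen {y} → EventuallyFixed f y)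
    {p : Ultrafilter ℕ} (hp : (p : Filter ℕ) ≤ cofinite)
    (hg : ∀ x, Tendsto (fun n => f^[n] x) p (𝓝 (g x))) : ¬Continuous g := by
  intro hgc
  obtain ⟨M, hM⟩ := hfix (g w)
    (not_isOpen_singleton_of_tendsto (injective_iterate_of_dense_range hw) hp (hg w))
  have hconst : g ∘ f^[M] = fun _ => f^[M] (g w) := by
    refine (hgc.comp (hf.iterate M)).ext_on hw continuous_const ?_
    rintro _ ⟨n, rfl⟩
    calc g (f^[M] (f^[n] w)) = g (f^[n] (f^[M] w)) := by
          rw [← iterate_add_apply, add_comm, iterate_add_apply]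
      _ = f^[n] (f^[M] (g w)) := by
          rw [apply_iterate_of_tendsto hf hg, apply_iterate_of_tendsto hf hg]
      _ = f^[M] (g w) := (hM.iterate n).eq
  have key : ∀ z, IsFixedPt f z → z = f^[M] (g w) := fun z hz => by
    simpa [(hz.iterate M).eq, hz.eq_of_tendsto hg] using congrFun hconst z
  exact hne ((key z₁ hz₁).trans (key z₂ hz₂).symm)

end Dynamics

section Topology

variable {α β : Type*} [TopologicalSpace α] [TopologicalSpace β]

theorem continuousAt_iff_tendsto_of_nhds_eq {g : α → β} {x : α} {l : Filter α}
    (h : 𝓝 x = pure x ⊔ l) : ContinuousAt g x ↔ Tendsto g l (𝓝 (g x)) := by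
  rw [ContinuousAt, h, tendsto_sup, and_iff_right (tendsto_pure_nhds g x)]

theorem continuousAt_of_isOpen_singleton {g : α → β} {x : α} (h : IsOpen {x}) :
    ContinuousAt g x := by
  rw [ContinuousAt, (isOpen_singleton_iff_nhds_eq_pure x).1 h]
  exact tendsto_pure_nhds g x

theorem mem_nhds_iff_exists_Ioc_subset_of_isOpen_Iic [LinearOrder α] [OrderTopology α]
    {x l₀ : α} (hx : IsOpen (Iic x)) (hl₀ : l₀ < x) {s : Set α} :
    s ∈ 𝓝 x ↔ ∃ l < x, Ioc l x ⊆ s := by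
  rw [← nhdsWithin_eq_nhds.2 (hx.mem_nhds self_mem_Iic), mem_nhdsLE_iff_exists_Ioc_subset' hl₀]
  rfl

end Topology

abbrev OmegaCube : Type := WithTop (ℕ ×ₗ ℕ ×ₗ ℕ)

instance : TopologicalSpace OmegaCube := Preorder.topology _

instance : OrderTopology OmegaCube := ⟨rfl⟩

namespace OmegaCube

def mk (a b c : ℕ) : OmegaCube := some (toLex (a, toLex (b, c)))

theorem mk_lt_mk {a b c a' b' c' : ℕ} :
    mk a b c < mk a' b' c' ↔ a < a' ∨ a = a' ∧ (b < b' ∨ b = b' ∧ c < c') := by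
  simp only [mk, WithTop.some_eq_coe, WithTop.coe_lt_coe, Prod.Lex.lt_iff, ofLex_toLex]

theorem mk_le_mk {a b c a' b' c' : ℕ} :
    mk a b c ≤ mk a' b' c' ↔ a < a' ∨ a = a' ∧ (b < b' ∨ b = b' ∧ c ≤ c') := by
  simp only [mk, WithTop.some_eq_coe, WithTop.coe_le_coe, Prod.Lex.le_iff, ofLex_toLex]

theorem mk_inj {a b c a' b' c' : ℕ} : mk a b c = mk a' b' c' ↔ a = a' ∧ b = b' ∧ c = c' := by
  rw [le_antisymm_iff, mk_le_mk, mk_le_mk]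
  omega

theorem mk_lt_top (a b c : ℕ) : mk a b c < ⊤ := WithTop.coe_lt_top _

theorem eq_top_or_eq_mk (y : OmegaCube) : y = ⊤ ∨ ∃ a b c, y = mk a b c := by
  rcases y with _ | ⟨a, b, c⟩
  exacts [Or.inl rfl, Or.inr ⟨a, b, c, rfl⟩]

instance : Infinite OmegaCube :=
  Infinite.of_injective (mk 0 0) (StrictMono.injective fun _ _ h => mk_lt_mk.2 (by omega))

/-! ### The order topology of `OmegaCube` -/

theorem isOpen_Iic_mk (a b c : ℕ) : IsOpen (Iic (mk a b c)) := by
  convert isOpen_Iio (a := mk a b (c + 1)) using 1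
  ext y
  rcases eq_top_or_eq_mk y with rfl | ⟨a', b', c', rfl⟩
  · simp [(mk_lt_top a b c).not_ge, (mk_lt_top a b (c + 1)).not_gt]
  · simp only [mem_Iic, mem_Iio, mk_le_mk, mk_lt_mk]
    omega

theorem isOpen_singleton_mk_zero_zero_zero : IsOpen {mk 0 0 0} := by
  convert isOpen_Iic_mk 0 0 0 using 1
  ext y
  rcases eq_top_or_eq_mk y with rfl | ⟨a', b', c', rfl⟩
  · simp [(mk_lt_top 0 0 0).not_ge, (mk_lt_top 0 0 0).ne']
  · simp only [mem_singleton_iff, mem_Iic, mk_inj, mk_le_mk]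
    omega

theorem isOpen_singleton_mk_succ (a b c : ℕ) : IsOpen {mk a b (c + 1)} := by
  convert (isOpen_Iic_mk a b (c + 1)).inter (isOpen_Ioi (a := mk a b c)) using 1
  ext y
  rcases eq_top_or_eq_mk y with rfl | ⟨a', b', c', rfl⟩
  · simp [(mk_lt_top a b (c + 1)).not_ge, (mk_lt_top a b (c + 1)).ne']
  · simp only [mem_singleton_iff, mem_inter_iff, mem_Iic, mem_Ioi, mk_inj, mk_le_mk, mk_lt_mk]
    omega

theorem nhds_top : 𝓝 (⊤ : OmegaCube) =
    pure ⊤ ⊔ map (fun x : ℕ × ℕ × ℕ => mk x.1 x.2.1 x.2.2) (atTop ×ˢ ⊤) := by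
  ext s
  rw [mem_nhds_iff_exists_Ioc_subset_of_isOpen_Iic (by simp) (mk_lt_top 0 0 0)]
  simp only [mem_sup, mem_pure, mem_map, mem_prod_top, mem_atTop_sets, mem_ofPred_eq,
    mem_preimage, Prod.forall]
  constructor
  · rintro ⟨l, hl, hs⟩
    obtain ⟨a', b', c', rfl⟩ := (eq_top_or_eq_mk l).resolve_left hl.ne
    exact ⟨hs ⟨hl, le_top⟩, a' + 1, fun a ha b c => hs ⟨mk_lt_mk.2 (by omega), le_top⟩⟩
  · rintro ⟨htop, N, hN⟩
    refine ⟨mk N 0 0, mk_lt_top _ _ _, fun y ⟨hy, _⟩ => ?_⟩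
    rcases eq_top_or_eq_mk y with rfl | ⟨a, b, c, rfl⟩
    · exact htop
    · exact hN a (by rw [mk_lt_mk] at hy; omega) b c

theorem nhds_mk_succ_zero_zero (a : ℕ) : 𝓝 (mk (a + 1) 0 0) =
    pure (mk (a + 1) 0 0) ⊔ map (fun x : ℕ × ℕ => mk a x.1 x.2) (atTop ×ˢ ⊤) := by
  ext s
  rw [mem_nhds_iff_exists_Ioc_subset_of_isOpen_Iic (isOpen_Iic_mk _ _ _)
    (mk_lt_mk.2 (by omega : a < a + 1 ∨ _) : mk a 0 0 < _)]
  simp only [mem_sup, mem_pure, mem_map, mem_prod_top, mem_atTop_sets, mem_ofPred_eq,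
    mem_preimage]
  constructor
  · rintro ⟨l, hl, hs⟩
    obtain ⟨a', b', c', rfl⟩ := (eq_top_or_eq_mk l).resolve_left (hl.trans (mk_lt_top _ _ _)).ne
    refine ⟨hs ⟨hl, le_rfl⟩, b' + 1, fun b hb c => hs ⟨mk_lt_mk.2 ?_, mk_le_mk.2 (by omega)⟩⟩
    rw [mk_lt_mk] at hl
    omega
  · rintro ⟨hx, N, hN⟩
    refine ⟨mk a N 0, mk_lt_mk.2 (by omega), fun y ⟨hy₁, hy₂⟩ => ?_⟩
    rcases eq_top_or_eq_mk y with rfl | ⟨a', b, c, rfl⟩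
    · exact absurd hy₂ (mk_lt_top _ _ _).not_ge
    rw [mk_lt_mk] at hy₁
    rw [mk_le_mk] at hy₂
    obtain ⟨rfl, rfl, rfl⟩ | ⟨rfl, hb⟩ : (a' = a + 1 ∧ b = 0 ∧ c = 0) ∨ (a' = a ∧ N ≤ b) := by
      omega
    exacts [hx, hN b hb c]

theorem nhds_mk_succ_zero (a b : ℕ) :
    𝓝 (mk a (b + 1) 0) = pure (mk a (b + 1) 0) ⊔ map (mk a b) atTop := by
  ext s
  rw [mem_nhds_iff_exists_Ioc_subset_of_isOpen_Iic (isOpen_Iic_mk _ _ _)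
    (mk_lt_mk.2 (by omega) : mk a b 0 < _)]
  simp only [mem_sup, mem_pure, mem_map, mem_atTop_sets, mem_preimage]
  constructor
  · rintro ⟨l, hl, hs⟩
    obtain ⟨a', b', c', rfl⟩ := (eq_top_or_eq_mk l).resolve_left (hl.trans (mk_lt_top _ _ _)).ne
    refine ⟨hs ⟨hl, le_rfl⟩, c' + 1, fun c hc => hs ⟨mk_lt_mk.2 ?_, mk_le_mk.2 (by omega)⟩⟩
    rw [mk_lt_mk] at hl
    omega
  · rintro ⟨hx, N, hN⟩
    refine ⟨mk a b N, mk_lt_mk.2 (by omega), fun y ⟨hy₁, hy₂⟩ => ?_⟩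
    rcases eq_top_or_eq_mk y with rfl | ⟨a', b', c, rfl⟩
    · exact absurd hy₂ (mk_lt_top _ _ _).not_ge
    rw [mk_lt_mk] at hy₁
    rw [mk_le_mk] at hy₂
    obtain ⟨rfl, rfl, rfl⟩ | ⟨rfl, rfl, hc⟩ :
        (a' = a ∧ b' = b + 1 ∧ c = 0) ∨ (a' = a ∧ b' = b ∧ N ≤ c) := by
      omega
    exacts [hx, hN c hc]

section Tendsto

variable {ι : Type*} {l : Filter ι} {g : ι → OmegaCube}

theorem tendsto_nhds_top {u : ι → ℕ} (hu : Tendsto u l atTop)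
    (hg : ∀ᶠ i in l, ∃ b c, g i = mk (u i) b c) : Tendsto g l (𝓝 ⊤) := by
  intro s hs
  rw [nhds_top, mem_sup, mem_map, mem_prod_top] at hs
  rw [mem_map]
  filter_upwards [hu hs.2, hg] with i hi ⟨b, c, hgi⟩
  rw [mem_preimage, hgi]
  exact hi (b, c)

theorem tendsto_nhds_mk_succ_zero_zero {a : ℕ} {v : ι → ℕ} (hv : Tendsto v l atTop)
    (hg : ∀ᶠ i in l, ∃ c, g i = mk a (v i) c) : Tendsto g l (𝓝 (mk (a + 1) 0 0)) := by
  intro s hs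
  rw [nhds_mk_succ_zero_zero, mem_sup, mem_map, mem_prod_top] at hs
  rw [mem_map]
  filter_upwards [hv hs.2, hg] with i hi ⟨c, hgi⟩
  rw [mem_preimage, hgi]
  exact hi c

theorem tendsto_nhds_mk_succ_zero {a b : ℕ} {w : ι → ℕ} (hw : Tendsto w l atTop)
    (hg : ∀ᶠ i in l, g i = mk a b (w i)) : Tendsto g l (𝓝 (mk a (b + 1) 0)) := by
  intro s hs
  rw [nhds_mk_succ_zero, mem_sup, mem_map] at hs
  rw [mem_map]
  filter_upwards [hw hs.2, hg] with i hi hgi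
  rw [mem_preimage, hgi]
  exact hi

end Tendsto

theorem dense_of_mk_succ_mem {s : Set OmegaCube} (h₀ : mk 0 0 0 ∈ s)
    (h : ∀ a b c, mk a b (c + 1) ∈ s) : Dense s := by
  intro y
  rcases eq_top_or_eq_mk y with rfl | ⟨a, b, c, rfl⟩
  · exact mem_closure_of_tendsto (tendsto_nhds_top tendsto_id (.of_forall fun a => ⟨0, 1, rfl⟩))
      (.of_forall fun a => h a 0 0)
  rcases c with _ | c
  · rcases b with _ | b
    · rcases a with _ | a
      · exact subset_closure h₀
      · exact mem_closure_of_tendsto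
          (tendsto_nhds_mk_succ_zero_zero tendsto_id (.of_forall fun b => ⟨1, rfl⟩))
          (.of_forall fun b => h a b 0)
    · exact mem_closure_of_tendsto
        (tendsto_nhds_mk_succ_zero (tendsto_add_atTop_nat 1) (.of_forall fun c => rfl))
        (.of_forall fun c => h a b c)
  · exact subset_closure (h a b c)

/-! ### The map `step` and its continuity -/

def code (e : ℕ × ℕ) : ℕ := 2 ^ e.1 * (2 * e.2 + 1)

def decode (n : ℕ) : ℕ × ℕ :=
  if n ≠ 0 ∧ n % 2 = 0 then ((decode (n / 2)).1 + 1, (decode (n / 2)).2) else (0, n / 2)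
decreasing_by omega

theorem decode_code (e : ℕ × ℕ) : decode (code e) = e := by
  obtain ⟨B, k⟩ := e
  induction B with
  | zero =>
    rw [decode, if_neg (by simp [code])]
    simp [code]
    omega
  | succ B ih =>
    have h : code (B + 1, k) = 2 * code (B, k) := by simp only [code]; ring
    rw [decode, if_pos (by rw [h]; simp [code]), h, Nat.mul_div_cancel_left _ two_pos, ih]

theorem code_decode {n : ℕ} (hn : n ≠ 0) : code (decode n) = n := by
  induction n using Nat.strong_induction_on with
  | _ n ih =>
    rw [decode]
    split_ifs with h
    · have := ih (n / 2) (by omega) (by omega)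
      simp only [code] at this ⊢
      rw [pow_succ, mul_comm _ 2, mul_assoc, this]
      omega
    · simp only [code]
      omega

theorem code_le_two_pow (e : ℕ × ℕ) : code e ≤ 2 ^ (max e.1 1 + e.2 + 1) := by
  have hk : 2 * e.2 + 1 ≤ 2 ^ (e.2 + 1) := by
    have := Nat.lt_two_pow_self (n := e.2)
    rw [pow_succ]
    omega
  calc code e ≤ 2 ^ e.1 * 2 ^ (e.2 + 1) := Nat.mul_le_mul_left _ hk
    _ = 2 ^ (e.1 + e.2 + 1) := by rw [← pow_add, add_assoc]
    _ ≤ 2 ^ (max e.1 1 + e.2 + 1) := Nat.pow_le_pow_right two_pos (by omega)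

def entry (e : ℕ × ℕ) : OmegaCube := mk (max e.1 1 + e.2) e.1 1

theorem tendsto_entry_decode : Tendsto (fun n => entry (decode n)) atTop (𝓝 ⊤) := by
  refine tendsto_nhds_top (tendsto_atTop_atTop.2 fun N => ⟨2 ^ (N + 1) + 1, fun n hn => ?_⟩)
    (.of_forall fun n => ⟨_, _, rfl⟩)
  have h := code_le_two_pow (decode n)
  rw [code_decode (Nat.ne_zero_of_lt hn)] at h
  by_contra! hlt
  have hpow : 2 ^ (max (decode n).1 1 + (decode n).2 + 1) ≤ 2 ^ (N + 1) :=
    Nat.pow_le_pow_right two_pos (by omega)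
  exact (h.trans hpow).not_gt hn

-- `2 * 0 - 1 = 0` in `ℕ`: the limit point `mk 1 b 0` goes to `mk 0 b 0` for `b ≠ 0`.
def step : OmegaCube → OmegaCube
  | ⊤ => ⊤
  | some (0, 0, c) => entry (decode (c + 1))
  | some (0, 1, 0) => ⊤
  | some (0, b + 1, c) => mk 0 b (2 * c)
  | some (1, 0, 0) => mk 1 0 0
  | some (1, b, c) => mk 0 b (2 * c - 1)
  | some (a + 2, b, c) => mk (a + 1) b (if b < a + 2 ∧ c ≠ 0 then c + 1 else c)

theorem isFixedPt_step_top : IsFixedPt step ⊤ := rfl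

theorem isFixedPt_step_mk_one_zero_zero : IsFixedPt step (mk 1 0 0) := rfl

theorem step_mk_zero_zero (c : ℕ) : step (mk 0 0 c) = entry (decode (c + 1)) := rfl

theorem step_mk_zero_succ {b c : ℕ} (h : b ≠ 0 ∨ c ≠ 0) :
    step (mk 0 (b + 1) c) = mk 0 b (2 * c) := by
  obtain ⟨b, rfl⟩ | ⟨c, rfl⟩ :=
    h.imp Nat.exists_eq_succ_of_ne_zero Nat.exists_eq_succ_of_ne_zero
  · rfl
  · cases b <;> rfl

theorem step_mk_one {b c : ℕ} (h : b ≠ 0 ∨ c ≠ 0) :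
    step (mk 1 b c) = mk 0 b (2 * c - 1) := by
  obtain ⟨b, rfl⟩ | ⟨c, rfl⟩ :=
    h.imp Nat.exists_eq_succ_of_ne_zero Nat.exists_eq_succ_of_ne_zero
  · cases c <;> rfl
  · cases b <;> rfl

theorem step_mk_of_two_le {a b c : ℕ} (ha : 2 ≤ a) :
    step (mk a b c) = mk (a - 1) b (if b < a ∧ c ≠ 0 then c + 1 else c) := by
  obtain ⟨a, rfl⟩ := Nat.exists_eq_add_of_le' ha
  rfl

theorem continuousAt_step_top : ContinuousAt step ⊤ := by
  rw [continuousAt_iff_tendsto_of_nhds_eq nhds_top, tendsto_map'_iff]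
  refine tendsto_nhds_top ((tendsto_sub_atTop_nat 1).comp tendsto_fst) ?_
  filter_upwards [(eventually_ge_atTop 2).prod_inl ⊤] with x hx
  exact ⟨_, _, step_mk_of_two_le hx⟩

theorem continuousAt_step_mk_succ_zero_zero (a : ℕ) :
    ContinuousAt step (mk (a + 1) 0 0) := by
  rw [continuousAt_iff_tendsto_of_nhds_eq (nhds_mk_succ_zero_zero a), tendsto_map'_iff]
  match a with
  | 0 =>
    refine tendsto_nhds_mk_succ_zero_zero ((tendsto_sub_atTop_nat 1).comp tendsto_fst) ?_
    filter_upwards [(eventually_ge_atTop 2).prod_inl ⊤] with x hx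
    obtain ⟨b, hb⟩ := Nat.exists_eq_add_of_le' hx
    refine ⟨2 * x.2, ?_⟩
    simp only [comp_apply, hb, step_mk_zero_succ (Or.inl (Nat.succ_ne_zero _))]
    rfl
  | 1 =>
    refine tendsto_nhds_mk_succ_zero_zero tendsto_fst ?_
    filter_upwards [(eventually_ge_atTop 1).prod_inl ⊤] with x hx
    exact ⟨_, step_mk_one (Or.inl (by omega))⟩
  | a + 2 =>
    exact tendsto_nhds_mk_succ_zero_zero tendsto_fst
      (.of_forall fun x => ⟨_, step_mk_of_two_le le_add_self⟩)

theorem continuousAt_step_mk_succ_zero (a b : ℕ) : ContinuousAt step (mk a (b + 1) 0) := by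
  rw [continuousAt_iff_tendsto_of_nhds_eq (nhds_mk_succ_zero a b), tendsto_map'_iff]
  match a, b with
  | 0, 0 =>
    exact tendsto_entry_decode.comp (tendsto_add_atTop_nat 1)
  | 0, b + 1 =>
    rw [step_mk_zero_succ (Or.inl b.succ_ne_zero), mul_zero]
    refine tendsto_nhds_mk_succ_zero (tendsto_id.const_mul_atTop' two_pos) ?_
    filter_upwards [eventually_ge_atTop 1] with c hc
    exact step_mk_zero_succ (Or.inr (by omega))
  | 1, b =>
    rw [step_mk_one (Or.inl b.succ_ne_zero)]
    refine tendsto_nhds_mk_succ_zero (w := fun c => 2 * c - 1)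
      (tendsto_atTop_mono (fun c => by simp only [id]; omega) tendsto_id) ?_
    filter_upwards [eventually_ge_atTop 1] with c hc
    exact step_mk_one (Or.inr (by omega))
  | a + 2, b =>
    rw [step_mk_of_two_le le_add_self, if_neg fun h => h.2 rfl]
    refine tendsto_nhds_mk_succ_zero (w := fun c => if b < a + 2 ∧ c ≠ 0 then c + 1 else c)
      (tendsto_atTop_mono (fun c => ?_) tendsto_id)
      (.of_forall fun c => step_mk_of_two_le le_add_self)
    split_ifs <;> simp

theorem continuous_step : Continuous step := by
  refine continuous_iff_continuousAt.2 fun y => ?_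
  rcases eq_top_or_eq_mk y with rfl | ⟨a, b, c, rfl⟩
  · exact continuousAt_step_top
  rcases c with _ | c
  · rcases b with _ | b
    · rcases a with _ | a
      · exact continuousAt_of_isOpen_singleton isOpen_singleton_mk_zero_zero_zero
      · exact continuousAt_step_mk_succ_zero_zero a
    · exact continuousAt_step_mk_succ_zero a b
  · exact continuousAt_of_isOpen_singleton (isOpen_singleton_mk_succ a b c)

/-! ### The orbit of `0` -/

theorem iterate_step_mk_of_le {a b : ℕ} (ha : 1 ≤ a) (hb : b ≤ a) :
    ∀ j {c : ℕ}, c ≠ 0 → step^[j] (mk (a + j) b c) = mk a b (c + j)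
  | 0, _, _ => rfl
  | j + 1, c, hc => by
    rw [iterate_succ_apply, step_mk_of_two_le (by omega), if_pos ⟨by omega, hc⟩,
      show a + (j + 1) - 1 = a + j by omega, iterate_step_mk_of_le ha hb j c.succ_ne_zero]
    congr 1
    omega

theorem iterate_step_mk_of_add_le {a b c : ℕ} (ha : 1 ≤ a) :
    ∀ j, a + j ≤ max b 1 → step^[j] (mk (a + j) b c) = mk a b c
  | 0, _ => rfl
  | j + 1, h => by
    rw [iterate_succ_apply, step_mk_of_two_le (by omega), if_neg (by omega),
      show a + (j + 1) - 1 = a + j by omega, iterate_step_mk_of_add_le ha j (by omega)]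

theorem iterate_step_mk_zero {b : ℕ} :
    ∀ j {c : ℕ}, b ≠ 0 ∨ c ≠ 0 → step^[j] (mk 0 (b + j) c) = mk 0 b (2 ^ j * c)
  | 0, c, _ => by simp
  | j + 1, c, h => by
    rw [iterate_succ_apply, ← add_assoc, step_mk_zero_succ (by omega),
      iterate_step_mk_zero j (by omega), pow_succ, mul_assoc]

theorem exists_iterate_step_entry (e : ℕ × ℕ) : ∃ n, step^[n] (entry e) = mk 0 0 (code e) := by
  obtain ⟨B, k⟩ := e
  obtain ⟨m, hm⟩ : ∃ m, max B 1 = 1 + m := ⟨max B 1 - 1, by omega⟩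
  refine ⟨B + 1 + m + k, ?_⟩
  calc step^[B + 1 + m + k] (entry (B, k))
      = step^[B] (step (step^[m] (step^[k] (mk (max B 1 + k) B 1)))) := by
        simp only [iterate_add_apply, iterate_one]
        rfl
    _ = step^[B] (step (step^[m] (mk (1 + m) B (1 + k)))) := by
        rw [iterate_step_mk_of_le (by omega) (by omega) k one_ne_zero, hm]
    _ = step^[B] (mk 0 (0 + B) (2 * k + 1)) := by
        rw [iterate_step_mk_of_add_le le_rfl m (by omega), step_mk_one (Or.inr (by omega)), zero_add,
          show 2 * (1 + k) - 1 = 2 * k + 1 by omega]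
    _ = mk 0 0 (code (B, k)) := iterate_step_mk_zero B (Or.inr (by omega))

def orbit : Set OmegaCube := range fun n => step^[n] (mk 0 0 0)

theorem mk_zero_zero_mem_orbit (n : ℕ) : mk 0 0 n ∈ orbit := by
  induction n with
  | zero => exact ⟨0, rfl⟩
  | succ n ih =>
    obtain ⟨m, hm⟩ := exists_iterate_step_entry (decode (n + 1))
    rw [code_decode n.succ_ne_zero] at hm
    exact hm ▸ iterate_mem_range_iterate (iterate_mem_range_iterate ih 1) m

theorem entry_mem_orbit (e : ℕ × ℕ) : entry e ∈ orbit := by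
  have h : code e - 1 + 1 = code e :=
    Nat.sub_add_cancel (Nat.one_le_iff_ne_zero.2 (by simp [code]))
  have h' := iterate_mem_range_iterate (mk_zero_zero_mem_orbit (code e - 1)) 1
  rwa [iterate_one, step_mk_zero_zero, h, decode_code] at h'

theorem mk_succ_mem_orbit_of_ne_zero {a : ℕ} (ha : a ≠ 0) (b c : ℕ) :
    mk a b (c + 1) ∈ orbit := by
  rcases lt_or_ge b a with hba | hab
  · have h := iterate_mem_range_iterate (entry_mem_orbit (b, a + c - max b 1)) c
    rwa [entry, show max b 1 + (a + c - max b 1) = a + c by omega,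
      iterate_step_mk_of_le (by omega) hba.le c one_ne_zero, add_comm 1] at h
  · have h := iterate_mem_range_iterate
      (iterate_mem_range_iterate (entry_mem_orbit (b, c)) c) (b - a)
    have hwalk := iterate_step_mk_of_add_le (b := b) (c := 1 + c) (Nat.one_le_iff_ne_zero.2 ha)
      (b - a) (by omega)
    rw [Nat.add_sub_cancel' hab] at hwalk
    rwa [entry, show max b 1 = b by omega, iterate_step_mk_of_le (by omega) le_rfl c one_ne_zero,
      hwalk, add_comm 1] at h

theorem mk_zero_succ_mem_orbit (b c : ℕ) : mk 0 b (c + 1) ∈ orbit := by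
  induction c using Nat.strong_induction_on generalizing b with
  | _ c ih =>
    obtain ⟨m, rfl | rfl⟩ := Nat.even_or_odd' c
    · have h := iterate_mem_range_iterate (mk_succ_mem_orbit_of_ne_zero one_ne_zero b m) 1
      rwa [iterate_one, step_mk_one (Or.inr m.succ_ne_zero),
        show 2 * (m + 1) - 1 = 2 * m + 1 by omega] at h
    · have h := iterate_mem_range_iterate (ih m (by omega) (b + 1)) 1
      rwa [iterate_one, step_mk_zero_succ (Or.inr m.succ_ne_zero),
        show 2 * (m + 1) = 2 * m + 1 + 1 by omega] at h

theorem dense_orbit : Dense orbit :=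
  dense_of_mk_succ_mem ⟨0, rfl⟩ fun a b c =>
    (eq_or_ne a 0).elim (fun ha => ha ▸ mk_zero_succ_mem_orbit b c)
      (mk_succ_mem_orbit_of_ne_zero · b c)

theorem eventuallyFixed_step_mk_zero_succ_zero (b : ℕ) :
    EventuallyFixed step (mk 0 (b + 1) 0) := by
  induction b with
  | zero => exact .of_apply isFixedPt_step_top.eventuallyFixed
  | succ b ih => exact .of_apply (by rwa [step_mk_zero_succ (Or.inl b.succ_ne_zero)])

theorem eventuallyFixed_step_mk_zero {a b : ℕ} (h : a ≠ 0 ∨ b ≠ 0) :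
    EventuallyFixed step (mk a b 0) := by
  induction a generalizing b with
  | zero =>
    obtain ⟨b, rfl⟩ := Nat.exists_eq_succ_of_ne_zero (h.resolve_left fun h => h rfl)
    exact eventuallyFixed_step_mk_zero_succ_zero b
  | succ a ih =>
    rcases a with _ | a
    · rcases b with _ | b
      · exact isFixedPt_step_mk_one_zero_zero.eventuallyFixed
      · refine .of_apply ?_
        rw [step_mk_one (Or.inl b.succ_ne_zero)]
        exact ih (Or.inr b.succ_ne_zero)
    · refine .of_apply ?_
      rw [step_mk_of_two_le le_add_self, if_neg fun h => h.2 rfl]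
      exact ih (Or.inl a.succ_ne_zero)

theorem eventuallyFixed_step_of_not_isOpen {y : OmegaCube} (hy : ¬IsOpen {y}) :
    EventuallyFixed step y := by
  rcases eq_top_or_eq_mk y with rfl | ⟨a, b, c, rfl⟩
  · exact isFixedPt_step_top.eventuallyFixed
  rcases c with _ | c
  · refine eventuallyFixed_step_mk_zero ?_
    by_contra! hab
    obtain ⟨rfl, rfl⟩ := hab
    exact hy isOpen_singleton_mk_zero_zero_zero
  · exact absurd (isOpen_singleton_mk_succ a b c) hy

/-! ### `OmegaCube` is order isomorphic to `Iic ω³` -/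

open Ordinal

theorem mul_add_lt_mul_add {d a a' x x' : Ordinal} (hx : x < d) (h : a < a' ∨ a = a' ∧ x < x') :
    d * a + x < d * a' + x' := by
  rcases h with h | ⟨rfl, h⟩
  · calc d * a + x < d * a + d := (add_lt_add_iff_left _).2 hx
      _ = d * (a + 1) := (mul_add_one d a).symm
      _ ≤ d * a' := by gcongr; exact Order.add_one_le_of_lt h
      _ ≤ d * a' + x' := le_self_add
  · exact (add_lt_add_iff_left _).2 h

noncomputable def toOrdinal : OmegaCube → Ordinal
  | ⊤ => ω ^ (3 : Ordinal)
  | some (a, b, c) => ω * ω * a + (ω * b + c)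

theorem omega0_opow_three : ω ^ (3 : Ordinal) = ω * ω * ω := by
  rw [show (3 : Ordinal) = ((3 : ℕ) : Ordinal) by norm_num, opow_natCast, pow_three, mul_assoc]

theorem omega0_mul_natCast_add_natCast_lt {b c : ℕ} : ω * b + c < ω * ω := by
  simpa using mul_add_lt_mul_add (d := ω) (x' := 0) (natCast_lt_omega0 c)
    (Or.inl (natCast_lt_omega0 b))

theorem strictMono_toOrdinal : StrictMono toOrdinal := by
  intro y z hyz
  rcases eq_top_or_eq_mk z with rfl | ⟨a', b', c', rfl⟩
  · obtain ⟨a, b, c, rfl⟩ := (eq_top_or_eq_mk y).resolve_left hyz.ne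
    show ω * ω * a + (ω * b + c) < ω ^ (3 : Ordinal)
    simpa [omega0_opow_three] using mul_add_lt_mul_add (x' := 0) omega0_mul_natCast_add_natCast_lt
      (Or.inl (natCast_lt_omega0 a))
  · obtain ⟨a, b, c, rfl⟩ := (eq_top_or_eq_mk y).resolve_left (hyz.trans (mk_lt_top _ _ _)).ne
    refine mul_add_lt_mul_add omega0_mul_natCast_add_natCast_lt ?_
    rw [mk_lt_mk] at hyz
    rcases hyz with h | ⟨rfl, h⟩
    · exact Or.inl (Nat.cast_lt.2 h)
    · exact Or.inr ⟨rfl, mul_add_lt_mul_add (natCast_lt_omega0 c)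
        (h.imp Nat.cast_lt.2 fun h => ⟨congrArg _ h.1, Nat.cast_lt.2 h.2⟩)⟩

theorem exists_toOrdinal_eq {x : Ordinal} (hx : x ≤ ω ^ (3 : Ordinal)) :
    ∃ y, toOrdinal y = x := by
  rcases hx.eq_or_lt with rfl | hx
  · exact ⟨⊤, rfl⟩
  have hω : ω ≠ 0 := omega0_ne_zero
  have hω2 : ω * ω ≠ 0 := mul_ne_zero hω hω
  obtain ⟨a, ha⟩ := lt_omega0.1 ((lt_mul_iff_div_lt hω2).1 (omega0_opow_three ▸ hx))
  obtain ⟨b, hb⟩ := lt_omega0.1 ((lt_mul_iff_div_lt hω).1 (mod_lt x hω2))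
  obtain ⟨c, hc⟩ := lt_omega0.1 (mod_lt (x % (ω * ω)) hω)
  refine ⟨mk a b c, ?_⟩
  show ω * ω * a + (ω * b + c) = x
  rw [← ha, ← hb, ← hc, div_add_mod, div_add_mod]

noncomputable def orderIsoIic : OmegaCube ≃o Iic (ω ^ (3 : Ordinal)) :=
  StrictMono.orderIsoOfSurjective (fun y => ⟨toOrdinal y, strictMono_toOrdinal.monotone le_top⟩)
    (fun _ _ h => strictMono_toOrdinal h) fun x =>
      (exists_toOrdinal_eq x.2).imp fun _ h => Subtype.ext h

theorem not_continuous_of_tendsto_iterate_step {p : Ultrafilter ℕ}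
    (hp : (p : Filter ℕ) ≤ cofinite) {g : OmegaCube → OmegaCube}
    (hg : ∀ x, Tendsto (fun n => step^[n] x) p (𝓝 (g x))) : ¬Continuous g :=
  not_continuous_of_eventuallyFixed continuous_step dense_orbit isFixedPt_step_top
    isFixedPt_step_mk_one_zero_zero (mk_lt_top 1 0 0).ne'
    (fun _ => eventuallyFixed_step_of_not_isOpen) hp hg

end OmegaCube

open Ordinal Filter in
/-- Example 4.4: There is a continuous function `f` on `ω³ + 1` (realized as
`Iic (ω³)` with the order topology) having a point with dense orbit, such that for
every free ultrafilter `p` on `ℕ` the `p`-iterate `f^p` is discontinuous. -/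
theorem exists_dense_orbit_all_p_iterates_discontinuous :
    ∃ f : Set.Iic (omega0 ^ (3 : Ordinal)) → Set.Iic (omega0 ^ (3 : Ordinal)),
      Continuous f ∧
      (∃ w : Set.Iic (omega0 ^ (3 : Ordinal)),
        Dense (Set.range fun n : ℕ => f^[n] w)) ∧
      ∀ p : Ultrafilter ℕ, (p : Filter ℕ) ≤ Filter.cofinite →
        ∀ g : Set.Iic (omega0 ^ (3 : Ordinal)) → Set.Iic (omega0 ^ (3 : Ordinal)),
          (∀ x, Tendsto (fun n : ℕ => f^[n] x) (p : Filter ℕ) (nhds (g x))) →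
          ¬ Continuous g := by
  let e := OmegaCube.orderIsoIic.toHomeomorph
  have he : ∀ n y, (e ∘ OmegaCube.step ∘ e.symm)^[n] (e y) = e (OmegaCube.step^[n] y) :=
    fun n y => ((Semiconj.iterate_right (fun y => by simp) n) y).symm
  refine ⟨e ∘ OmegaCube.step ∘ e.symm,
    e.continuous.comp (OmegaCube.continuous_step.comp e.symm.continuous),
    ⟨e (OmegaCube.mk 0 0 0), ?_⟩, fun p hp g hg hgc => ?_⟩
  · simp_rw [he]
    exact e.surjective.denseRange.comp OmegaCube.dense_orbit e.continuous
  · refine OmegaCube.not_continuous_of_tendsto_iterate_step hp (g := e.symm ∘ g ∘ e)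
      (fun y => ?_) (e.symm.continuous.comp (hgc.comp e.continuous))
    refine ((e.symm.continuous.tendsto _).comp (hg (e y))).congr fun n => ?_
    exact (congrArg e.symm (he n y)).trans (e.symm_apply_apply _)
end
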